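/- arXiv:2502.07926 — 8 statements merged into one kernel-verified Lean document; each statement's English description precedes it below -/
import Mathlib

section
/- The number of parking functions of length n is (n+1)^(n-1). -/
/-! Pollak's circular argument. Shift the letters down by one and read them in `ZMod (n + 1)`.
Adding a constant to every letter lets `ZMod (n + 1)` act freely on the `(n + 1) ^ n` words, and
each orbit contains exactly one parking word. Indeed, let `T i` be the number of letters `< i`
minus `i`, letters being counted cyclically; then `v + c` is parking iff `T` never drops below
`T (-c)` within one period after `-c`, and since a period holds `n` letters but `n + 1` positions,
`T` drops by exactly one over each period, so exactly one start in a period has this property. -/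

open Finset

/-- A parking function of length `n`: a word `u : Fin n → ℕ+` such that for each
`i ∈ [n]`, the number of letters `≤ i` is at least `i`. -/
def IsParkingFn {n : ℕ} (u : Fin n → ℕ+) : Prop :=
  ∀ i : ℕ, 1 ≤ i → i ≤ n → i ≤ (Finset.univ.filter (fun j => (u j : ℕ) ≤ i)).card

theorem IsParkingFn.coe_le {n : ℕ} {u : Fin n → ℕ+} (hu : IsParkingFn u) (j : Fin n) :
    (u j : ℕ) ≤ n := by
  refine filter_card_eq (s := univ) (p := fun j => (u j : ℕ) ≤ n)
    (le_antisymm (card_filter_le _ _) ?_) j (mem_univ j)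
  simpa using hu n j.pos le_rfl

section CycleLemma

variable {m : ℕ} {T : ℕ → ℤ}

def IsCycleStart (T : ℕ → ℤ) (m r : ℕ) : Prop :=
  ∀ i, 0 < i → i < m → T r ≤ T (r + i)

theorem IsCycleStart.eq (hT : ∀ i, T (i + m) = T i - 1) {r r' : ℕ} (hr : r < m) (hr' : r' < m)
    (hs : IsCycleStart T m r) (hs' : IsCycleStart T m r') : r = r' := by
  by_contra hne
  wlog hlt : r < r' generalizing r r'
  · exact this hr' hr hs' hs (Ne.symm hne) (by omega)
  have h₁ := hs (r' - r) (by omega) (by omega)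
  have h₂ := hs' (r + m - r') (by omega) (by omega)
  rw [Nat.add_sub_cancel' hlt.le] at h₁
  rw [Nat.add_sub_cancel' (by omega), hT] at h₂
  omega

/-- The lexicographically least pair `(T r, r)` over a period: later positions in the period
are no lower, and earlier ones are strictly higher, hence lower by at most one after wrapping. -/
theorem exists_isCycleStart (hT : ∀ i, T (i + m) = T i - 1) : ∃ r < m, IsCycleStart T m r := by
  have hm : 0 < m := Nat.pos_of_ne_zero fun h => by
    have := hT 0
    rw [h, add_zero] at this
    omega
  obtain ⟨r, hr, hmin⟩ :=
    (range m).exists_min_image (fun s => toLex (T s, s)) ⟨0, mem_range.2 hm⟩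
  rw [mem_range] at hr
  have hmin' : ∀ s < m, T r < T s ∨ T r = T s ∧ r ≤ s := fun s hs => by
    simpa [Prod.Lex.toLex_le_toLex] using hmin s (mem_range.2 hs)
  refine ⟨r, hr, fun i hi him => ?_⟩
  rcases lt_or_ge (r + i) m with h | h
  · have := hmin' (r + i) h
    omega
  · have := hmin' (r + i - m) (by omega)
    have hwrap := hT (r + i - m)
    rw [Nat.sub_add_cancel h] at hwrap
    omega

theorem cycle_lemma (hT : ∀ i, T (i + m) = T i - 1) : ∃! r, r < m ∧ IsCycleStart T m r := by
  obtain ⟨r, hr, hs⟩ := exists_isCycleStart hT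
  exact ⟨r, ⟨hr, hs⟩, fun r' ⟨hr', hs'⟩ => hs'.eq hT hr' hr hs⟩

end CycleLemma

theorem AddAction.card_mul_card_eq_of_existsUnique_vadd_mem {G X : Type*} [AddGroup G]
    [AddAction G X] (S : Set X) (h : ∀ x : X, ∃! g : G, g +ᵥ x ∈ S) :
    Nat.card S * Nat.card G = Nat.card X := by
  rw [← Nat.card_prod]
  refine Nat.card_congr (Equiv.ofBijective (fun p => p.2 +ᵥ (p.1 : X)) ⟨?_, fun x => ?_⟩)
  · rintro ⟨⟨s, hs⟩, g⟩ ⟨⟨s', hs'⟩, g'⟩ (heq : g +ᵥ s = g' +ᵥ s')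
    have hs₁ : (0 : G) +ᵥ s ∈ S := by rwa [zero_vadd]
    have hs₂ : (-g' + g) +ᵥ s ∈ S := by rwa [add_vadd, heq, neg_vadd_vadd]
    have hg : -g' + g = 0 := (h s).unique hs₂ hs₁
    rw [neg_add_eq_zero] at hg
    subst hg
    rw [vadd_left_cancel_iff] at heq
    subst heq
    rfl
  · obtain ⟨g, hg, -⟩ := h x
    exact ⟨(⟨g +ᵥ x, hg⟩, -g), neg_vadd_vadd g x⟩

namespace ParkingWord

variable {n : ℕ}

def IsParkingWord (w : Fin n → ZMod (n + 1)) : Prop :=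
  ∀ i : ℕ, 1 ≤ i → i ≤ n → i ≤ #{j | (w j).val < i}

def toPNat (w : Fin n → ZMod (n + 1)) : Fin n → ℕ+ := fun j => (w j).val.succPNat

theorem isParkingFn_toPNat_iff {w : Fin n → ZMod (n + 1)} :
    IsParkingFn (toPNat w) ↔ IsParkingWord w :=
  Iff.rfl

theorem toPNat_injective : Function.Injective (toPNat (n := n)) := fun _ _ h =>
  funext fun j => ZMod.val_injective _ (Nat.succPNat_injective (congrFun h j))

theorem bijOn_toPNat :
    Set.BijOn toPNat {w : Fin n → ZMod (n + 1) | IsParkingWord w} {u | IsParkingFn u} := by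
  refine ⟨fun w hw => isParkingFn_toPNat_iff.2 hw, toPNat_injective.injOn, fun u hu => ?_⟩
  have hw : toPNat (fun j => ((u j).natPred : ZMod (n + 1))) = u := funext fun j => by
    rw [toPNat, ZMod.val_cast_of_lt (by have := hu.coe_le j; rw [PNat.natPred]; omega),
      PNat.succPNat_natPred]
  refine ⟨_, ?_, hw⟩
  rw [Set.mem_ofPred_eq, ← isParkingFn_toPNat_iff, hw]
  exact hu

theorem card_isParkingFn_eq_card_isParkingWord :
    Nat.card {u : Fin n → ℕ+ // IsParkingFn u} =
      Nat.card {w : Fin n → ZMod (n + 1) // IsParkingWord w} :=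
  (Nat.card_congr bijOn_toPNat.equiv).symm

def letterCount (v : Fin n → ZMod (n + 1)) (k : ZMod (n + 1)) : ℕ := #{j | v j = k}

def excess (v : Fin n → ZMod (n + 1)) (i : ℕ) : ℤ :=
  ∑ t ∈ range i, (letterCount v t : ℤ) - i

theorem sum_letterCount (v : Fin n → ZMod (n + 1)) : ∑ k, letterCount v k = n := by
  simpa [letterCount] using
    (card_eq_sum_card_fiberwise (f := v) (s := univ) (t := univ) fun _ _ => mem_univ _).symm

theorem sum_range_letterCount_add (v : Fin n → ZMod (n + 1)) (r : ℕ) :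
    ∑ t ∈ range (n + 1), letterCount v (r + t : ℕ) = n := by
  rw [← Fin.sum_univ_eq_sum_range (fun t => letterCount v (r + t : ℕ))]
  push_cast
  refine (Fintype.sum_equiv (Equiv.addLeft (r : ZMod (n + 1))) _ _ fun x => ?_).trans
    (sum_letterCount v)
  exact congrArg (fun y => letterCount v (r + y)) (ZMod.natCast_zmod_val (n := n + 1) x)

theorem excess_add_sub_excess (v : Fin n → ZMod (n + 1)) (r i : ℕ) :
    excess v (r + i) - excess v r = ∑ t ∈ range i, (letterCount v (r + t : ℕ) : ℤ) - i := by
  simp only [excess, sum_range_add, Nat.cast_add]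
  ring

theorem excess_add_period (v : Fin n → ZMod (n + 1)) (i : ℕ) :
    excess v (i + (n + 1)) = excess v i - 1 := by
  have h := excess_add_sub_excess v i (n + 1)
  rw [← Nat.cast_sum, sum_range_letterCount_add] at h
  push_cast at h
  linarith

theorem card_vadd_val_lt (v : Fin n → ZMod (n + 1)) (c : ZMod (n + 1)) {i : ℕ} (hi : i ≤ n + 1) :
    #{j | (c + v j).val < i} = ∑ t ∈ range i, letterCount v ((-c).val + t : ℕ) := by
  rw [card_eq_sum_card_fiberwise (f := fun j => (c + v j).val) (t := range i)
    fun j hj => mem_range.2 (mem_filter.1 hj).2]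
  refine sum_congr rfl fun t ht => congrArg card (ext fun j => ?_)
  have ht' : t < n + 1 := (mem_range.1 ht).trans_le hi
  simp only [mem_filter, mem_univ, true_and]
  have key : (c + v j).val = t ↔ v j = ((-c).val + t : ℕ) := by
    push_cast
    rw [ZMod.natCast_zmod_val, eq_neg_add_iff_add_eq]
    constructor
    · rintro rfl
      exact (ZMod.natCast_zmod_val _).symm
    · intro h
      rw [h, ZMod.val_cast_of_lt ht']
  rw [← key]
  exact ⟨And.right, fun h => ⟨h ▸ mem_range.1 ht, h⟩⟩

theorem isParkingWord_vadd_iff (v : Fin n → ZMod (n + 1)) (c : ZMod (n + 1)) :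
    IsParkingWord (c +ᵥ v) ↔ IsCycleStart (excess v) (n + 1) (-c).val := by
  refine forall_congr' fun i => imp_congr_right fun _ => ?_
  rw [Nat.lt_succ_iff]
  refine imp_congr_right fun hi => ?_
  have h := excess_add_sub_excess v (-c).val i
  simp only [Pi.vadd_apply, vadd_eq_add]
  rw [card_vadd_val_lt v c (by omega), ← Nat.cast_le (α := ℤ), Nat.cast_sum]
  constructor <;> intro <;> linarith

theorem existsUnique_vadd_isParkingWord (v : Fin n → ZMod (n + 1)) :
    ∃! c : ZMod (n + 1), IsParkingWord (c +ᵥ v) := by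
  simp only [isParkingWord_vadd_iff]
  obtain ⟨r, ⟨hr, hs⟩, huniq⟩ := cycle_lemma (excess_add_period v)
  refine ⟨-(r : ZMod (n + 1)), ?_, fun c hc => ?_⟩
  · dsimp only
    rwa [neg_neg, ZMod.val_cast_of_lt hr]
  rw [← huniq _ ⟨ZMod.val_lt _, hc⟩, ZMod.natCast_zmod_val, neg_neg]

theorem card_isParkingWord_mul :
    Nat.card {w : Fin n → ZMod (n + 1) // IsParkingWord w} * (n + 1) = (n + 1) ^ n := by
  have h := AddAction.card_mul_card_eq_of_existsUnique_vadd_mem (G := ZMod (n + 1))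
    {w : Fin n → ZMod (n + 1) | IsParkingWord w}
    existsUnique_vadd_isParkingWord
  rwa [Nat.card_zmod, Nat.card_fun, Nat.card_zmod, Nat.card_fin] at h

end ParkingWord

/-- The number of parking functions of length `n` is `(n+1)^(n-1)`. -/
theorem numParkingFunctions (n : ℕ) :
    Nat.card {u : Fin n → ℕ+ // IsParkingFn u} = (n + 1) ^ (n - 1) := by
  rw [ParkingWord.card_isParkingFn_eq_card_isParkingWord]
  refine Nat.eq_of_mul_eq_mul_right n.succ_pos ?_
  rw [ParkingWord.card_isParkingWord_mul]
  cases n <;> simp [pow_succ]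
end

section
/- For all n > 1, the number of prime parking functions of length n is (n-1)^(n-1). -/
/-- A prime parking function: a parking function whose nondecreasing rearrangement
`u'` satisfies `u'_i < i` for all `i ≥ 2`; equivalently, for each `2 ≤ i ≤ n`,
the number of letters `≤ i - 1` is at least `i`. -/
def IsPrimeParkingFn {n : ℕ} (u : Fin n → ℕ+) : Prop :=
  IsParkingFn u ∧
    ∀ i : ℕ, 2 ≤ i → i ≤ n → i ≤ (Finset.univ.filter (fun j => (u j : ℕ) ≤ i - 1)).card

namespace PPFCount

open Finset

set_option linter.unusedSectionVars false

lemma cycle_lemma (m : ℕ) (hm : 0 < m) (A : ℕ → ℤ) (hA : ∀ t, A (t + m) = A t + 1) :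
    ∃! p : ℕ, p < m ∧ ∀ d : ℕ, 1 ≤ d → d ≤ m → A p < A (p + d) := by
  obtain ⟨p₀, hp₀mem, hp₀min⟩ := Finset.exists_min_image (range m) A ⟨0, mem_range.mpr hm⟩
  set s : Finset ℕ := (range m).filter (fun t => A t = A p₀) with hs
  have hsne : s.Nonempty := ⟨p₀, by simp [hs, mem_range.mp hp₀mem]⟩
  set p := s.max' hsne with hp
  have hpmem : p ∈ s := s.max'_mem hsne
  have hpm : p < m := mem_range.mp (mem_filter.mp hpmem).1
  have hpA : A p = A p₀ := (mem_filter.mp hpmem).2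
  have hgood : ∀ d : ℕ, 1 ≤ d → d ≤ m → A p < A (p + d) := by
    intro d hd1 hdm
    by_cases hq : p + d < m
    · have h1 : A p₀ ≤ A (p + d) := hp₀min _ (mem_range.mpr hq)
      rcases lt_or_eq_of_le h1 with h | h
      · linarith
      · exfalso
        have hmem : p + d ∈ s := by
          simp only [hs, mem_filter, mem_range]
          exact ⟨hq, h.symm⟩
        have := s.le_max' _ hmem
        omega
    · have hq2 : p + d - m < m := by omega
      have h3 : A (p + d) = A (p + d - m) + 1 := by
        have := hA (p + d - m)
        rwa [show p + d - m + m = p + d from by omega] at this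
      have h4 := hp₀min _ (mem_range.mpr hq2)
      linarith
  have key : ∀ x y : ℕ, x < y → y < m →
      (∀ d : ℕ, 1 ≤ d → d ≤ m → A x < A (x + d)) →
      (∀ d : ℕ, 1 ≤ d → d ≤ m → A y < A (y + d)) → False := by
    intro x y hxy hym hx hy
    have h1 : A x < A y := by
      have := hx (y - x) (by omega) (by omega)
      rwa [show x + (y - x) = y from by omega] at this
    have h2 : A y < A x + 1 := by
      have := hy (x + m - y) (by omega) (by omega)
      rwa [show y + (x + m - y) = x + m from by omega, hA] at this
    linarith
  refine ⟨p, ⟨hpm, hgood⟩, ?_⟩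
  rintro p' ⟨h'm, h'good⟩
  rcases lt_trichotomy p' p with h | h | h
  · exact absurd (key p' p h hpm h'good hgood) (fun h => h)
  · exact h
  · exact absurd (key p p' h h'm hgood h'good) (fun h => h)

section
variable {n m : ℕ} [NeZero m]

/-- Number of letters of `w` equal to `s mod m`. -/
def fib (w : Fin n → ZMod m) (s : ℕ) : ℕ := (univ.filter fun j => w j = (s : ZMod m)).card

lemma shift_val_eq_iff (x : ZMod m) (p s : ℕ) (hps : p ≤ s) (hsm : s < p + m) :
    p + (x - (p : ZMod m)).val = s ↔ x = (s : ZMod m) := by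
  have hvm := ZMod.val_lt (x - (p : ZMod m))
  constructor
  · intro h
    have h1 : (x - (p : ZMod m)).val = s - p := by omega
    have h2 : x - (p : ZMod m) = ((s - p : ℕ) : ZMod m) := by
      rw [← h1]
      simp [ZMod.natCast_val, ZMod.cast_id]
    rw [sub_eq_iff_eq_add] at h2
    rw [h2, ← Nat.cast_add]
    congr 1
    omega
  · intro h
    have h2 : x - (p : ZMod m) = ((s - p : ℕ) : ZMod m) := by
      rw [h, Nat.cast_sub hps]
    rw [h2, ZMod.val_cast_of_lt (by omega : s - p < m)]
    omega

lemma sum_fib_window (w : Fin n → ZMod m) (t : ℕ) :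
    ∑ s ∈ Ico t (t + m), fib w s = n := by
  have key := Finset.card_eq_sum_card_fiberwise
    (s := (univ : Finset (Fin n))) (t := Ico t (t + m))
    (f := fun j => t + (w j - (t : ZMod m)).val)
    (fun j _ => by
      dsimp only
      rw [Finset.mem_coe, mem_Ico]
      have := ZMod.val_lt (w j - (t : ZMod m))
      omega)
  rw [card_univ, Fintype.card_fin] at key
  refine Eq.trans ?_ key.symm
  refine Finset.sum_congr rfl (fun s hs => ?_)
  rw [mem_Ico] at hs
  unfold fib
  congr 1
  exact Finset.filter_congr (fun j _ => (shift_val_eq_iff (w j) t s hs.1 hs.2).symm)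

lemma count_shift (w : Fin n → ZMod m) (p k : ℕ) (hk : k < m) :
    (univ.filter fun j => (w j - (p : ZMod m)).val ≤ k).card
      = ∑ s ∈ Ico p (p + (k + 1)), fib w s := by
  have key := Finset.card_eq_sum_card_fiberwise
    (s := univ.filter fun j => (w j - (p : ZMod m)).val ≤ k) (t := Ico p (p + (k + 1)))
    (f := fun j => p + (w j - (p : ZMod m)).val)
    (fun j hj => by
      rw [Finset.mem_coe, mem_filter] at hj
      dsimp only
      rw [Finset.mem_coe, mem_Ico]
      omega)
  rw [key]
  refine Finset.sum_congr rfl (fun s hs => ?_)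
  rw [mem_Ico] at hs
  unfold fib
  rw [Finset.filter_filter]
  congr 1
  refine Finset.filter_congr (fun j _ => ?_)
  have hiff := shift_val_eq_iff (w j) p s hs.1 (by omega)
  constructor
  · intro h
    exact hiff.mp h.2
  · intro h
    have := hiff.mpr h
    exact ⟨by omega, this⟩

/-- Partial sums of `fib - 1`. -/
def Aw (w : Fin n → ZMod m) (t : ℕ) : ℤ := ∑ s ∈ range t, ((fib w s : ℤ) - 1)

lemma sum_Ico_fib (w : Fin n → ZMod m) (p d : ℕ) :
    (∑ s ∈ Ico p (p + d), (fib w s : ℤ)) = Aw w (p + d) - Aw w p + d := by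
  have h1 : Aw w (p + d) - Aw w p = ∑ s ∈ Ico p (p + d), ((fib w s : ℤ) - 1) := by
    rw [Aw, Aw, ← Finset.sum_Ico_eq_sub _ (Nat.le_add_right p d)]
  rw [Finset.sum_sub_distrib] at h1
  simp only [Finset.sum_const, Nat.card_Ico, nsmul_eq_mul, mul_one,
    Nat.add_sub_cancel_left] at h1
  linarith

lemma Aw_shift (w : Fin n → ZMod m) (t : ℕ) :
    Aw w (t + m) = Aw w t + ((n : ℤ) - m) := by
  have h1 := sum_Ico_fib w t m
  have h2 : (∑ s ∈ Ico t (t + m), (fib w s : ℤ)) = n := by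
    rw [← Nat.cast_sum]
    exact_mod_cast congrArg (Nat.cast : ℕ → ℤ) (sum_fib_window w t)
  rw [h2] at h1
  linarith

/-- The prime-parking counting condition on a `ZMod m`-word. -/
def Qw (w : Fin n → ZMod m) : Prop :=
  ∀ k : ℕ, k < m → k + 2 ≤ (univ.filter fun j => (w j).val ≤ k).card

lemma Qw_shift_iff (w : Fin n → ZMod m) (p : ℕ) :
    Qw (fun j => w j - (p : ZMod m)) ↔ ∀ d : ℕ, 1 ≤ d → d ≤ m → Aw w p < Aw w (p + d) := by
  constructor
  · intro h d hd1 hdm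
    have hk := h (d - 1) (by omega)
    rw [count_shift w p (d - 1) (by omega), show d - 1 + 1 = d from by omega] at hk
    have h2 := sum_Ico_fib w p d
    have h3 : ((d - 1 + 2 : ℕ) : ℤ) ≤ ∑ s ∈ Ico p (p + d), (fib w s : ℤ) := by
      rw [← Nat.cast_sum]
      exact_mod_cast hk
    have h4 : ((d - 1 + 2 : ℕ) : ℤ) = (d : ℤ) + 1 := by
      push_cast [Nat.sub_add_cancel hd1]
      omega
    linarith
  · intro h k hk
    have hd := h (k + 1) (by omega) (by omega)
    show k + 2 ≤ (univ.filter fun j => ((fun j => w j - (p : ZMod m)) j).val ≤ k).card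
    rw [count_shift w p k hk]
    have h2 := sum_Ico_fib w p (k + 1)
    have h3 : ((k : ℤ) + 2) ≤ ∑ s ∈ Ico p (p + (k + 1)), (fib w s : ℤ) := by
      push_cast at h2 ⊢
      linarith
    rw [← Nat.cast_sum] at h3
    exact_mod_cast h3

lemma exists_unique_shift (hnm : n = m + 1) (w : Fin n → ZMod m) :
    ∃! c : ZMod m, Qw (fun j => w j + c) := by
  have hm : 0 < m := NeZero.pos m
  have hA : ∀ t, Aw w (t + m) = Aw w t + 1 := by
    intro t
    have h5 : ((n : ℤ) - m) = 1 := by omega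
    rw [Aw_shift w t, h5]
  obtain ⟨p, ⟨hpm, hpgood⟩, hpu⟩ := cycle_lemma m hm (Aw w) hA
  refine ⟨-(p : ZMod m), ?_, ?_⟩
  · have : (fun j => w j + -(p : ZMod m)) = fun j => w j - (p : ZMod m) := by
      funext j; ring
    show Qw fun j => w j + -(p : ZMod m)
    rw [this, Qw_shift_iff]
    exact hpgood
  · intro c hc
    set p' := (-c).val with hp'
    have hcp' : ((p' : ℕ) : ZMod m) = -c := by
      simp [hp', ZMod.natCast_val, ZMod.cast_id]
    have hfun : (fun j => w j + c) = fun j => w j - (p' : ZMod m) := by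
      funext j
      rw [hcp']
      ring
    rw [hfun, Qw_shift_iff] at hc
    have hp'm : p' < m := ZMod.val_lt _
    have := hpu p' ⟨hp'm, hc⟩
    show c = -(p : ZMod m)
    rw [← this, hcp', neg_neg]

lemma ppf_le (hnm : n = m + 1) {u : Fin n → ℕ+} (hu : IsPrimeParkingFn u) :
    ∀ j, (u j : ℕ) ≤ m := by
  intro j
  have hm := NeZero.pos m
  have h := hu.2 n (by omega) le_rfl
  have hsub : (univ.filter fun j => (u j : ℕ) ≤ n - 1) = univ := by
    apply Finset.eq_univ_of_card
    have := Finset.card_filter_le (univ : Finset (Fin n)) (fun j => (u j : ℕ) ≤ n - 1)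
    rw [card_univ, Fintype.card_fin] at this
    rw [Fintype.card_fin]
    omega
  have hj : j ∈ univ.filter fun j => (u j : ℕ) ≤ n - 1 := by rw [hsub]; exact mem_univ j
  rw [mem_filter] at hj
  omega

lemma ppf_iff_Qw (hnm : n = m + 1) {u : Fin n → ℕ+} {w : Fin n → ZMod m}
    (hrel : ∀ j, (u j : ℕ) = (w j).val + 1) : IsPrimeParkingFn u ↔ Qw w := by
  have hm : 0 < m := NeZero.pos m
  constructor
  · intro hu k hk
    have h := hu.2 (k + 2) (by omega) (by omega)
    have heq : (univ.filter fun j => (u j : ℕ) ≤ (k + 2) - 1)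
        = univ.filter fun j => (w j).val ≤ k :=
      Finset.filter_congr (fun j _ => by rw [hrel j]; omega)
    rw [heq] at h
    omega
  · intro hq
    constructor
    · intro i hi1 hin
      by_cases hi : i ≤ m
      · have h := hq (i - 1) (by omega)
        have heq : (univ.filter fun j => (u j : ℕ) ≤ i)
            = univ.filter fun j => (w j).val ≤ i - 1 :=
          Finset.filter_congr (fun j _ => by rw [hrel j]; omega)
        rw [heq]
        omega
      · have heq : (univ.filter fun j => (u j : ℕ) ≤ i) = univ :=
          Finset.filter_true_of_mem (fun j _ => by
            have hv := ZMod.val_lt (w j)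
            have := hrel j
            omega)
        rw [heq, card_univ, Fintype.card_fin]
        omega
    · intro i hi2 hin
      have h := hq (i - 2) (by omega)
      have heq : (univ.filter fun j => (u j : ℕ) ≤ i - 1)
          = univ.filter fun j => (w j).val ≤ i - 2 :=
        Finset.filter_congr (fun j _ => by rw [hrel j]; omega)
      rw [heq]
      omega

lemma toW_rel (hnm : n = m + 1) {u : Fin n → ℕ+} (hu : IsPrimeParkingFn u) (j : Fin n) :
    (u j : ℕ) = ((((u j : ℕ) - 1 : ℕ) : ZMod m)).val + 1 := by
  have hle := ppf_le hnm hu j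
  have hpos := (u j).pos
  rw [ZMod.val_cast_of_lt (by omega : (u j : ℕ) - 1 < m)]
  omega

noncomputable def ppfEquiv (hnm : n = m + 1) :
    {u : Fin n → ℕ+ // IsPrimeParkingFn u} ≃ {w : Fin n → ZMod m // Qw w} where
  toFun x := ⟨fun j => (((x.1 j : ℕ) - 1 : ℕ) : ZMod m),
    (ppf_iff_Qw hnm (toW_rel hnm x.2)).mp x.2⟩
  invFun x := ⟨fun j => ⟨(x.1 j).val + 1, Nat.succ_pos _⟩,
    (ppf_iff_Qw hnm (u := fun j => ⟨(x.1 j).val + 1, Nat.succ_pos _⟩) (w := x.1)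
      (fun j => rfl)).mpr x.2⟩
  left_inv := by
    rintro ⟨u, hu⟩
    apply Subtype.ext
    funext j
    apply PNat.coe_injective
    show ((((u j : ℕ) - 1 : ℕ) : ZMod m)).val + 1 = (u j : ℕ)
    exact (toW_rel hnm hu j).symm
  right_inv := by
    rintro ⟨w, hw⟩
    apply Subtype.ext
    funext j
    show ((((w j).val + 1 : ℕ) - 1 : ℕ) : ZMod m) = w j
    simp [ZMod.natCast_val, ZMod.cast_id]

noncomputable def orbitEquiv (hnm : n = m + 1) :
    ({w : Fin n → ZMod m // Qw w} × ZMod m) ≃ (Fin n → ZMod m) where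
  toFun x := fun j => x.1.1 j + x.2
  invFun w := ⟨⟨fun j => w j + (exists_unique_shift hnm w).choose,
      (exists_unique_shift hnm w).choose_spec.1⟩, -(exists_unique_shift hnm w).choose⟩
  left_inv := by
    rintro ⟨⟨w, hw⟩, c⟩
    have hx : Qw (fun j => (fun j => w j + c) j + (-c)) := by
      have h : (fun j => (fun j => w j + c) j + (-c)) = w := by funext j; ring
      rw [h]; exact hw
    have hu := (exists_unique_shift hnm (fun j => w j + c)).choose_spec.2 (-c) hx
    refine Prod.ext ?_ ?_
    · apply Subtype.ext
      funext j
      show (fun j => w j + c) j + (exists_unique_shift hnm (fun j => w j + c)).choose = w j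
      rw [← hu]
      ring
    · show -(exists_unique_shift hnm (fun j => w j + c)).choose = c
      rw [← hu, neg_neg]
  right_inv := by
    intro w
    funext j
    show (w j + (exists_unique_shift hnm w).choose) + -(exists_unique_shift hnm w).choose = w j
    ring

end


end PPFCount

/-- For all `n > 1`, the number of prime parking functions of length `n` is `(n-1)^(n-1)`. -/
theorem numPrimeParkingFunctions (n : ℕ) (hn : 1 < n) :
    Nat.card {u : Fin n → ℕ+ // IsPrimeParkingFn u} = (n - 1) ^ (n - 1) := by
  set m := n - 1 with hm
  have hm0 : 0 < m := by omega
  haveI : NeZero m := ⟨hm0.ne'⟩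
  have hnm : n = m + 1 := by omega
  have h1 : Nat.card {u : Fin n → ℕ+ // IsPrimeParkingFn u}
      = Nat.card {w : Fin n → ZMod m // PPFCount.Qw w} :=
    Nat.card_congr (PPFCount.ppfEquiv hnm)
  have h2 : Nat.card {w : Fin n → ZMod m // PPFCount.Qw w} * m = m ^ n := by
    have h3 := Nat.card_congr (PPFCount.orbitEquiv (n := n) (m := m) hnm)
    have h4 : Nat.card (Fin n) = n := by
      rw [Nat.card_eq_fintype_card, Fintype.card_fin]
    rw [Nat.card_prod, Nat.card_zmod, Nat.card_fun, Nat.card_zmod, h4] at h3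
    exact h3
  have h5 : m ^ n = m ^ m * m := by rw [hnm, pow_succ]
  rw [h5] at h2
  have h4 : Nat.card {w : Fin n → ZMod m // PPFCount.Qw w} = m ^ m :=
    Nat.eq_of_mul_eq_mul_right hm0 h2
  rw [h1, h4]
end

section
/- The shifted shuffle of two parking functions is a set of parking functions: if u is a parking function of length m and v is a parking function of length n, then every word in u ⊔ v (the shuffle of u with v shifted by m) is a parking function of length m+n. -/
/-- The shuffle of two words, as a multiset:
`ε ⧢ v = {v}`, `u ⧢ ε = {u}`, `(au) ⧢ (bv) = a·(u ⧢ bv) + b·(au ⧢ v)`. -/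
def shuffle : List ℕ+ → List ℕ+ → Multiset (List ℕ+)
  | [], v => {v}
  | a :: u, [] => {a :: u}
  | a :: u, b :: v =>
      ((shuffle u (b :: v)).map (fun t => a :: t)) +
        ((shuffle (a :: u) v).map (fun t => b :: t))
termination_by u v => u.length + v.length
decreasing_by all_goals (simp only [List.length_cons]; omega)

/-- `v` with all letters incremented by `m`. -/
def shiftW (m : ℕ) (v : List ℕ+) : List ℕ+ :=
  v.map (fun (x : ℕ+) => (⟨(x : ℕ) + m, Nat.add_pos_left x.pos m⟩ : ℕ+))

/-- Number of letters of `w` that are `≤ i`. -/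
def pcount (w : List ℕ+) (i : ℕ) : ℕ := (w.filter (fun x => (x : ℕ) ≤ i)).length

/-- A parking function of length `n`: for each `i ∈ [n]`, the number of letters
`≤ i` is at least `i`. -/
def IsPF (w : List ℕ+) : Prop := ∀ i : ℕ, 1 ≤ i → i ≤ w.length → i ≤ pcount w i

lemma shuffle_perm : ∀ (a b : List ℕ+), ∀ w ∈ shuffle a b, w.Perm (a ++ b) := by
  intro a b
  induction a, b using shuffle.induct with
  | case1 v => intro w hw; simp [shuffle] at hw; simp [hw]
  | case2 a u => intro w hw; simp [shuffle] at hw; simp [hw]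
  | case3 a u b v ih1 ih2 =>
      intro w hw
      rw [shuffle] at hw
      simp only [Multiset.mem_add, Multiset.mem_map] at hw
      rcases hw with ⟨t, ht, rfl⟩ | ⟨t, ht, rfl⟩
      · exact (ih1 t ht).cons a
      · exact ((ih2 t ht).cons b).trans List.perm_middle.symm

lemma pcount_eq (w : List ℕ+) (i : ℕ) :
    pcount w i = ((w.map (fun x : ℕ+ => (x:ℕ))).filter (fun x => x ≤ i)).length := by
  simp only [pcount, List.pure_def, List.bind_eq_flatMap]
  rw [show (List.flatMap (fun a : ℕ+ => [(a:ℕ)]) w) = w.map (fun x : ℕ+ => (x:ℕ)) from by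
    induction w with | nil => rfl | cons x t ih => simp [ih]]

lemma pcount_append (a b : List ℕ+) (i : ℕ) :
    pcount (a ++ b) i = pcount a i + pcount b i := by
  simp [pcount_eq, List.filter_append]

lemma pcount_perm {a b : List ℕ+} (h : a.Perm b) (i : ℕ) :
    pcount a i = pcount b i := by
  rw [pcount_eq, pcount_eq]
  exact ((h.map _).filter _).length_eq

lemma pcount_mono (w : List ℕ+) {i j : ℕ} (h : i ≤ j) : pcount w i ≤ pcount w j := by
  simp only [pcount_eq, ← List.countP_eq_length_filter]
  exact List.countP_mono_left (fun x _ hx => by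
    simp only [decide_eq_true_eq] at *; omega)

lemma pcount_le_length (w : List ℕ+) (i : ℕ) : pcount w i ≤ w.length := by
  rw [pcount_eq]
  exact le_trans (List.length_filter_le _ _) (by simp)

lemma pcount_shiftW (m : ℕ) (v : List ℕ+) (i : ℕ) :
    pcount (shiftW m v) i = pcount v (i - m) := by
  induction v with
  | nil => rfl
  | cons x t ih =>
      have hx := x.pos
      rw [pcount_eq, pcount_eq] at *
      rw [show shiftW m (x :: t) = Nat.toPNat ((x : ℕ) + m) (Nat.add_pos_left x.pos m) :: shiftW m t from rfl]
      simp only [List.map_cons, List.filter_cons] at *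
      by_cases h : (x : ℕ) + m ≤ i
      · have h2 : (x : ℕ) ≤ i - m := by omega
        simp only [PNat.mk_coe, decide_eq_true_eq, show ((Nat.toPNat ((x : ℕ) + m) (Nat.add_pos_left x.pos m) : ℕ+) : ℕ) = (x : ℕ) + m from rfl]
        rw [if_pos h, if_pos h2]
        simp only [List.length_cons]
        omega
      · have h2 : ¬ (x : ℕ) ≤ i - m := by omega
        simp only [PNat.mk_coe, decide_eq_true_eq, show ((Nat.toPNat ((x : ℕ) + m) (Nat.add_pos_left x.pos m) : ℕ+) : ℕ) = (x : ℕ) + m from rfl]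
        rw [if_neg h, if_neg h2]
        exact ih

/-- Every word in the shifted shuffle of two parking functions is a parking
function of length `m + n`. -/
theorem shiftedShuffle_parking (u v : List ℕ+) (hu : IsPF u) (hv : IsPF v) :
    ∀ w ∈ shuffle u (shiftW u.length v),
      w.length = u.length + v.length ∧ IsPF w := by
  intro w hw
  set m := u.length
  have hperm := shuffle_perm u (shiftW m v) w hw
  have hlen : w.length = m + v.length := by
    rw [hperm.length_eq, List.length_append]
    simp [shiftW, m]
    exact List.length_map ..
  refine ⟨hlen, ?_⟩
  intro i hi1 hiw
  rw [pcount_perm hperm, pcount_append, pcount_shiftW]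
  rw [hlen] at hiw
  by_cases h : i ≤ m
  · have := hu i hi1 h
    omega
  · push_neg at h
    have h1 : m ≤ pcount u i := by
      rcases Nat.eq_zero_or_pos m with hm | hm
      · omega
      · exact le_trans (hu m hm le_rfl) (pcount_mono u (le_of_lt h))
    have h2 : i - m ≤ pcount v (i - m) := hv (i - m) (by omega) (by omega)
    omega
end

section
/- The number A^∞_{n,k} := Σ over set partitions {Q_1,...,Q_k} of [n] into k parts of the product Π_{i=1}^{k} (|Q_i|-1)^(|Q_i|-1) equals the number of sets of k rooted labeled trees whose vertex sets form a set partition of [n] and each of which is minimal (its maximal decreasing subtree consists of the root alone). -/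
open Finset Function

namespace AinfProof

variable {n : ℕ}

/-- acyclicity via a height function -/
def HasHeight (f : Fin n → Fin n) : Prop := ∃ h : Fin n → ℕ, ∀ x, f x = x ∨ h (f x) < h x

theorem hasHeight_iff (f : Fin n → Fin n) :
    (∀ v, ∃ m, f^[m + 1] v = f^[m] v) ↔ HasHeight f := by
  constructor
  · intro H
    refine ⟨fun v => Nat.find (H v), fun x => ?_⟩
    by_cases hfx : f x = x
    · exact Or.inl hfx
    · right
      have hx : 0 < Nat.find (H x) := by
        rcases Nat.eq_zero_or_pos (Nat.find (H x)) with h0 | h0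
        · have := Nat.find_spec (H x)
          rw [h0] at this
          simp only [Function.iterate_one, Function.iterate_zero, id_eq] at this
          exact absurd this hfx
        · exact h0
      have key : f^[(Nat.find (H x) - 1) + 1] (f x) = f^[Nat.find (H x) - 1] (f x) := by
        have hs := Nat.find_spec (H x)
        have e : ∀ m : ℕ, f^[m] (f x) = f^[m + 1] x := by
          intro m; rw [Function.iterate_succ_apply]
        rw [e, e]
        have e1 : Nat.find (H x) - 1 + 1 + 1 = Nat.find (H x) + 1 := by omega
        have e2 : Nat.find (H x) - 1 + 1 = Nat.find (H x) := by omega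
        rw [e1, e2]; exact hs
      have hle : Nat.find (H (f x)) ≤ Nat.find (H x) - 1 := Nat.find_le key
      show Nat.find (H (f x)) < Nat.find (H x)
      omega
  · rintro ⟨h, hh⟩ v
    have key : ∀ N v, h v ≤ N → ∃ m, f^[m + 1] v = f^[m] v := by
      intro N
      induction N with
      | zero =>
        intro v hv
        rcases hh v with h1 | h1
        · exact ⟨0, by simpa using h1⟩
        · omega
      | succ N ih =>
        intro v hv
        rcases hh v with h1 | h1
        · exact ⟨0, by simpa using h1⟩
        · obtain ⟨m, hm⟩ := ih (f v) (by omega)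
          refine ⟨m + 1, ?_⟩
          rw [Function.iterate_succ_apply, Function.iterate_succ_apply]
          exact hm
    exact key (h v) v le_rfl

open scoped Classical in
/-- The root reached from `x` by iterating `f`. -/
noncomputable def stab (f : Fin n → Fin n) (x : Fin n) : Fin n :=
  if hf : ∃ m, f^[m + 1] x = f^[m] x then f^[Nat.find hf] x else x

theorem stab_fix {f : Fin n → Fin n} (hH : HasHeight f) (x : Fin n) :
    f (stab f x) = stab f x := by
  have hx := (hasHeight_iff f).mpr hH x
  rw [stab, dif_pos hx]
  have := Nat.find_spec hx
  rwa [Function.iterate_succ_apply'] at this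

theorem stab_eventual {f : Fin n → Fin n} {x : Fin n} (hx : ∃ m, f^[m + 1] x = f^[m] x)
    {m : ℕ} (hm : Nat.find hx ≤ m) : f^[m] x = stab f x := by
  rw [stab, dif_pos hx]
  have h1 : f (f^[Nat.find hx] x) = f^[Nat.find hx] x := by
    have := Nat.find_spec hx; rwa [Function.iterate_succ_apply'] at this
  calc f^[m] x = f^[m - Nat.find hx] (f^[Nat.find hx] x) := by
        rw [← Function.iterate_add_apply]; congr 1; omega
    _ = f^[Nat.find hx] x := Function.iterate_fixed h1 _

theorem stab_next {f : Fin n → Fin n} (hH : HasHeight f) (x : Fin n) :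
    stab f (f x) = stab f x := by
  have hx := (hasHeight_iff f).mpr hH x
  have hfx := (hasHeight_iff f).mpr hH (f x)
  set M := max (Nat.find hx) (Nat.find hfx + 1) with hM
  have e1 : f^[M] x = stab f x := stab_eventual hx (by omega)
  have e2 : f^[M - 1] (f x) = stab f (f x) := stab_eventual hfx (by omega)
  rw [← e1, ← e2, ← Function.iterate_succ_apply]
  congr 1; omega

theorem stab_of_fix {f : Fin n → Fin n} {x : Fin n} (hfx : f x = x) : stab f x = x := by
  rw [stab]
  split
  · exact Function.iterate_fixed hfx _
  · rfl

/-- membership preservation -/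
theorem stab_mem {f : Fin n → Fin n} (hH : HasHeight f) {Q : Finset (Fin n)}
    (hinv : ∀ x ∈ Q, f x ∈ Q) : ∀ x ∈ Q, stab f x ∈ Q := by
  obtain ⟨h, hh⟩ := hH
  have key : ∀ N x, h x ≤ N → x ∈ Q → stab f x ∈ Q := by
    intro N
    induction N with
    | zero =>
      intro x hx hxQ
      rcases hh x with h1 | h1
      · rwa [stab_of_fix h1]
      · omega
    | succ N ih =>
      intro x hx hxQ
      rcases hh x with h1 | h1
      · rwa [stab_of_fix h1]
      · rw [← stab_next ⟨h, hh⟩ x]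
        exact ih (f x) (by omega) (hinv x hxQ)
  exact fun x => key (h x) x le_rfl


open scoped Classical

def Minimal (f : Fin n → Fin n) : Prop := ∀ v, f v ≠ v → f (f v) = f v → f v < v

def rootsIn (V : Finset (Fin n)) (f : Fin n → Fin n) : Finset (Fin n) :=
  V.filter (fun x => f x = x)

def ForestOn (V : Finset (Fin n)) (f : Fin n → Fin n) : Prop :=
  (∀ x, x ∉ V → f x = x) ∧ (∀ x ∈ V, f x ∈ V) ∧ HasHeight f

noncomputable def countF (V R : Finset (Fin n)) : ℕ :=
  (univ.filter (fun f : Fin n → Fin n => ForestOn V f ∧ rootsIn V f = R)).card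

noncomputable def cardMT (V : Finset (Fin n)) : ℕ :=
  (univ.filter (fun f : Fin n → Fin n =>
    ForestOn V f ∧ (rootsIn V f).card = 1 ∧ Minimal f)).card

theorem id_forestOn (V : Finset (Fin n)) : ForestOn V (id : Fin n → Fin n) :=
  ⟨fun _ _ => rfl, fun x hx => hx, ⟨fun _ => 0, fun _ => Or.inl rfl⟩⟩

theorem countF_self (V : Finset (Fin n)) : countF V V = 1 := by
  rw [countF, Finset.card_eq_one]
  refine ⟨id, ?_⟩
  ext f
  simp only [mem_filter, mem_univ, true_and, Finset.mem_singleton]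
  constructor
  · rintro ⟨⟨hoff, hin, hH⟩, hroots⟩
    funext x
    by_cases hx : x ∈ V
    · have : x ∈ rootsIn V f := by rw [hroots]; exact hx
      exact (mem_filter.1 this).2
    · exact hoff x hx
  · rintro rfl
    refine ⟨id_forestOn V, ?_⟩
    rw [rootsIn]
    simp

theorem rootsIn_nonempty {V : Finset (Fin n)} {f : Fin n → Fin n} (hV : V.Nonempty)
    (hf : ForestOn V f) : (rootsIn V f).Nonempty := by
  obtain ⟨hoff, hin, h, hh⟩ := hf
  obtain ⟨x, hx, hmin⟩ := V.exists_min_image h hV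
  refine ⟨x, mem_filter.2 ⟨hx, ?_⟩⟩
  rcases hh x with h1 | h1
  · exact h1
  · exact absurd (hmin (f x) (hin x hx)) (by omega)

theorem countF_empty {V : Finset (Fin n)} (hV : V.Nonempty) : countF V ∅ = 0 := by
  rw [countF, Finset.card_eq_zero, Finset.filter_eq_empty_iff]
  rintro f - ⟨hf, hroots⟩
  exact (rootsIn_nonempty hV hf).ne_empty hroots

def deroot (f : Fin n → Fin n) (r x : Fin n) : Fin n :=
  if f x = r then x else f x

noncomputable def reroot (g : Fin n → Fin n) (r : Fin n) (I : Finset (Fin n)) (x : Fin n) :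
    Fin n := if x ∈ I ∨ x = r then r else g x

noncomputable def childrenOf (V : Finset (Fin n)) (f : Fin n → Fin n) (r : Fin n) :
    Finset (Fin n) := (V.filter (fun x => f x = r)).erase r

theorem mem_childrenOf {V : Finset (Fin n)} {f : Fin n → Fin n} {r x : Fin n} :
    x ∈ childrenOf V f r ↔ x ≠ r ∧ x ∈ V ∧ f x = r := by
  simp [childrenOf, mem_erase, mem_filter, and_assoc]

theorem core_card (V R I : Finset (Fin n)) (r : Fin n) (hrR : r ∈ R) (hRV : R ⊆ V)
    (hIV : I ⊆ V) (hIR : ∀ x ∈ I, x ∉ R) :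
    (univ.filter (fun f : Fin n → Fin n =>
      (ForestOn V f ∧ rootsIn V f = R) ∧ childrenOf V f r = I)).card
    = countF (V.erase r) (R.erase r ∪ I) := by
  have hrV : r ∈ V := hRV hrR
  have hrI : r ∉ I := fun h => hIR r h hrR
  rw [countF]
  refine Finset.card_bij' (fun f _ => deroot f r) (fun g _ => reroot g r I) ?_ ?_ ?_ ?_
  · -- forward membership
    rintro f hf
    rw [mem_filter] at hf
    obtain ⟨-, ⟨⟨hoff, hin, hH⟩, hroots⟩, hch⟩ := hf
    have hfr : f r = r := by
      have : r ∈ rootsIn V f := by rw [hroots]; exact hrR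
      exact (mem_filter.1 this).2
    have hmemI : ∀ x, x ∈ I ↔ x ≠ r ∧ x ∈ V ∧ f x = r := by
      intro x; rw [← hch, mem_childrenOf]
    have hmemR : ∀ x, x ∈ R ↔ x ∈ V ∧ f x = x := by
      intro x; rw [← hroots, rootsIn, mem_filter]
    rw [mem_filter]
    refine ⟨mem_univ _, ⟨?_, ?_, ?_⟩, ?_⟩
    · -- off
      intro x hx
      rw [mem_erase] at hx
      push_neg at hx
      by_cases hxr : x = r
      · subst hxr; simp [deroot, hfr]
      · have hxV : x ∉ V := hx hxr
        have : f x = x := hoff x hxV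
        simp [deroot, this]
    · -- into
      intro x hx
      rw [mem_erase] at hx
      obtain ⟨hxr, hxV⟩ := hx
      simp only [deroot]
      split
      · exact mem_erase.2 ⟨hxr, hxV⟩
      · next h => exact mem_erase.2 ⟨h, hin x hxV⟩
    · -- height
      obtain ⟨h, hh⟩ := hH
      refine ⟨h, fun x => ?_⟩
      simp only [deroot]
      split
      · exact Or.inl rfl
      · rcases hh x with h1 | h1
        · exact Or.inl h1
        · exact Or.inr h1
    · -- roots
      ext x
      rw [rootsIn, mem_filter, mem_erase, mem_union, mem_erase]
      constructor
      · rintro ⟨⟨hxr, hxV⟩, hd⟩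
        simp only [deroot] at hd
        by_cases hc : f x = r
        · right; exact (hmemI x).2 ⟨hxr, hxV, hc⟩
        · rw [if_neg hc] at hd
          left; exact ⟨hxr, (hmemR x).2 ⟨hxV, hd⟩⟩
      · rintro (⟨hxr, hxR⟩ | hxI)
        · have := (hmemR x).1 hxR
          refine ⟨⟨hxr, this.1⟩, ?_⟩
          simp only [deroot]; rw [if_neg (fun h => hxr (by rw [← this.2, h]))]
          exact this.2
        · obtain ⟨hxr, hxV, hfx⟩ := (hmemI x).1 hxI
          exact ⟨⟨hxr, hxV⟩, by simp only [deroot]; rw [if_pos hfx]⟩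
  · -- backward membership
    rintro g hg
    rw [mem_filter] at hg
    obtain ⟨-, ⟨hoff, hin, hH⟩, hroots⟩ := hg
    have hgr : g r = r := hoff r (by simp)
    have hgne : ∀ x, x ≠ r → g x ≠ r := by
      intro x hxr
      by_cases hxV : x ∈ V
      · have := hin x (mem_erase.2 ⟨hxr, hxV⟩)
        exact (mem_erase.1 this).1
      · rw [hoff x (fun h => hxV (mem_erase.1 h).2)]
        exact hxr
    have hrootsg : ∀ x, (x ∈ V ∧ x ≠ r ∧ g x = x) ↔ (x ∈ R ∧ x ≠ r) ∨ x ∈ I := by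
      intro x
      constructor
      · rintro ⟨hxV, hxr, hgx⟩
        have : x ∈ rootsIn (V.erase r) g := mem_filter.2 ⟨mem_erase.2 ⟨hxr, hxV⟩, hgx⟩
        rw [hroots, mem_union, mem_erase] at this
        rcases this with h | h
        · exact Or.inl ⟨h.2, h.1⟩
        · exact Or.inr h
      · rintro (⟨hxR, hxr⟩ | hxI)
        · have : x ∈ rootsIn (V.erase r) g := by
            rw [hroots, mem_union, mem_erase]; exact Or.inl ⟨hxr, hxR⟩
          have h2 := mem_filter.1 this
          exact ⟨(mem_erase.1 h2.1).2, hxr, h2.2⟩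
        · have hxr : x ≠ r := fun h => hrI (h ▸ hxI)
          have : x ∈ rootsIn (V.erase r) g := by
            rw [hroots, mem_union]; exact Or.inr hxI
          have h2 := mem_filter.1 this
          exact ⟨(mem_erase.1 h2.1).2, hxr, h2.2⟩
    rw [mem_filter]
    refine ⟨mem_univ _, ⟨⟨?_, ?_, ?_⟩, ?_⟩, ?_⟩
    · -- off V
      intro x hxV
      have hxI : x ∉ I := fun h => hxV (hIV h)
      have hxr : x ≠ r := fun h => hxV (h ▸ hrV)
      simp only [reroot]; rw [if_neg (by tauto)]
      exact hoff x (fun h => hxV (mem_erase.1 h).2)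
    · -- into V
      intro x hxV
      simp only [reroot]
      split
      · exact hrV
      · next h =>
        push_neg at h
        have := hin x (mem_erase.2 ⟨h.2, hxV⟩)
        exact (mem_erase.1 this).2
    · -- height
      obtain ⟨h, hh⟩ := hH
      refine ⟨fun x => if x = r then 0 else h x + 1, fun x => ?_⟩
      simp only [reroot]
      split
      · next hc =>
        rcases hc with hxI | hxr
        · have hxr : x ≠ r := fun h => hrI (h ▸ hxI)
          right
          rw [if_pos rfl, if_neg hxr]
          omega
        · left; rw [hxr]
      · next hc =>
        push_neg at hc
        rcases hh x with h1 | h1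
        · exact Or.inl h1
        · right
          have hgxr : g x ≠ r := hgne x hc.2
          rw [if_neg hgxr, if_neg hc.2]
          omega
    · -- roots = R
      ext x
      rw [rootsIn, mem_filter]
      constructor
      · rintro ⟨hxV, hx⟩
        simp only [reroot] at hx
        by_cases hc : x ∈ I ∨ x = r
        · rw [if_pos hc] at hx
          rcases hc with h | h
          · rw [← hx] at h; exact absurd h hrI
          · rw [h]; exact hrR
        · rw [if_neg hc] at hx
          push_neg at hc
          rcases (hrootsg x).1 ⟨hxV, hc.2, hx⟩ with h | h
          · exact h.1
          · exact absurd h hc.1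
      · intro hxR
        refine ⟨hRV hxR, ?_⟩
        by_cases hxr : x = r
        · simp only [reroot]; rw [if_pos (Or.inr hxr), hxr]
        · have hxI : x ∉ I := fun h => hIR x h hxR
          simp only [reroot]; rw [if_neg (by tauto)]
          exact ((hrootsg x).2 (Or.inl ⟨hxR, hxr⟩)).2.2
    · -- children = I
      ext x
      rw [mem_childrenOf]
      constructor
      · rintro ⟨hxr, hxV, hx⟩
        simp only [reroot] at hx
        by_cases hc : x ∈ I ∨ x = r
        · rcases hc with h | h
          · exact h
          · exact absurd h hxr
        · rw [if_neg hc] at hx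
          push_neg at hc
          exact absurd hx (hgne x hc.2)
      · intro hxI
        have hxr : x ≠ r := fun h => hrI (h ▸ hxI)
        exact ⟨hxr, hIV hxI, by simp only [reroot]; rw [if_pos (Or.inl hxI)]⟩
  · -- left inverse
    rintro f hf
    rw [mem_filter] at hf
    obtain ⟨-, ⟨⟨hoff, hin, hH⟩, hroots⟩, hch⟩ := hf
    have hfr : f r = r := by
      have : r ∈ rootsIn V f := by rw [hroots]; exact hrR
      exact (mem_filter.1 this).2
    funext x
    simp only [reroot]
    by_cases hc : x ∈ I ∨ x = r
    · rw [if_pos hc]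
      rcases hc with h | h
      · rw [← hch, mem_childrenOf] at h
        exact h.2.2.symm
      · rw [h, hfr]
    · rw [if_neg hc]
      push_neg at hc
      simp only [deroot]; rw [if_neg]
      intro hfx
      by_cases hxV : x ∈ V
      · exact hc.1 (by rw [← hch, mem_childrenOf]; exact ⟨hc.2, hxV, hfx⟩)
      · exact hc.2 (by rw [← hoff x hxV, hfx])
  · -- right inverse
    rintro g hg
    rw [mem_filter] at hg
    obtain ⟨-, ⟨hoff, hin, hH⟩, hroots⟩ := hg
    have hgr : g r = r := hoff r (by simp)
    have hgne : ∀ x, x ≠ r → g x ≠ r := by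
      intro x hxr
      by_cases hxV : x ∈ V
      · have := hin x (mem_erase.2 ⟨hxr, hxV⟩)
        exact (mem_erase.1 this).1
      · rw [hoff x (fun h => hxV (mem_erase.1 h).2)]
        exact hxr
    funext x
    simp only [deroot]
    by_cases hc : reroot g r I x = r
    · rw [if_pos hc]
      simp only [reroot] at hc
      by_cases hc2 : x ∈ I ∨ x = r
      · rcases hc2 with h | h
        · have : x ∈ rootsIn (V.erase r) g := by
            rw [hroots, mem_union]; exact Or.inr h
          exact ((mem_filter.1 this).2).symm
        · rw [h, hgr]
      · rw [if_neg hc2] at hc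
        push_neg at hc2
        exact absurd hc (hgne x hc2.2)
    · rw [if_neg hc]
      simp only [reroot] at hc ⊢
      by_cases hc2 : x ∈ I ∨ x = r
      · rw [if_pos hc2] at hc; exact absurd rfl hc
      · rw [if_neg hc2]

theorem countF_rec (V R : Finset (Fin n)) (r : Fin n) (hrR : r ∈ R) (hRV : R ⊆ V) :
    countF V R = ∑ I ∈ (V \ R).powerset, countF (V.erase r) (R.erase r ∪ I) := by
  rw [countF]
  rw [Finset.card_eq_sum_card_fiberwise (f := fun f => childrenOf V f r)
    (t := (V \ R).powerset) ?hmap]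
  case hmap =>
    intro f hf
    rw [Finset.mem_coe] at hf ⊢
    rw [mem_filter] at hf
    obtain ⟨-, ⟨hoff, hin, hH⟩, hroots⟩ := hf
    rw [mem_powerset]
    intro x hx
    rw [mem_childrenOf] at hx
    obtain ⟨hxr, hxV, hfx⟩ := hx
    rw [mem_sdiff]
    refine ⟨hxV, fun hxR => ?_⟩
    have : f x = x := by
      have : x ∈ rootsIn V f := by rw [hroots]; exact hxR
      exact (mem_filter.1 this).2
    exact hxr (by rw [← this, hfx])
  refine Finset.sum_congr rfl fun I hI => ?_
  rw [mem_powerset] at hI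
  rw [Finset.filter_filter]
  exact core_card V R I r hrR hRV (fun x hx => (mem_sdiff.1 (hI hx)).1)
    (fun x hx => (mem_sdiff.1 (hI hx)).2)


theorem bin1 (M x : ℕ) : ∑ i ∈ Finset.range (M + 1), M.choose i * x ^ (M - i) = (x + 1) ^ M := by
  rw [add_comm x 1, add_pow]
  refine Finset.sum_congr rfl fun i hi => ?_
  simp [one_pow]
  ring

theorem bin2 (M x : ℕ) :
    ∑ i ∈ Finset.range (M + 1), i * M.choose i * x ^ (M - i) = M * (x + 1) ^ (M - 1) := by
  cases M with
  | zero => simp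
  | succ M' =>
    rw [Finset.sum_range_succ']
    have e : ∀ k, (k + 1) * (M' + 1).choose (k + 1) * x ^ (M' + 1 - (k + 1))
        = (M' + 1) * (M'.choose k * x ^ (M' - k)) := by
      intro k
      have h := Nat.add_one_mul_choose_eq M' k
      have : (k + 1) * (M' + 1).choose (k + 1) = (M' + 1) * M'.choose k := by
        rw [mul_comm (k+1) _]
        omega
      rw [Nat.succ_sub_succ, ← mul_assoc, this, mul_assoc]
    calc (∑ i ∈ Finset.range (M' + 1),
            (i + 1) * (M' + 1).choose (i + 1) * x ^ (M' + 1 - (i + 1)))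
          + 0 * (M' + 1).choose 0 * x ^ (M' + 1 - 0)
        = ∑ i ∈ Finset.range (M' + 1), (M' + 1) * (M'.choose i * x ^ (M' - i)) := by
          rw [Nat.zero_mul, Nat.zero_mul, Nat.add_zero]
          exact Finset.sum_congr rfl fun i _ => e i
      _ = (M' + 1) * ∑ i ∈ Finset.range (M' + 1), M'.choose i * x ^ (M' - i) := by
          rw [Finset.mul_sum]
      _ = (M' + 1) * (x + 1) ^ (M' + 1 - 1) := by rw [bin1, Nat.succ_sub_one]

theorem alg1 {M s N : ℕ} (hN : N = M + s) (hs : 1 ≤ s) (hM : 1 ≤ M) :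
    ∑ i ∈ Finset.range (M + 1), M.choose i * (s - 1 + i) * (N - 1) ^ (M - i)
      = s * (N - 1) * N ^ (M - 1) := by
  have hN1 : N - 1 + 1 = N := by omega
  have e1 : ∀ i, M.choose i * (s - 1 + i) * (N - 1) ^ (M - i)
      = (s - 1) * (M.choose i * (N - 1) ^ (M - i)) + i * M.choose i * (N - 1) ^ (M - i) := by
    intro i
    ring
  calc ∑ i ∈ Finset.range (M + 1), M.choose i * (s - 1 + i) * (N - 1) ^ (M - i)
      = (∑ i ∈ Finset.range (M + 1), (s - 1) * (M.choose i * (N - 1) ^ (M - i)))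
        + ∑ i ∈ Finset.range (M + 1), i * M.choose i * (N - 1) ^ (M - i) := by
        rw [← Finset.sum_add_distrib]
        exact Finset.sum_congr rfl fun i _ => e1 i
    _ = (s - 1) * N ^ M + M * N ^ (M - 1) := by
        rw [← Finset.mul_sum, bin1, bin2, hN1]
    _ = ((s - 1) * N + M) * N ^ (M - 1) := by
        have : N ^ M = N * N ^ (M - 1) := by
          conv_lhs => rw [show M = 1 + (M - 1) by omega]
          rw [pow_add, pow_one]
        rw [this]; ring
    _ = s * (N - 1) * N ^ (M - 1) := by
        have e2 : (s - 1) * N + M = s * (N - 1) := by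
          obtain ⟨t, rfl⟩ : ∃ t, s = t + 1 := ⟨s - 1, by omega⟩
          subst hN
          have h1 : t + 1 - 1 = t := by omega
          have h2 : M + (t + 1) - 1 = M + t := by omega
          rw [h1, h2]
          ring
        rw [e2]

theorem hockey (N j : ℕ) :
    ∑ a ∈ Finset.range (N + 1), a.choose j = (N + 1).choose (j + 1) := by
  by_cases hj : j ≤ N
  · rw [← Nat.sum_Icc_choose]
    rw [← Finset.sum_subset (s₁ := Finset.Icc j N) (s₂ := Finset.range (N + 1))]
    · intro x hx
      rw [Finset.mem_Icc] at hx
      rw [Finset.mem_range]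
      omega
    · intro x hx hnx
      rw [Finset.mem_range] at hx
      rw [Finset.mem_Icc] at hnx
      exact Nat.choose_eq_zero_of_lt (by omega)
  · rw [Nat.choose_eq_zero_of_lt (by omega)]
    refine Finset.sum_eq_zero fun a ha => ?_
    rw [Finset.mem_range] at ha
    exact Nat.choose_eq_zero_of_lt (by omega)

theorem alg3 {N : ℕ} (hN : 1 ≤ N) :
    ∑ j ∈ Finset.range (N + 1), j * (N + 1).choose (j + 1) * N ^ (N - j) = N ^ (N + 1) := by
  have S1 : ∑ j ∈ Finset.range (N + 1), (j + 1) * (N + 1).choose (j + 1) * N ^ (N - j)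
      = (N + 1) ^ (N + 1) := by
    have e : ∀ j, (j + 1) * (N + 1).choose (j + 1) * N ^ (N - j)
        = (N + 1) * (N.choose j * N ^ (N - j)) := by
      intro j
      have h := Nat.add_one_mul_choose_eq N j
      have : (j + 1) * (N + 1).choose (j + 1) = (N + 1) * N.choose j := by
        rw [mul_comm (j+1) _]; omega
      rw [← mul_assoc, this, mul_assoc]
    rw [Finset.sum_congr rfl fun j _ => e j, ← Finset.mul_sum, bin1]
    rw [← pow_succ']
  have S2 : (∑ j ∈ Finset.range (N + 1), (N + 1).choose (j + 1) * N ^ (N - j)) + N ^ (N + 1)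
      = (N + 1) ^ (N + 1) := by
    have b := bin1 (N + 1) N
    rw [Finset.sum_range_succ'] at b
    simp only [Nat.choose_zero_right, Nat.sub_zero, Nat.one_mul] at b
    rw [← b]
    congr 1
    refine Finset.sum_congr rfl fun j _ => ?_
    have : N + 1 - (j + 1) = N - j := by omega
    rw [this]
  have split : ∑ j ∈ Finset.range (N + 1), (j + 1) * (N + 1).choose (j + 1) * N ^ (N - j)
      = (∑ j ∈ Finset.range (N + 1), j * (N + 1).choose (j + 1) * N ^ (N - j))
        + ∑ j ∈ Finset.range (N + 1), (N + 1).choose (j + 1) * N ^ (N - j) := by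
    rw [← Finset.sum_add_distrib]
    refine Finset.sum_congr rfl fun j _ => ?_
    ring
  omega


theorem cayley (V : Finset (Fin n)) :
    ∀ R : Finset (Fin n), R ⊆ V → R.Nonempty →
      V.card * countF V R = R.card * V.card ^ (V.card - R.card) := by
  induction V using Finset.strongInduction with
  | _ V ih =>
    intro R hRV hR
    by_cases hVR : R = V
    · subst hVR
      rw [countF_self]
      simp
    · obtain ⟨r, hrR⟩ := hR
      have hrV : r ∈ V := hRV hrR
      have hsdne : (V \ R).Nonempty := by
        rw [Finset.sdiff_nonempty]
        intro h
        exact hVR (Finset.Subset.antisymm hRV h)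
      have hM : 1 ≤ (V \ R).card := card_pos.2 hsdne
      have hsle : R.card ≤ V.card := card_le_card hRV
      have hMeq : (V \ R).card = V.card - R.card := card_sdiff_of_subset hRV
      have hs : 1 ≤ R.card := card_pos.2 ⟨r, hrR⟩
      have hN2 : 2 ≤ V.card := by omega
      have hNsM : V.card = (V \ R).card + R.card := by omega
      have hV' : (V.erase r).card = V.card - 1 := card_erase_of_mem hrV
      have key : ∀ I ∈ (V \ R).powerset,
          (V.card - 1) * countF (V.erase r) (R.erase r ∪ I)
            = (R.card - 1 + I.card) * (V.card - 1) ^ ((V \ R).card - I.card) := by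
        intro I hI
        rw [mem_powerset] at hI
        have hIcard : I.card ≤ (V \ R).card := card_le_card hI
        have hIR : ∀ x ∈ I, x ∉ R := fun x hx => (mem_sdiff.1 (hI hx)).2
        have hdisj : Disjoint (R.erase r) I := by
          rw [Finset.disjoint_right]
          intro x hxI hxR
          exact hIR x hxI (mem_of_mem_erase hxR)
        have hcard : (R.erase r ∪ I).card = R.card - 1 + I.card := by
          rw [card_union_of_disjoint hdisj, card_erase_of_mem hrR]
        have hsub' : R.erase r ∪ I ⊆ V.erase r := by
          intro x hx
          rcases mem_union.1 hx with h | h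
          · exact mem_erase.2 ⟨(mem_erase.1 h).1, hRV (mem_of_mem_erase h)⟩
          · have h2 := mem_sdiff.1 (hI h)
            exact mem_erase.2 ⟨fun he => h2.2 (he ▸ hrR), h2.1⟩
        by_cases hne : (R.erase r ∪ I).Nonempty
        · have hih := ih (V.erase r) (Finset.erase_ssubset hrV) _ hsub' hne
          rw [hV', hcard] at hih
          rw [hih]
          have he : #V - 1 - (#R - 1 + #I) = #(V \ R) - #I := by omega
          rw [he]
        · rw [Finset.not_nonempty_iff_eq_empty] at hne
          rw [hne] at hcard ⊢
          rw [countF_empty (Finset.card_pos.1 (by omega))]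
          rw [Finset.card_empty] at hcard
          rw [← hcard]
          simp
      have hrec := countF_rec V R r hrR hRV
      have step : (V.card - 1) * countF V R
          = ∑ I ∈ (V \ R).powerset,
              (R.card - 1 + I.card) * (V.card - 1) ^ ((V \ R).card - I.card) := by
        rw [hrec, Finset.mul_sum]
        exact Finset.sum_congr rfl key
      have hps := Finset.sum_powerset_apply_card
        (f := fun m => (R.card - 1 + m) * (V.card - 1) ^ ((V \ R).card - m)) (x := V \ R)
      simp only [smul_eq_mul] at hps
      rw [hps] at step
      have step2 : (V.card - 1) * countF V R
          = R.card * (V.card - 1) * V.card ^ ((V \ R).card - 1) := by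
        rw [step, ← alg1 hNsM hs hM]
        refine Finset.sum_congr rfl fun i _ => ?_
        rw [← mul_assoc]
      have hcf : countF V R = R.card * V.card ^ ((V \ R).card - 1) :=
        Nat.eq_of_mul_eq_mul_left (by omega : 0 < V.card - 1) (by rw [step2]; ring)
      rw [hcf, ← hMeq]
      have hpow : V.card ^ (V \ R).card = V.card * V.card ^ ((V \ R).card - 1) := by
        conv_lhs => rw [show (V \ R).card = 1 + ((V \ R).card - 1) by omega]
        rw [pow_add, pow_one]
      rw [hpow]
      ring


theorem cardMT_decomp (V : Finset (Fin n)) (hV : V.Nonempty) :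
    cardMT V = ∑ r ∈ V, ∑ I ∈ ((V.erase r).filter (fun x => r < x)).powerset,
      countF (V.erase r) I := by
  obtain ⟨v0, hv0⟩ := hV
  rw [cardMT]
  rw [Finset.card_eq_sum_card_fiberwise (f := fun f =>
      if h : (rootsIn V f).Nonempty then (rootsIn V f).min' h else v0) (t := V) ?hmap]
  case hmap =>
    intro f hf
    rw [Finset.mem_coe] at hf ⊢
    rw [mem_filter] at hf
    obtain ⟨-, hfo, hc, hm⟩ := hf
    have hne : (rootsIn V f).Nonempty := card_pos.1 (by omega)
    simp only [dif_pos hne]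
    exact mem_of_mem_filter _ ((rootsIn V f).min'_mem hne)
  refine Finset.sum_congr rfl fun r hr => ?_
  have hfiber : (univ.filter (fun f : Fin n → Fin n =>
        ForestOn V f ∧ (rootsIn V f).card = 1 ∧ Minimal f)).filter
      (fun f => (if h : (rootsIn V f).Nonempty then (rootsIn V f).min' h else v0) = r)
      = univ.filter (fun f : Fin n → Fin n =>
          (ForestOn V f ∧ rootsIn V f = {r}) ∧ Minimal f) := by
    ext f
    simp only [Finset.mem_filter, Finset.mem_univ, true_and]
    constructor
    · rintro ⟨⟨hfo, hc, hm⟩, hgf⟩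
      obtain ⟨a, ha⟩ := Finset.card_eq_one.1 hc
      have hne : (rootsIn V f).Nonempty := by rw [ha]; exact ⟨a, mem_singleton_self a⟩
      rw [dif_pos hne] at hgf
      have huniq := Finset.card_le_one.1 (le_of_eq hc)
      have haa : a ∈ rootsIn V f := by rw [ha]; exact mem_singleton_self a
      have hma : (rootsIn V f).min' hne = a :=
        huniq _ ((rootsIn V f).min'_mem hne) _ haa
      rw [hma] at hgf
      subst hgf
      exact ⟨⟨hfo, ha⟩, hm⟩
    · rintro ⟨⟨hfo, hroots⟩, hm⟩
      have hne : (rootsIn V f).Nonempty := by rw [hroots]; exact ⟨r, mem_singleton_self r⟩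
      refine ⟨⟨hfo, by rw [hroots]; simp, hm⟩, ?_⟩
      rw [dif_pos hne]
      have hc : (rootsIn V f).card = 1 := by rw [hroots]; exact Finset.card_singleton r
      have huniq := Finset.card_le_one.1 (le_of_eq hc)
      have hrr : r ∈ rootsIn V f := by rw [hroots]; exact mem_singleton_self r
      exact huniq _ ((rootsIn V f).min'_mem hne) _ hrr
  rw [hfiber]
  rw [Finset.card_eq_sum_card_fiberwise (f := fun f => childrenOf V f r)
      (t := ((V.erase r).filter (fun x => r < x)).powerset) ?hmap2]
  case hmap2 =>
    intro f hf
    rw [Finset.mem_coe] at hf ⊢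
    rw [mem_filter] at hf
    obtain ⟨-, ⟨hfo, hroots⟩, hm⟩ := hf
    rw [mem_powerset]
    intro x hx
    rw [mem_childrenOf] at hx
    obtain ⟨hxr, hxV, hfx⟩ := hx
    have hfr : f r = r := by
      have : r ∈ rootsIn V f := by rw [hroots]; exact mem_singleton_self r
      exact (mem_filter.1 this).2
    have hlt : r < x := by
      have hne : f x ≠ x := by rw [hfx]; exact fun h => hxr h.symm
      have h2 : f (f x) = f x := by rw [hfx, hfr]
      have := hm x hne h2
      rwa [hfx] at this
    exact mem_filter.2 ⟨mem_erase.2 ⟨hxr, hxV⟩, hlt⟩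
  refine Finset.sum_congr rfl fun I hI => ?_
  rw [mem_powerset] at hI
  have hIV : I ⊆ V := fun x hx => mem_of_mem_erase (mem_of_mem_filter _ (hI hx))
  have hIr : ∀ x ∈ I, r < x := fun x hx => (mem_filter.1 (hI hx)).2
  have hset : (univ.filter (fun f : Fin n → Fin n =>
        (ForestOn V f ∧ rootsIn V f = {r}) ∧ Minimal f)).filter
      (fun f => childrenOf V f r = I)
      = univ.filter (fun f : Fin n → Fin n =>
          (ForestOn V f ∧ rootsIn V f = {r}) ∧ childrenOf V f r = I) := by
    ext f
    simp only [Finset.mem_filter, Finset.mem_univ, true_and]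
    constructor
    · rintro ⟨⟨h1, h2⟩, h3⟩
      exact ⟨h1, h3⟩
    · rintro ⟨h1, h3⟩
      refine ⟨⟨h1, ?_⟩, h3⟩
      intro v hv1 hv2
      have hfr : f r = r := by
        have : r ∈ rootsIn V f := by rw [h1.2]; exact mem_singleton_self r
        exact (mem_filter.1 this).2
      have hvV : v ∈ V := by
        by_contra hvV
        exact hv1 (h1.1.1 v hvV)
      have hfvV : f v ∈ V := h1.1.2.1 v hvV
      have hfvr : f v = r := by
        have : f v ∈ rootsIn V f := mem_filter.2 ⟨hfvV, hv2⟩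
        rw [h1.2, Finset.mem_singleton] at this
        exact this
      have hvr : v ≠ r := by
        intro h
        rw [h] at hv1
        exact hv1 hfr
      have hvI : v ∈ I := by
        rw [← h3, mem_childrenOf]
        exact ⟨hvr, hvV, hfvr⟩
      rw [hfvr]
      exact hIr v hvI
  rw [hset]
  have hrc := core_card V {r} I r (mem_singleton_self r)
    (Finset.singleton_subset_iff.2 (by exact hr)) hIV
    (fun x hx h => absurd (hIr x hx) (by rw [Finset.mem_singleton] at h; rw [h]; exact lt_irrefl r))
  rw [hrc, Finset.erase_singleton, Finset.empty_union]

theorem reidx (F : ℕ → ℕ) (V : Finset (Fin n)) :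
    ∑ r ∈ V, F (((V.erase r).filter (fun x => r < x)).card)
      = ∑ a ∈ Finset.range V.card, F a := by
  induction V using Finset.induction_on_min with
  | empty => simp
  | insert a s ha ih =>
    have haS : a ∉ s := fun h => lt_irrefl a (ha a h)
    rw [Finset.sum_insert haS, Finset.card_insert_of_notMem haS]
    have h1 : ((insert a s).erase a).filter (fun x => a < x) = s := by
      rw [Finset.erase_insert haS]
      exact Finset.filter_true_of_mem (fun x hx => ha x hx)
    have h2 : ∀ r ∈ s, ((insert a s).erase r).filter (fun x => r < x)
        = (s.erase r).filter (fun x => r < x) := by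
      intro r hr
      ext x
      simp only [mem_filter, mem_erase, mem_insert]
      constructor
      · rintro ⟨⟨hxr, hx⟩, hlt⟩
        rcases hx with rfl | hx
        · exact ((lt_asymm (ha r hr)) hlt).elim
        · exact ⟨⟨hxr, hx⟩, hlt⟩
      · rintro ⟨⟨hxr, hx⟩, hlt⟩
        exact ⟨⟨hxr, Or.inr hx⟩, hlt⟩
    rw [h1, Finset.sum_congr rfl (fun r hr => by rw [h2 r hr]), ih, Finset.sum_range_succ]
    exact add_comm _ _

theorem cardMT_formula (V : Finset (Fin n)) (hV : V.Nonempty) :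
    cardMT V = (V.card - 1) ^ (V.card - 1) := by
  by_cases h1 : V.card = 1
  · obtain ⟨v, rfl⟩ := Finset.card_eq_one.1 h1
    rw [cardMT_decomp _ ⟨v, mem_singleton_self v⟩]
    rw [Finset.sum_singleton, Finset.erase_singleton]
    simp [countF_self]
  · have h2 : 2 ≤ V.card := by
      have := Finset.card_pos.2 hV
      omega
    have hN1 : 1 ≤ V.card - 1 := by omega
    have key : (V.card - 1) * cardMT V = (V.card - 1) * (V.card - 1) ^ (V.card - 1) := by
      rw [cardMT_decomp V hV, Finset.mul_sum]
      have hterm : ∀ r ∈ V,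
          (V.card - 1) * ∑ I ∈ ((V.erase r).filter (fun x => r < x)).powerset,
            countF (V.erase r) I
          = ∑ j ∈ Finset.range (V.card - 1 + 1),
              (((V.erase r).filter (fun x => r < x)).card).choose j
                * (j * (V.card - 1) ^ (V.card - 1 - j)) := by
        intro r hr
        have hVr : (V.erase r).card = V.card - 1 := card_erase_of_mem hr
        rw [Finset.mul_sum]
        have hstep : ∀ I ∈ ((V.erase r).filter (fun x => r < x)).powerset,
            (V.card - 1) * countF (V.erase r) I
              = I.card * (V.card - 1) ^ (V.card - 1 - I.card) := by
          intro I hI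
          rw [mem_powerset] at hI
          have hIV : I ⊆ V.erase r := fun x hx => mem_of_mem_filter _ (hI hx)
          by_cases hne : I.Nonempty
          · have := cayley (V.erase r) I hIV hne
            rwa [hVr] at this
          · rw [Finset.not_nonempty_iff_eq_empty] at hne
            subst hne
            rw [countF_empty (Finset.card_pos.1 (by omega))]
            simp
        rw [Finset.sum_congr rfl hstep]
        have hps := Finset.sum_powerset_apply_card
          (f := fun m => m * (V.card - 1) ^ (V.card - 1 - m))
          (x := (V.erase r).filter (fun x => r < x))
        simp only [smul_eq_mul] at hps
        rw [hps]
        -- extend the range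
        refine Finset.sum_subset ?_ ?_
        · intro j hj
          rw [Finset.mem_range] at hj ⊢
          have : ((V.erase r).filter (fun x => r < x)).card ≤ V.card - 1 := by
            rw [← hVr]
            exact card_le_card (Finset.filter_subset _ _)
          omega
        · intro j hj hnj
          rw [Finset.mem_range] at hj hnj
          rw [Nat.choose_eq_zero_of_lt (by omega)]
          simp
      rw [Finset.sum_congr rfl hterm]
      have hre := reidx (fun a => ∑ j ∈ Finset.range (V.card - 1 + 1),
          a.choose j * (j * (V.card - 1) ^ (V.card - 1 - j))) V
      beta_reduce at hre
      rw [hre]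
      rw [show Finset.range V.card = Finset.range (V.card - 1 + 1) from by
        congr 1
        omega]
      rw [Finset.sum_comm]
      have hsum : ∀ j ∈ Finset.range (V.card - 1 + 1),
          ∑ a ∈ Finset.range (V.card - 1 + 1),
            a.choose j * (j * (V.card - 1) ^ (V.card - 1 - j))
          = j * (V.card - 1 + 1).choose (j + 1) * (V.card - 1) ^ (V.card - 1 - j) := by
        intro j hj
        rw [← Finset.sum_mul, hockey]
        ring
      rw [Finset.sum_congr rfl hsum]
      rw [alg3 hN1]
      rw [pow_succ']
    exact Nat.eq_of_mul_eq_mul_left (by omega) key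


def restr (f : Fin n → Fin n) (Q : Finset (Fin n)) (x : Fin n) : Fin n :=
  if x ∈ Q then f x else x

noncomputable def blocksOf (f : Fin n → Fin n) : Finset (Finset (Fin n)) :=
  (univ.filter (fun v => f v = v)).image (fun r => univ.filter (fun v => stab f v = r))

theorem blocksOf_card {f : Fin n → Fin n} :
    (blocksOf f).card = (univ.filter (fun v => f v = v)).card := by
  rw [blocksOf]
  apply Finset.card_image_of_injOn
  intro r hr r' hr' he
  simp only at he
  have hfr : f r = r := (mem_filter.1 (Finset.mem_coe.1 hr)).2
  have h1 : r ∈ univ.filter (fun v => stab f v = r) :=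
    mem_filter.2 ⟨mem_univ _, stab_of_fix hfr⟩
  rw [he] at h1
  have h2 := (mem_filter.1 h1).2
  rw [stab_of_fix hfr] at h2
  exact h2

theorem blocksOf_nonempty {f : Fin n → Fin n} {Q : Finset (Fin n)} (hQ : Q ∈ blocksOf f) :
    Q.Nonempty := by
  obtain ⟨r, hr, rfl⟩ := Finset.mem_image.1 hQ
  exact ⟨r, mem_filter.2 ⟨mem_univ _, stab_of_fix (mem_filter.1 hr).2⟩⟩

theorem blocksOf_disj {f : Fin n → Fin n} {Q R : Finset (Fin n)} (hQ : Q ∈ blocksOf f)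
    (hR : R ∈ blocksOf f) (hne : Q ≠ R) : Q ∩ R = ∅ := by
  obtain ⟨r, hr, rfl⟩ := Finset.mem_image.1 hQ
  obtain ⟨r', hr', rfl⟩ := Finset.mem_image.1 hR
  rw [Finset.eq_empty_iff_forall_notMem]
  intro x hx
  rw [mem_inter, mem_filter, mem_filter] at hx
  exact hne (by rw [← hx.1.2, hx.2.2])

theorem blocksOf_sup {f : Fin n → Fin n} (hH : HasHeight f) :
    (blocksOf f).sup id = univ := by
  apply Finset.Subset.antisymm
  · intro x _
    exact mem_univ x
  · intro x _
    rw [Finset.mem_sup]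
    refine ⟨univ.filter (fun v => stab f v = stab f x), ?_, ?_⟩
    · rw [blocksOf]
      exact Finset.mem_image.2 ⟨stab f x, mem_filter.2 ⟨mem_univ _, stab_fix hH x⟩, rfl⟩
    · exact mem_filter.2 ⟨mem_univ _, rfl⟩

theorem restr_MT {f : Fin n → Fin n} (hH : HasHeight f) (hmin : Minimal f)
    {Q : Finset (Fin n)} (hQ : Q ∈ blocksOf f) :
    ForestOn Q (restr f Q) ∧ (rootsIn Q (restr f Q)).card = 1 ∧ Minimal (restr f Q) := by
  obtain ⟨r, hr, rfl⟩ := Finset.mem_image.1 hQ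
  have hfr : f r = r := (mem_filter.1 hr).2
  have hinv : ∀ x ∈ univ.filter (fun v => stab f v = r),
      f x ∈ univ.filter (fun v => stab f v = r) := by
    intro x hx
    refine mem_filter.2 ⟨mem_univ _, ?_⟩
    rw [stab_next hH]
    exact (mem_filter.1 hx).2
  have hrQ : r ∈ univ.filter (fun v => stab f v = r) :=
    mem_filter.2 ⟨mem_univ _, stab_of_fix hfr⟩
  refine ⟨⟨fun x hx => if_neg hx, fun x hx => ?_, ?_⟩, ?_, ?_⟩
  · rw [restr, if_pos hx]
    exact hinv x hx
  · obtain ⟨h, hh⟩ := hH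
    refine ⟨h, fun x => ?_⟩
    by_cases hx : x ∈ univ.filter (fun v => stab f v = r)
    · simp only [restr, if_pos hx]
      exact hh x
    · simp [restr, hx]
  · have : rootsIn (univ.filter (fun v => stab f v = r)) (restr f (univ.filter (fun v => stab f v = r))) = {r} := by
      ext x
      rw [rootsIn, mem_filter, Finset.mem_singleton]
      constructor
      · rintro ⟨hxQ, hrx⟩
        rw [restr, if_pos hxQ] at hrx
        rw [← (mem_filter.1 hxQ).2, stab_of_fix hrx]
      · rintro rfl
        exact ⟨hrQ, by rw [restr, if_pos hrQ]; exact hfr⟩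
    rw [this]
    exact Finset.card_singleton r
  · intro v h1 h2
    have hvQ : v ∈ univ.filter (fun v => stab f v = r) := by
      by_contra hvQ
      exact h1 (if_neg hvQ)
    have hrv : restr f (univ.filter (fun v => stab f v = r)) v = f v := by
      rw [restr, if_pos hvQ]
    have hfvQ : f v ∈ univ.filter (fun v => stab f v = r) := hinv v hvQ
    have hrfv : restr f (univ.filter (fun v => stab f v = r)) (f v) = f (f v) := by
      rw [restr, if_pos hfvQ]
    rw [hrv] at h1 h2 ⊢
    rw [hrfv] at h2
    exact hmin v h1 h2

theorem fiber_card (k : ℕ) (S : Finset (Finset (Fin n)))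
    (hSk : S.card = k) (hSne : ∀ Q ∈ S, Q.Nonempty)
    (hSdisj : ∀ Q ∈ S, ∀ R ∈ S, Q ≠ R → Q ∩ R = ∅) (hSsup : S.sup id = univ) :
    (univ.filter (fun f : Fin n → Fin n =>
      (HasHeight f ∧ (univ.filter (fun v => f v = v)).card = k ∧ Minimal f)
        ∧ blocksOf f = S)).card
    = ∏ Q ∈ S, cardMT Q := by
  have hU : ∀ (Q Q' : Finset (Fin n)) (x : Fin n), Q ∈ S → Q' ∈ S → x ∈ Q → x ∈ Q' →
      Q = Q' := by
    intro Q Q' x hQ hQ' hx hx'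
    by_contra hne
    have := hSdisj Q hQ Q' hQ' hne
    exact absurd (mem_inter.2 ⟨hx, hx'⟩) (by rw [this]; exact notMem_empty x)
  have hEx : ∀ x : Fin n, ∃ Q, Q ∈ S ∧ x ∈ Q := by
    intro x
    have : x ∈ S.sup id := by rw [hSsup]; exact mem_univ x
    rw [Finset.mem_sup] at this
    obtain ⟨Q, hQ, hx⟩ := this
    exact ⟨Q, hQ, hx⟩
  choose B hB1 hB2 using hEx
  have hpi : ∏ Q ∈ S, cardMT Q = #(S.pi (fun Q => univ.filter (fun f : Fin n → Fin n =>
      ForestOn Q f ∧ (rootsIn Q f).card = 1 ∧ Minimal f))) := by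
    rw [Finset.card_pi]
    exact Finset.prod_congr rfl fun Q _ => rfl
  rw [hpi]
  refine Finset.card_bij'
    (i := fun f _ => fun Q (_ : Q ∈ S) => restr f Q)
    (j := fun g _ => fun x => if hQ : B x ∈ S then g (B x) hQ x else x)
    ?_ ?_ ?_ ?_
  · -- forward membership
    intro f hf
    rw [mem_filter] at hf
    obtain ⟨-, ⟨hH, hk, hm⟩, hbl⟩ := hf
    rw [Finset.mem_pi]
    intro Q hQ
    rw [mem_filter]
    exact ⟨mem_univ _, restr_MT hH hm (hbl ▸ hQ)⟩
  · -- backward membership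
    intro g hg
    rw [Finset.mem_pi] at hg
    have hgQ : ∀ (Q) (hQ : Q ∈ S), ForestOn Q (g Q hQ) ∧ (rootsIn Q (g Q hQ)).card = 1
        ∧ Minimal (g Q hQ) := by
      intro Q hQ
      have := hg Q hQ
      rw [mem_filter] at this
      exact this.2
    set gl : Fin n → Fin n := fun x => if hQ : B x ∈ S then g (B x) hQ x else x with hgl
    have hgl2 : ∀ x, gl x = g (B x) (hB1 x) x := by
      intro x; rw [hgl]; simp only [dif_pos (hB1 x)]
    have hGL : ∀ (Q) (hQ : Q ∈ S) (x : Fin n), x ∈ Q → gl x = g Q hQ x := by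
      intro Q hQ x hx
      have hBQ : B x = Q := hU _ _ x (hB1 x) hQ (hB2 x) hx
      rw [hgl2]
      subst hBQ
      rfl
    have hglQ : ∀ (Q) (hQ : Q ∈ S) (x : Fin n), x ∈ Q → gl x ∈ Q := by
      intro Q hQ x hx
      rw [hGL Q hQ x hx]
      exact (hgQ Q hQ).1.2.1 x hx
    -- global height
    have hHgl : HasHeight gl := by
      choose hgt hht using fun (Q) (hQ : Q ∈ S) => (hgQ Q hQ).1.2.2
      refine ⟨fun x => hgt (B x) (hB1 x) x, fun x => ?_⟩
      rcases hht (B x) (hB1 x) x with h1 | h1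
      · left; rw [hgl2]; exact h1
      · right
        rw [← hgl2 x] at h1
        have hmem : gl x ∈ B x := hglQ (B x) (hB1 x) x (hB2 x)
        have hBB : B (gl x) = B x := hU _ _ (gl x) (hB1 (gl x)) (hB1 x) (hB2 (gl x)) hmem
        have hirr : ∀ (Q : Finset (Fin n)) (hQ : Q ∈ S) (hE : Q = B x),
            hgt Q hQ (gl x) = hgt (B x) (hB1 x) (gl x) := by
          intro Q hQ hE
          subst hE
          rfl
        show hgt (B (gl x)) (hB1 (gl x)) (gl x) < hgt (B x) (hB1 x) x
        rw [hirr (B (gl x)) (hB1 (gl x)) hBB]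
        exact h1
    -- roots within each block
    have hrootsQ : ∀ (Q) (hQ : Q ∈ S), Q.filter (fun v => gl v = v)
        = rootsIn Q (g Q hQ) := by
      intro Q hQ
      ext x
      rw [mem_filter, rootsIn, mem_filter]
      constructor
      · rintro ⟨hx, he⟩
        exact ⟨hx, by rw [← hGL Q hQ x hx]; exact he⟩
      · rintro ⟨hx, he⟩
        exact ⟨hx, by rw [hGL Q hQ x hx]; exact he⟩
    have hbiU : Finset.univ = S.biUnion id := by
      rw [← Finset.sup_eq_biUnion, hSsup]
    have hroots : (univ.filter (fun v => gl v = v)).card = k := by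
      rw [hbiU, Finset.filter_biUnion]
      rw [Finset.card_biUnion]
      · have hone : ∀ Q ∈ S, #(Finset.filter (fun v => gl v = v) (id Q)) = 1 := by
          intro Q hQ
          show #(Finset.filter (fun v => gl v = v) Q) = 1
          rw [hrootsQ Q hQ]
          exact (hgQ Q hQ).2.1
        rw [Finset.sum_congr rfl hone, Finset.sum_const, smul_eq_mul, mul_one, hSk]
      · intro Q hQ R hR hne
        simp only [id_eq]
        rw [Function.onFun, Finset.disjoint_left]
        intro x hx hx'
        have := hSdisj Q hQ R hR hne
        exact absurd (mem_inter.2 ⟨mem_of_mem_filter _ hx, mem_of_mem_filter _ hx'⟩)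
          (by rw [this]; exact notMem_empty x)
    -- minimality
    have hmingl : Minimal gl := by
      intro v h1 h2
      have hQ := hB1 v
      have hv := hB2 v
      have e1 : gl v = g (B v) hQ v := hgl2 v
      have h1' : g (B v) hQ v ≠ v := by rw [← e1]; exact h1
      have hgv : gl v ∈ B v := hglQ (B v) hQ v hv
      have e2 : gl (gl v) = g (B v) hQ (gl v) := hGL (B v) hQ (gl v) hgv
      have h2' : g (B v) hQ (g (B v) hQ v) = g (B v) hQ v := by
        calc g (B v) hQ (g (B v) hQ v) = g (B v) hQ (gl v) := by rw [← e1]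
          _ = gl (gl v) := e2.symm
          _ = gl v := h2
          _ = g (B v) hQ v := e1
      have := (hgQ (B v) hQ).2.2 v h1' h2'
      rw [e1]
      exact this
    -- blocks
    have hstabQ : ∀ (Q) (hQ : Q ∈ S) (x : Fin n), x ∈ Q → stab gl x ∈ Q ∧ gl (stab gl x) = stab gl x := by
      intro Q hQ x hx
      exact ⟨stab_mem hHgl (hglQ Q hQ) x hx, stab_fix hHgl x⟩
    have huniqQ : ∀ (Q) (hQ : Q ∈ S) (x y : Fin n), x ∈ Q → y ∈ Q → gl x = x → gl y = y → x = y := by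
      intro Q hQ x y hx hy hgx hgy
      have h1 : x ∈ rootsIn Q (g Q hQ) := by rw [← hrootsQ Q hQ]; exact mem_filter.2 ⟨hx, hgx⟩
      have h2 : y ∈ rootsIn Q (g Q hQ) := by rw [← hrootsQ Q hQ]; exact mem_filter.2 ⟨hy, hgy⟩
      exact Finset.card_le_one.1 (le_of_eq (hgQ Q hQ).2.1) _ h1 _ h2
    have hfibeq : ∀ (Q) (hQ : Q ∈ S) (r : Fin n), r ∈ Q → gl r = r →
        univ.filter (fun v => stab gl v = r) = Q := by
      intro Q hQ r hrQ hglr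
      ext x
      rw [mem_filter]
      constructor
      · rintro ⟨-, hst⟩
        have hx2 := hB2 x
        have hQ2 := hB1 x
        obtain ⟨hm1, hm2⟩ := hstabQ (B x) hQ2 x hx2
        rw [hst] at hm1 hm2
        have : B x = Q := hU _ _ r hQ2 hQ hm1 hrQ
        rw [← this]
        exact hx2
      · intro hx
        refine ⟨mem_univ _, ?_⟩
        obtain ⟨hm1, hm2⟩ := hstabQ Q hQ x hx
        exact huniqQ Q hQ _ _ hm1 hrQ hm2 hglr
    have hblocks : blocksOf gl = S := by
      ext Q
      constructor
      · intro hQ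
        obtain ⟨r, hr, rfl⟩ := Finset.mem_image.1 hQ
        have hr2 : gl r = r := (mem_filter.1 hr).2
        have hQ2 := hB1 r
        have hr3 : r ∈ B r := hB2 r
        rw [hfibeq (B r) hQ2 r hr3 hr2]
        exact hQ2
      · intro hQ
        have hne : (rootsIn Q (g Q hQ)).Nonempty := by
          rw [← Finset.card_pos, (hgQ Q hQ).2.1]
          omega
        obtain ⟨r, hr⟩ := hne
        rw [rootsIn, mem_filter] at hr
        have hglr : gl r = r := by rw [hGL Q hQ r hr.1]; exact hr.2
        rw [blocksOf]
        apply Finset.mem_image.2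
        exact ⟨r, mem_filter.2 ⟨mem_univ _, hglr⟩, hfibeq Q hQ r hr.1 hglr⟩
    rw [mem_filter]
    exact ⟨mem_univ _, ⟨hHgl, hroots, hmingl⟩, hblocks⟩
  · -- left inverse
    intro f hf
    rw [mem_filter] at hf
    obtain ⟨-, ⟨hH, hk, hm⟩, hbl⟩ := hf
    funext x
    simp only [dif_pos (hB1 x)]
    show restr f (B x) x = f x
    rw [restr, if_pos (hB2 x)]
  · -- right inverse
    intro g hg
    rw [Finset.mem_pi] at hg
    funext Q hQ x
    simp only [restr]
    by_cases hx : x ∈ Q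
    · rw [if_pos hx]
      have hBQ : B x = Q := hU _ _ x (hB1 x) hQ (hB2 x) hx
      rw [dif_pos (hB1 x)]
      subst hBQ
      rfl
    · rw [if_neg hx]
      have := hg Q hQ
      rw [mem_filter] at this
      exact (this.2.1.1 x hx).symm


end AinfProof

/- We encode a set of rooted labeled trees whose vertex sets partition `[n]` as its
parent function `f : Fin n → Fin n`: `f v` is the parent of `v`, roots being the
fixed points.  Such a function corresponds to a forest of rooted trees exactly when
it is acyclic, i.e. every vertex reaches a fixed point under iteration.  A tree is
minimal (its maximal decreasing subtree is just the root) exactly when every child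
`v` of a root `f v` has a larger label than the root. -/

/-- `A^∞_{n,k}`, the sum over set partitions `{Q_1, …, Q_k}` of `[n]` into `k`
parts of `Π_i (|Q_i| - 1)^(|Q_i| - 1)`, equals the number of sets of `k` rooted
labeled trees whose vertex sets form a set partition of `[n]`, each of which is
minimal (its maximal decreasing subtree consists of the root alone). -/
theorem Ainf_eq_card_minimal_forests (n k : ℕ) :
    (∑ S ∈ (Finset.univ : Finset (Finset (Finset (Fin n)))).filter
        (fun S => S.card = k ∧ (∀ Q ∈ S, Q.Nonempty) ∧
          (∀ Q ∈ S, ∀ R ∈ S, Q ≠ R → Q ∩ R = ∅) ∧ S.sup id = Finset.univ),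
      ∏ Q ∈ S, (Q.card - 1) ^ (Q.card - 1)) =
    Nat.card {f : Fin n → Fin n //
      (∀ v, ∃ m, f^[m + 1] v = f^[m] v) ∧
      (Finset.univ.filter (fun v => f v = v)).card = k ∧
      (∀ v, f v ≠ v → f (f v) = f v → f v < v)} := by
  classical
  symm
  rw [Nat.card_eq_fintype_card, Fintype.card_subtype]
  have hfc : (Finset.univ.filter (fun f : Fin n → Fin n =>
      (∀ v, ∃ m, f^[m + 1] v = f^[m] v) ∧
      (Finset.univ.filter (fun v => f v = v)).card = k ∧
      (∀ v, f v ≠ v → f (f v) = f v → f v < v)))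
      = Finset.univ.filter (fun f : Fin n → Fin n =>
        AinfProof.HasHeight f ∧ (Finset.univ.filter (fun v => f v = v)).card = k ∧
        AinfProof.Minimal f) := by
    apply Finset.filter_congr
    intro f _
    exact and_congr (AinfProof.hasHeight_iff f) Iff.rfl
  rw [hfc]
  rw [Finset.card_eq_sum_card_fiberwise (f := AinfProof.blocksOf)
    (t := (Finset.univ : Finset (Finset (Finset (Fin n)))).filter
        (fun S => S.card = k ∧ (∀ Q ∈ S, Q.Nonempty) ∧
          (∀ Q ∈ S, ∀ R ∈ S, Q ≠ R → Q ∩ R = ∅) ∧ S.sup id = Finset.univ)) ?hmap]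
  case hmap =>
    intro f hf
    rw [Finset.mem_coe] at hf ⊢
    rw [Finset.mem_filter] at hf
    obtain ⟨-, hH, hk, hm⟩ := hf
    rw [Finset.mem_filter]
    refine ⟨Finset.mem_univ _, ?_, ?_, ?_, ?_⟩
    · rw [AinfProof.blocksOf_card]
      exact hk
    · exact fun Q hQ => AinfProof.blocksOf_nonempty hQ
    · exact fun Q hQ R hR hne => AinfProof.blocksOf_disj hQ hR hne
    · exact AinfProof.blocksOf_sup hH
  refine Finset.sum_congr rfl fun S hS => ?_
  rw [Finset.mem_filter] at hS
  obtain ⟨-, hSk, hSne, hSdisj, hSsup⟩ := hS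
  rw [Finset.filter_filter]
  rw [AinfProof.fiber_card k S hSk hSne hSdisj hSsup]
  exact Finset.prod_congr rfl fun Q hQ => AinfProof.cardMT_formula Q (hSne Q hQ)
end

section
/- There is a bijection between the set M_{n,k} of sets of k minimal rooted labeled trees whose vertex sets form a set partition of [n], and the set T'_{n,k} of rooted labeled non-planar trees on [n] whose maximal decreasing subtree is a chain with k vertices. -/
/- We encode rooted labeled trees (and forests of such trees) on the vertex set
`[n]` by their parent function `f : Fin n → Fin n`: `f v` is the parent of `v`,
and roots are the fixed points.  Such a function corresponds to a forest of
rooted trees exactly when it is acyclic (every vertex reaches a fixed point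
under iteration); a single rooted tree corresponds to exactly one fixed point. -/

/-- `v` belongs to the maximal decreasing subtree `MD(T)` of the tree with parent
function `f`: along the path from `v` to the root every (non-trivial) step goes to
a vertex with a larger label. -/
def InMD {n : ℕ} (f : Fin n → Fin n) (v : Fin n) : Prop :=
  ∀ m, f^[m + 1] v ≠ f^[m] v → f^[m] v < f^[m + 1] v

/-! Linking the roots of a minimal forest into a chain, each root becoming a child of the next
larger root, produces a tree whose maximal decreasing subtree is exactly that chain of roots:
the root chain climbs, while every other vertex `v` is not in `MD`, since its path reaches a
root through a step `f w < w` (the trees were minimal). Conversely, cutting every edge of `MD(T)`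
gives back the forest, and the chain can be recovered from its vertex set alone because in a
chain-shaped `MD(T)` the parent of each vertex of `MD(T)` other than the root is the next larger
vertex of `MD(T)`. -/

open Function

theorem apply_le_of_mem_of_lt {α : Type*} [LinearOrder α] [WellFoundedGT α] {S : Set α}
    {σ : α → α} (maps : ∀ v ∈ S, σ v ∈ S) (lt_apply : ∀ v ∈ S, σ v ≠ v → v < σ v)
    (le_of_fixed : ∀ v ∈ S, σ v = v → ∀ u ∈ S, u ≤ v)
    (injOn : Set.InjOn σ {v | v ∈ S ∧ σ v ≠ v})
    {v : α} (hv : v ∈ S) (hmove : σ v ≠ v) {u : α} (hu : u ∈ S) (hvu : v < u) : σ v ≤ u := by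
  induction v using WellFoundedGT.induction generalizing u with
  | ind v ih =>
  by_contra! huσ
  -- climbing from `u` under `σ` would stay strictly between `v` and `σ v` forever
  suffices between : ∀ w ∈ S, v < w → w < σ v → False from between u hu hvu huσ
  intro w
  induction w using WellFoundedGT.induction with
  | ind w ihw =>
  intro hw hvw hwσ
  have hwmove : σ w ≠ w := fun h => (le_of_fixed w hw h (σ v) (maps v hv)).not_gt hwσ
  have hle : σ w ≤ σ v := ih w hvw hw hwmove (maps v hv) hwσ
  have hne : σ w ≠ σ v := fun h => hvw.ne' (injOn ⟨hw, hwmove⟩ ⟨hv, hmove⟩ h)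
  have hwσw : w < σ w := lt_apply w hw hwmove
  exact ihw (σ w) hwσw (maps w hw) (hvw.trans hwσw) (hle.lt_of_ne hne)

namespace LabeledForest

variable {n k : ℕ}

def roots (f : Fin n → Fin n) : Finset (Fin n) := Finset.univ.filter fun v => f v = v

@[simp]
lemma mem_roots {f : Fin n → Fin n} {v : Fin n} : v ∈ roots f ↔ f v = v := by
  simp [roots]

lemma coe_roots (f : Fin n → Fin n) : (roots f : Set (Fin n)) = {v | f v = v} := by
  ext v; simp

def ReachesRoot (f : Fin n → Fin n) (v : Fin n) : Prop := ∃ m, f^[m + 1] v = f^[m] v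

def IsForest (f : Fin n → Fin n) : Prop := ∀ v, ReachesRoot f v

def IsMinimalForest (k : ℕ) (f : Fin n → Fin n) : Prop :=
  IsForest f ∧ (roots f).card = k ∧ ∀ v, f v ≠ v → f (f v) = f v → f v < v

def IsChainMDTree (k : ℕ) (g : Fin n → Fin n) : Prop :=
  IsForest g ∧ (roots g).card = 1 ∧ Nat.card {v // InMD g v} = k ∧
    ∀ u v, InMD g u → InMD g v → g u ≠ u → g v ≠ v → g u = g v → u = v

section Forest

variable {f : Fin n → Fin n} {v : Fin n}

lemma reachesRoot_of_apply_eq (h : f v = v) : ReachesRoot f v := ⟨0, h⟩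

lemma ReachesRoot.of_apply (h : ReachesRoot f (f v)) : ReachesRoot f v :=
  let ⟨m, hm⟩ := h; ⟨m + 1, hm⟩

theorem IsForest.induction (hf : IsForest f) {P : Fin n → Prop} (root : ∀ v, f v = v → P v)
    (step : ∀ v, f v ≠ v → P (f v) → P v) (v : Fin n) : P v := by
  obtain ⟨m, hm⟩ := hf v
  induction m generalizing v with
  | zero => exact root v hm
  | succ m ih =>
    by_cases hv : f v = v
    · exact root v hv
    · exact step v hv (ih (f v) hm)

end Forest

section MaximalDecreasingSubtree

variable {g : Fin n → Fin n} {v : Fin n}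

lemma inMD_of_apply_eq (h : g v = v) : InMD g v :=
  fun m hm => (hm (by simp [iterate_fixed h])).elim

lemma inMD_iff : InMD g v ↔ v ≤ g v ∧ InMD g (g v) := by
  refine ⟨fun h => ⟨?_, fun m => h (m + 1)⟩, fun ⟨hle, h⟩ m => ?_⟩
  · by_cases hv : g v = v
    · exact hv.ge
    · exact (h 0 hv).le
  · cases m with
    | zero => exact fun hm => hle.lt_of_ne (Ne.symm hm)
    | succ m => exact h m

lemma inMD_apply (h : InMD g v) : InMD g (g v) := (inMD_iff.1 h).2

lemma lt_apply_of_inMD (h : InMD g v) (hne : g v ≠ v) : v < g v :=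
  (inMD_iff.1 h).1.lt_of_ne (Ne.symm hne)

lemma natCard_inMD_eq_card_roots {h : Fin n → Fin n} (hgh : ∀ v, InMD g v ↔ h v = v) :
    Nat.card {v // InMD g v} = (roots h).card := by
  rw [← Nat.card_eq_finsetCard]
  exact Nat.card_congr (Equiv.subtypeEquivRight fun v => (hgh v).trans mem_roots.symm)

lemma le_of_inMD_of_apply_eq (hg : IsForest g) (hone : (roots g).card = 1) {u : Fin n}
    (hu : InMD g u) (hv : g v = v) : u ≤ v := by
  obtain ⟨r, hr⟩ := Finset.card_eq_one.1 hone
  have eq_r : ∀ w, g w = w → w = r := fun w hw => Finset.mem_singleton.1 (hr ▸ mem_roots.2 hw)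
  rw [eq_r v hv]
  revert hu
  refine hg.induction (P := fun u => InMD g u → u ≤ r) (fun u hu _ => (eq_r u hu).le)
    (fun u _ ih hu => ?_) u
  obtain ⟨hle, hu'⟩ := inMD_iff.1 hu
  exact hle.trans (ih hu')

lemma IsChainMDTree.apply_le_of_inMD (hg : IsChainMDTree k g) (hv : InMD g v) (hmove : g v ≠ v)
    {u : Fin n} (hu : InMD g u) (hvu : v < u) : g v ≤ u :=
  apply_le_of_mem_of_lt (S := {u | InMD g u}) (fun _ hw => inMD_apply hw)
    (fun _ hw hne => lt_apply_of_inMD hw hne)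
    (fun _ _ hw _ hu => le_of_inMD_of_apply_eq hg.1 hg.2.1 hu hw)
    (fun u ⟨hu, hu'⟩ w ⟨hw, hw'⟩ h => hg.2.2.2 u w hu hw hu' hw' h) hv hmove hu hvu

end MaximalDecreasingSubtree

section LinkRoots

def rootsAbove (f : Fin n → Fin n) (v : Fin n) : Finset (Fin n) :=
  Finset.univ.filter fun u => f u = u ∧ v < u

def linkRoots (f : Fin n → Fin n) (v : Fin n) : Fin n :=
  if h : f v = v ∧ (rootsAbove f v).Nonempty then (rootsAbove f v).min' h.2 else f v

variable {f : Fin n → Fin n} {v : Fin n}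

lemma linkRoots_of_apply_ne (hv : f v ≠ v) : linkRoots f v = f v :=
  dif_neg fun h => hv h.1

lemma linkRoots_eq_self_of_isGreatest (hv : IsGreatest {u | f u = u} v) : linkRoots f v = v := by
  refine (dif_neg fun ⟨_, u, hu⟩ => ?_).trans hv.1
  simp only [rootsAbove, Finset.mem_filter, Finset.mem_univ, true_and] at hu
  exact (hv.2 hu.1).not_gt hu.2

lemma isLeast_linkRoots (hv : f v = v) (habove : ∃ u, f u = u ∧ v < u) :
    IsLeast {u | f u = u ∧ v < u} (linkRoots f v) := by
  have hne : (rootsAbove f v).Nonempty := by simpa [rootsAbove, Finset.Nonempty] using habove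
  rw [linkRoots, dif_pos ⟨hv, hne⟩]
  simpa [rootsAbove] using (rootsAbove f v).isLeast_min' hne

lemma exists_root_above_of_linkRoots_ne (hv : f v = v) (hne : linkRoots f v ≠ v) :
    ∃ u, f u = u ∧ v < u := by
  by_contra! h
  exact hne (linkRoots_eq_self_of_isGreatest ⟨hv, fun u hu => h u hu⟩)

lemma linkRoots_eq_self_iff : linkRoots f v = v ↔ IsGreatest {u | f u = u} v := by
  refine ⟨fun h => ?_, linkRoots_eq_self_of_isGreatest⟩
  have hv : f v = v := by_contra fun hv => hv (linkRoots_of_apply_ne hv ▸ h)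
  refine ⟨hv, fun u hu => not_lt.1 fun hvu => ?_⟩
  exact (isLeast_linkRoots hv ⟨u, hu, hvu⟩).1.2.ne' h

lemma apply_linkRoots_of_apply_eq (hv : f v = v) :
    f (linkRoots f v) = linkRoots f v ∧ v ≤ linkRoots f v := by
  by_cases hne : linkRoots f v = v
  · rw [hne]
    exact ⟨hv, le_rfl⟩
  · exact ((isLeast_linkRoots hv (exists_root_above_of_linkRoots_ne hv hne)).1).imp_right le_of_lt

lemma linkRoots_le_of_lt {u : Fin n} (hv : f v = v) (hu : f u = u) (hvu : v < u) :
    linkRoots f v ≤ u :=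
  (isLeast_linkRoots hv ⟨u, hu, hvu⟩).2 ⟨hu, hvu⟩

lemma roots_linkRoots (hne : (roots f).Nonempty) :
    roots (linkRoots f) = {(roots f).max' hne} := by
  have hmax := (roots f).isGreatest_max' hne
  rw [coe_roots] at hmax
  ext v
  rw [mem_roots, linkRoots_eq_self_iff, Finset.mem_singleton]
  exact ⟨fun h => h.unique hmax, fun h => h ▸ hmax⟩

lemma isForest_linkRoots (hf : IsForest f) : IsForest (linkRoots f) := by
  have hroots : ∀ v, f v = v → ReachesRoot (linkRoots f) v := by
    intro v
    induction v using WellFoundedGT.induction with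
    | ind v ih =>
    intro hv
    obtain ⟨hroot, hle⟩ := apply_linkRoots_of_apply_eq hv
    rcases hle.eq_or_lt with h | h
    · exact reachesRoot_of_apply_eq h.symm
    · exact (ih _ h hroot).of_apply
  refine hf.induction hroots fun v hv h => ?_
  rw [← linkRoots_of_apply_ne hv] at h
  exact h.of_apply

lemma inMD_linkRoots_of_apply_eq (hv : f v = v) : InMD (linkRoots f) v := by
  induction v using WellFoundedGT.induction with
  | ind v ih =>
  obtain ⟨hroot, hle⟩ := apply_linkRoots_of_apply_eq hv
  rcases hle.eq_or_lt with h | h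
  · exact inMD_of_apply_eq h.symm
  · exact inMD_iff.2 ⟨hle, ih _ h hroot⟩

lemma not_inMD_linkRoots (hf : IsForest f) (hmin : ∀ v, f v ≠ v → f (f v) = f v → f v < v)
    (hv : f v ≠ v) : ¬ InMD (linkRoots f) v := by
  revert hv
  refine hf.induction (P := fun v => f v ≠ v → ¬ InMD (linkRoots f) v)
    (fun v hv hne => (hne hv).elim) (fun v hv ih _ hMD => ?_) v
  rw [inMD_iff, linkRoots_of_apply_ne hv] at hMD
  by_cases hroot : f (f v) = f v
  · exact (hmin v hv hroot).not_ge hMD.1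
  · exact ih hroot hMD.2

lemma inMD_linkRoots_iff (hf : IsForest f) (hmin : ∀ v, f v ≠ v → f (f v) = f v → f v < v) :
    InMD (linkRoots f) v ↔ f v = v :=
  ⟨fun h => by_contra fun hv => not_inMD_linkRoots hf hmin hv h, inMD_linkRoots_of_apply_eq⟩

lemma eq_of_linkRoots_eq {u : Fin n} (hu : f u = u) (hv : f v = v) (hu' : linkRoots f u ≠ u)
    (hv' : linkRoots f v ≠ v) (h : linkRoots f u = linkRoots f v) : u = v := by
  have lt_link : ∀ w, f w = w → linkRoots f w ≠ w → w < linkRoots f w := fun w hw hw' =>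
    (apply_linkRoots_of_apply_eq hw).2.lt_of_ne (Ne.symm hw')
  rcases lt_trichotomy u v with huv | huv | huv
  · exact ((h ▸ linkRoots_le_of_lt hu hv huv).not_gt (lt_link v hv hv')).elim
  · exact huv
  · exact ((h ▸ linkRoots_le_of_lt hv hu huv).not_gt (lt_link u hu hu')).elim

lemma IsMinimalForest.isChainMDTree_linkRoots (hk : 1 ≤ k) (hf : IsMinimalForest k f) :
    IsChainMDTree k (linkRoots f) := by
  obtain ⟨hforest, hcard, hmin⟩ := hf
  have hne : (roots f).Nonempty := Finset.card_pos.1 (hcard ▸ hk)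
  refine ⟨isForest_linkRoots hforest, ?_, ?_, fun u v hu hv => ?_⟩
  · rw [roots_linkRoots hne, Finset.card_singleton]
  · rw [natCard_inMD_eq_card_roots fun v => inMD_linkRoots_iff hforest hmin, hcard]
  · rw [inMD_linkRoots_iff hforest hmin] at hu hv
    exact eq_of_linkRoots_eq hu hv

end LinkRoots

section CutMD

open Classical in
noncomputable def cutMD (g : Fin n → Fin n) (v : Fin n) : Fin n :=
  if InMD g v then v else g v

variable {g : Fin n → Fin n} {v : Fin n}

lemma cutMD_of_not_inMD (h : ¬ InMD g v) : cutMD g v = g v := by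
  simp [cutMD, h]

lemma cutMD_eq_self_iff : cutMD g v = v ↔ InMD g v := by
  by_cases h : InMD g v
  · simp [cutMD, h]
  · rw [cutMD_of_not_inMD h]
    exact iff_of_false (fun hv => h (inMD_of_apply_eq hv)) h

lemma isForest_cutMD (hg : IsForest g) : IsForest (cutMD g) := by
  refine hg.induction
    (fun v hv => reachesRoot_of_apply_eq (cutMD_eq_self_iff.2 (inMD_of_apply_eq hv)))
    fun v _ h => ?_
  by_cases hv : InMD g v
  · exact reachesRoot_of_apply_eq (cutMD_eq_self_iff.2 hv)
  · rw [← cutMD_of_not_inMD hv] at h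
    exact h.of_apply

lemma cutMD_lt_of_apply_eq (hne : cutMD g v ≠ v) (hroot : cutMD g (cutMD g v) = cutMD g v) :
    cutMD g v < v := by
  have hv : ¬ InMD g v := fun h => hne (cutMD_eq_self_iff.2 h)
  rw [cutMD_of_not_inMD hv] at hne hroot ⊢
  exact lt_of_not_ge fun hle => hv (inMD_iff.2 ⟨hle, cutMD_eq_self_iff.1 hroot⟩)

lemma IsChainMDTree.isMinimalForest_cutMD (hg : IsChainMDTree k g) : IsMinimalForest k (cutMD g) :=
  ⟨isForest_cutMD hg.1,
    (natCard_inMD_eq_card_roots fun _ => cutMD_eq_self_iff.symm).symm.trans hg.2.2.1,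
    fun _ => cutMD_lt_of_apply_eq⟩

end CutMD

lemma IsMinimalForest.cutMD_linkRoots {f : Fin n → Fin n} (hf : IsMinimalForest k f) :
    cutMD (linkRoots f) = f := by
  funext v
  by_cases hv : f v = v
  · rw [cutMD_eq_self_iff.2 (inMD_linkRoots_of_apply_eq hv), hv]
  · rw [cutMD_of_not_inMD (not_inMD_linkRoots hf.1 hf.2.2 hv), linkRoots_of_apply_ne hv]

lemma IsChainMDTree.linkRoots_cutMD {g : Fin n → Fin n} (hg : IsChainMDTree k g) :
    linkRoots (cutMD g) = g := by
  funext v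
  by_cases hv : InMD g v
  · have hroot : cutMD g v = v := cutMD_eq_self_iff.2 hv
    by_cases hfix : g v = v
    · rw [hfix, linkRoots_eq_self_iff]
      exact ⟨hroot, fun u hu =>
        le_of_inMD_of_apply_eq hg.1 hg.2.1 (cutMD_eq_self_iff.1 hu) hfix⟩
    · have hnext : IsLeast {u | cutMD g u = u ∧ v < u} (g v) :=
        ⟨⟨cutMD_eq_self_iff.2 (inMD_apply hv), lt_apply_of_inMD hv hfix⟩,
          fun u ⟨hu, hvu⟩ => hg.apply_le_of_inMD hv hfix (cutMD_eq_self_iff.1 hu) hvu⟩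
      exact (isLeast_linkRoots hroot ⟨g v, hnext.1⟩).unique hnext
  · have hmove : cutMD g v ≠ v := mt cutMD_eq_self_iff.1 hv
    rw [linkRoots_of_apply_ne hmove, cutMD_of_not_inMD hv]

noncomputable def minimalForestEquivChainMDTree (hk : 1 ≤ k) :
    {f : Fin n → Fin n // IsMinimalForest k f} ≃ {g : Fin n → Fin n // IsChainMDTree k g} where
  toFun f := ⟨linkRoots f, f.2.isChainMDTree_linkRoots hk⟩
  invFun g := ⟨cutMD g, g.2.isMinimalForest_cutMD⟩
  left_inv f := Subtype.ext (IsMinimalForest.cutMD_linkRoots f.2)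
  right_inv g := Subtype.ext (IsChainMDTree.linkRoots_cutMD g.2)

end LabeledForest

theorem minimal_forests_equiv_chain_MD_trees_general (n k : ℕ) (hk : 1 ≤ k) :
    Nonempty
      ({f : Fin n → Fin n //
          (∀ v, ∃ m, f^[m + 1] v = f^[m] v) ∧
          (Finset.univ.filter (fun v => f v = v)).card = k ∧
          (∀ v, f v ≠ v → f (f v) = f v → f v < v)} ≃
        {f : Fin n → Fin n //
          (∀ v, ∃ m, f^[m + 1] v = f^[m] v) ∧
          (Finset.univ.filter (fun v => f v = v)).card = 1 ∧
          Nat.card {v : Fin n // InMD f v} = k ∧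
          (∀ u v, InMD f u → InMD f v → f u ≠ u → f v ≠ v → f u = f v → u = v)}) :=
  ⟨LabeledForest.minimalForestEquivChainMDTree hk⟩

/-- Bijection between the set `M_{n,k}` of sets of `k` minimal rooted labeled trees
whose vertex sets form a set partition of `[n]` (encoded as acyclic parent functions
with `k` fixed points whose roots have no smaller-labeled children), and the set
`T'_{n,k}` of rooted labeled trees on `[n]` whose maximal decreasing subtree is a
chain with `k` vertices (encoded as acyclic parent functions with one fixed point,
whose maximal decreasing subtree has `k` vertices and is a path, i.e. every vertex
of it has at most one child inside it). -/
theorem minimal_forests_equiv_chain_MD_trees (n k : ℕ) (hk : 1 ≤ k) (hkn : k ≤ n) :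
    Nonempty
      ({f : Fin n → Fin n //
          (∀ v, ∃ m, f^[m + 1] v = f^[m] v) ∧
          (Finset.univ.filter (fun v => f v = v)).card = k ∧
          (∀ v, f v ≠ v → f (f v) = f v → f v < v)} ≃
        {f : Fin n → Fin n //
          (∀ v, ∃ m, f^[m + 1] v = f^[m] v) ∧
          (Finset.univ.filter (fun v => f v = v)).card = 1 ∧
          Nat.card {v : Fin n // InMD f v} = k ∧
          (∀ u v, InMD f u → InMD f v → f u ≠ u → f v ≠ v → f u = f v → u = v)}) :=
  minimal_forests_equiv_chain_MD_trees_general n k hk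
end

section
/- The Foata–Riordan map φ sending a parking function u of length n to the function f : [n] → [n] defined by f(i) = i if u_i = 1 and f(i) = Std(u)^{-1}(u_i - 1) otherwise, is a bijection from parking functions of length n onto acyclic functions [n] → [n] (i.e., functions whose functional graph, with non-fixed-point edges, is a forest rooted at the fixed points). -/
/-- The rank of position `i` in the standardization of `u`: the standardization
`Std(u)` sends `i` to `prank u i + 1`. -/
def prank {n : ℕ} (u : Fin n → ℕ+) (i : Fin n) : ℕ :=
  (Finset.univ.filter (fun j => u j < u i ∨ (u j = u i ∧ j < i))).card

/-- The Foata–Riordan map: `φ(u)(i) = i` if `u_i = 1`, and otherwise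
`φ(u)(i) = Std(u)⁻¹(u_i − 1)`, the position whose standardized value is `u_i − 1`. -/
noncomputable def foata {n : ℕ} (u : Fin n → ℕ+) : Fin n → Fin n := fun i =>
  if (u i : ℕ) = 1 then i
  else
    haveI : Nonempty (Fin n) := ⟨i⟩
    Function.invFun (fun j : Fin n => prank u j + 1) ((u i : ℕ) - 1)



section RankLemmas
variable {n : ℕ} {α : Type*} [LinearOrder α]

lemma card_key_lt_lt_iff (key : Fin n → α) (j i : Fin n) :
    (Finset.univ.filter (fun k => key k < key j)).card <
      (Finset.univ.filter (fun k => key k < key i)).card ↔ key j < key i := by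
  constructor
  · intro h
    by_contra h'
    push_neg at h'
    have hsub : (Finset.univ.filter (fun k => key k < key i)) ⊆
        (Finset.univ.filter (fun k => key k < key j)) := by
      intro k hk
      simp only [Finset.mem_filter, Finset.mem_univ, true_and] at *
      exact lt_of_lt_of_le hk h'
    exact absurd (Finset.card_le_card hsub) (by omega)
  · intro h
    apply Finset.card_lt_card
    constructor
    · intro k hk
      simp only [Finset.mem_filter, Finset.mem_univ, true_and] at *
      exact lt_trans hk h
    · intro hsub
      have := hsub (Finset.mem_filter.mpr ⟨Finset.mem_univ j, h⟩)
      simp only [Finset.mem_filter] at this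
      exact lt_irrefl _ this.2

lemma card_key_lt_eq_iff (key : Fin n → α) (j i : Fin n) :
    (Finset.univ.filter (fun k => key k < key j)).card =
      (Finset.univ.filter (fun k => key k < key i)).card ↔ key j = key i := by
  have h1 := card_key_lt_lt_iff key j i
  have h2 := card_key_lt_lt_iff key i j
  constructor
  · intro h
    rcases lt_trichotomy (key j) (key i) with hh | hh | hh
    · exact absurd (h1.mpr hh) (by omega)
    · exact hh
    · exact absurd (h2.mpr hh) (by omega)
  · intro h
    rcases lt_trichotomy ((Finset.univ.filter (fun k => key k < key j)).card)
      ((Finset.univ.filter (fun k => key k < key i)).card) with hh | hh | hh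
    · exact absurd (h1.mp hh) (by rw [h]; exact lt_irrefl _)
    · exact hh
    · exact absurd (h2.mp hh) (by rw [h]; exact lt_irrefl _)

lemma count_lt_of_inj (r : Fin n → ℕ) (hinj : Function.Injective r)
    (hlt : ∀ j, r j < n) (i : ℕ) (hi : i ≤ n) :
    (Finset.univ.filter (fun j => r j < i)).card = i := by
  set e : Fin n → Fin n := fun j => ⟨r j, hlt j⟩ with he
  have heinj : Function.Injective e := by
    intro a b hab
    exact hinj (congrArg Fin.val hab)
  have hesurj : Function.Surjective e := Finite.surjective_of_injective heinj
  have step1 : (Finset.univ.filter (fun j => r j < i)).card =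
      (Finset.univ.filter (fun k : Fin n => (k : ℕ) < i)).card := by
    apply Finset.card_bij (fun j _ => e j)
    · intro a ha
      simp only [Finset.mem_filter, Finset.mem_univ, true_and] at *
      exact ha
    · intro a _ b _ hab
      exact heinj hab
    · intro b hb
      obtain ⟨a, rfl⟩ := hesurj b
      simp only [Finset.mem_filter, Finset.mem_univ, true_and] at *
      exact ⟨a, hb, rfl⟩
  have step2 : (Finset.univ.filter (fun k : Fin n => (k : ℕ) < i)).card = i := by
    rcases lt_or_eq_of_le hi with hi' | hi'
    · have : Finset.univ.filter (fun k : Fin n => (k : ℕ) < i) = Finset.Iio ⟨i, hi'⟩ := by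
        ext k
        simp [Fin.lt_def]
      rw [this, Fin.card_Iio]
    · rw [hi']
      have : Finset.univ.filter (fun k : Fin n => (k : ℕ) < n) = Finset.univ := by
        ext k
        simp [k.isLt]
      rw [this, Finset.card_univ, Fintype.card_fin]
  rw [step1, step2]

lemma surj_of_inj (r : Fin n → ℕ) (hinj : Function.Injective r)
    (hlt : ∀ j, r j < n) (k : ℕ) (hk : k < n) : ∃ j, r j = k := by
  set e : Fin n → Fin n := fun j => ⟨r j, hlt j⟩ with he
  have heinj : Function.Injective e := fun a b hab => hinj (congrArg Fin.val hab)
  obtain ⟨j, hj⟩ := Finite.surjective_of_injective heinj ⟨k, hk⟩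
  exact ⟨j, congrArg Fin.val hj⟩

end RankLemmas
section Depth
variable {n : ℕ}

/-- depth of `i` in the functional graph of `f` -/
noncomputable def dep (f : Fin n → Fin n) (i : Fin n) : ℕ :=
  sInf {m | f (f^[m] i) = f^[m] i}

lemma dep_spec {f : Fin n → Fin n} {i : Fin n} (h : ∃ m, f (f^[m] i) = f^[m] i) :
    f (f^[dep f i] i) = f^[dep f i] i :=
  Nat.sInf_mem h

lemma dep_eq_zero_of_fix {f : Fin n → Fin n} {i : Fin n} (hfi : f i = i) : dep f i = 0 := by
  have h0 : 0 ∈ {m | f (f^[m] i) = f^[m] i} := by simpa using hfi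
  exact Nat.le_antisymm (Nat.sInf_le h0) (Nat.zero_le _)

lemma dep_pos_of_nfix {f : Fin n → Fin n} {i : Fin n}
    (h : ∃ m, f (f^[m] i) = f^[m] i) (hfi : f i ≠ i) : 1 ≤ dep f i := by
  rcases Nat.eq_zero_or_pos (dep f i) with h0 | h1
  · have := dep_spec h
    rw [h0] at this
    simp only [Function.iterate_zero_apply] at this
    exact absurd this hfi
  · exact h1

lemma dep_f_le {f : Fin n → Fin n} {i : Fin n}
    (hac : ∀ j, ∃ m, f (f^[m] j) = f^[m] j) (hfi : f i ≠ i) :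
    dep f (f i) ≤ dep f i - 1 := by
  have h := hac i
  have h1 : 1 ≤ dep f i := dep_pos_of_nfix h hfi
  apply Nat.sInf_le
  have key : f^[dep f i - 1] (f i) = f^[dep f i] i := by
    rw [← Function.iterate_succ_apply]
    congr 1
    omega
  show f (f^[dep f i - 1] (f i)) = f^[dep f i - 1] (f i)
  rw [key]
  exact dep_spec h

lemma dep_f_lt {f : Fin n → Fin n} {i : Fin n}
    (hac : ∀ j, ∃ m, f (f^[m] j) = f^[m] j) (hfi : f i ≠ i) :
    dep f (f i) < dep f i := by
  have := dep_f_le hac hfi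
  have := dep_pos_of_nfix (hac i) hfi
  omega

/-- fuel-based numeric key -/
def kgo (f : Fin n → Fin n) : ℕ → Fin n → ℕ
  | 0, i => (i : ℕ) + 1
  | (m+1), i => if f i = i then (i : ℕ) + 1 else kgo f m (f i) * (n + 1) + ((i : ℕ) + 1)

noncomputable def kappa (f : Fin n → Fin n) (i : Fin n) : ℕ := kgo f (dep f i) i

lemma kgo_fix {f : Fin n → Fin n} {i : Fin n} (hfi : f i = i) (m : ℕ) :
    kgo f m i = (i : ℕ) + 1 := by
  cases m with
  | zero => rfl
  | succ m => rw [kgo, if_pos hfi]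

lemma kgo_stable {f : Fin n → Fin n} (hac : ∀ j, ∃ m, f (f^[m] j) = f^[m] j) :
    ∀ m, ∀ i : Fin n, dep f i ≤ m → kgo f m i = kappa f i := by
  intro m
  induction m using Nat.strong_induction_on with
  | _ m ih =>
    intro i hi
    by_cases hfi : f i = i
    · rw [kgo_fix hfi, kappa, kgo_fix hfi]
    · have h1 : 1 ≤ dep f i := dep_pos_of_nfix (hac i) hfi
      obtain ⟨m', rfl⟩ : ∃ m', m = m' + 1 := ⟨m - 1, by omega⟩
      have hle : dep f (f i) ≤ dep f i - 1 := dep_f_le hac hfi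
      rw [kgo, if_neg hfi]
      have hd : dep f i = (dep f i - 1) + 1 := by omega
      rw [kappa, hd, kgo, if_neg hfi]
      rw [ih m' (by omega) (f i) (by omega)]
      by_cases hcase : dep f i - 1 < m' + 1
      · rw [ih (dep f i - 1) hcase (f i) hle]
      · omega

lemma kappa_fix {f : Fin n → Fin n} {i : Fin n} (hfi : f i = i) :
    kappa f i = (i : ℕ) + 1 := kgo_fix hfi _

lemma kappa_rec {f : Fin n → Fin n} {i : Fin n}
    (hac : ∀ j, ∃ m, f (f^[m] j) = f^[m] j) (hfi : f i ≠ i) :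
    kappa f i = kappa f (f i) * (n + 1) + ((i : ℕ) + 1) := by
  have h1 : 1 ≤ dep f i := dep_pos_of_nfix (hac i) hfi
  have hd : dep f i = (dep f i - 1) + 1 := by omega
  rw [kappa, hd, kgo, if_neg hfi, kgo_stable hac _ _ (by have := dep_f_le hac hfi; omega)]

lemma kappa_mod {f : Fin n → Fin n} {i : Fin n}
    (hac : ∀ j, ∃ m, f (f^[m] j) = f^[m] j) :
    kappa f i % (n + 1) = (i : ℕ) + 1 := by
  have hin : (i : ℕ) + 1 < n + 1 := by have := i.isLt; omega
  by_cases hfi : f i = i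
  · rw [kappa_fix hfi, Nat.mod_eq_of_lt hin]
  · rw [kappa_rec hac hfi, add_comm, Nat.add_mul_mod_self_right, Nat.mod_eq_of_lt hin]

lemma kappa_injective {f : Fin n → Fin n}
    (hac : ∀ j, ∃ m, f (f^[m] j) = f^[m] j) :
    Function.Injective (kappa f) := by
  intro a b hab
  have ha := kappa_mod (i := a) hac
  have hb := kappa_mod (i := b) hac
  rw [hab, hb] at ha
  exact Fin.ext (by omega)

lemma kappa_pos {f : Fin n → Fin n} (i : Fin n)
    (hac : ∀ j, ∃ m, f (f^[m] j) = f^[m] j) : 1 ≤ kappa f i := by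
  by_cases hfi : f i = i
  · rw [kappa_fix hfi]; omega
  · rw [kappa_rec hac hfi]; omega

lemma kappa_le_of_fix {f : Fin n → Fin n} {i : Fin n} (hfi : f i = i) :
    kappa f i ≤ n := by
  rw [kappa_fix hfi]
  exact i.isLt

lemma kappa_gt_of_nfix {f : Fin n → Fin n} {i : Fin n}
    (hac : ∀ j, ∃ m, f (f^[m] j) = f^[m] j) (hfi : f i ≠ i) :
    n < kappa f i := by
  rw [kappa_rec hac hfi]
  have := kappa_pos (f := f) (f i) hac
  nlinarith

end Depth
section FRP
variable {n : ℕ}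

/-- The recursive comparison property characterizing the standardization order
associated to an acyclic function `f`. -/
def FRP (f : Fin n → Fin n) (r : Fin n → ℕ) : Prop :=
  ∀ j i : Fin n, r j < r i ↔
    ((f j = j ∧ f i ≠ i) ∨ (f j = j ∧ f i = i ∧ j < i) ∨
     (f j ≠ j ∧ f i ≠ i ∧ (r (f j) < r (f i) ∨ (r (f j) = r (f i) ∧ j < i))))

lemma FRP_kappa {f : Fin n → Fin n} (hac : ∀ j, ∃ m, f (f^[m] j) = f^[m] j) :
    FRP f (kappa f) := by
  intro j i
  by_cases hj : f j = j <;> by_cases hi : f i = i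
  · -- both fixed
    rw [kappa_fix hj, kappa_fix hi]
    simp only [hj, hi, ne_eq, not_true_eq_false, and_false, false_and, and_true, false_or,
      or_false, true_and, not_false_eq_true]
    constructor
    · intro h; exact Fin.lt_def.mpr (by omega)
    · intro h; have := Fin.lt_def.mp h; omega
  · -- j fixed, i not
    have h1 : kappa f j ≤ n := kappa_le_of_fix hj
    have h2 : n < kappa f i := kappa_gt_of_nfix hac hi
    simp only [hj, hi, ne_eq, not_true_eq_false, not_false_eq_true, true_and, false_and,
      and_false, or_false, false_or, and_true]
    constructor
    · intro _; trivial
    · intro _; omega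
  · -- j not fixed, i fixed
    have h1 : kappa f i ≤ n := kappa_le_of_fix hi
    have h2 : n < kappa f j := kappa_gt_of_nfix hac hj
    constructor
    · intro h; exact absurd h (by omega)
    · rintro (⟨hj', -⟩ | ⟨hj', -⟩ | ⟨-, hi', -⟩)
      · exact absurd hj' hj
      · exact absurd hj' hj
      · exact absurd hi hi'
  · -- both not fixed
    rw [kappa_rec hac hj, kappa_rec hac hi]
    simp only [hj, hi, ne_eq, not_false_eq_true, true_and, not_true_eq_false, false_and,
      and_false, false_or, or_false]
    have hjn : (j : ℕ) < n := j.isLt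
    have hin : (i : ℕ) < n := i.isLt
    set a := kappa f (f j)
    set b := kappa f (f i)
    constructor
    · intro h
      rcases lt_trichotomy a b with hab | hab | hab
      · exact Or.inl hab
      · right
        refine ⟨hab, ?_⟩
        rw [hab] at h
        have : (j : ℕ) < (i : ℕ) := by omega
        exact Fin.lt_def.mpr this
      · exfalso
        have hba : b + 1 ≤ a := hab
        have : b * (n + 1) + (n + 1) ≤ a * (n + 1) := by nlinarith
        omega
    · intro h
      rcases h with hab | ⟨hab, hji⟩
      · have : a * (n + 1) + (n + 1) ≤ b * (n + 1) := by nlinarith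
        omega
      · have := Fin.lt_def.mp hji
        rw [hab]
        omega

lemma FRP_unique {f : Fin n → Fin n} (hac : ∀ j, ∃ m, f (f^[m] j) = f^[m] j)
    {σ τ : Fin n → ℕ} (hσ : FRP f σ) (hτ : FRP f τ) :
    ∀ j i, (σ j < σ i ↔ τ j < τ i) := by
  have key : ∀ N : ℕ, ∀ j i : Fin n, dep f j + dep f i ≤ N → (σ j < σ i ↔ τ j < τ i) := by
    intro N
    induction N using Nat.strong_induction_on with
    | _ N ih =>
      intro j i hN
      by_cases hj : f j = j <;> by_cases hi : f i = i
      · rw [hσ j i, hτ j i]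
        simp [hj, hi]
      · rw [hσ j i, hτ j i]
        simp [hj, hi]
      · rw [hσ j i, hτ j i]
        simp [hj, hi]
      · -- both not fixed : use induction
        have hdj : dep f (f j) < dep f j := dep_f_lt hac hj
        have hdi : dep f (f i) < dep f i := dep_f_lt hac hi
        have hN' : dep f (f j) + dep f (f i) < N := by omega
        obtain ⟨N', rfl⟩ : ∃ N', N = N' + 1 := ⟨N - 1, by omega⟩
        have ih1 : σ (f j) < σ (f i) ↔ τ (f j) < τ (f i) :=
          ih N' (by omega) (f j) (f i) (by omega)
        have ih2 : σ (f i) < σ (f j) ↔ τ (f i) < τ (f j) :=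
          ih N' (by omega) (f i) (f j) (by omega)
        have ih3 : σ (f j) = σ (f i) ↔ τ (f j) = τ (f i) := by
          constructor
          · intro hh
            rcases lt_trichotomy (τ (f j)) (τ (f i)) with h' | h' | h'
            · exact absurd (ih1.mpr h') (by omega)
            · exact h'
            · exact absurd (ih2.mpr h') (by omega)
          · intro hh
            rcases lt_trichotomy (σ (f j)) (σ (f i)) with h' | h' | h'
            · exact absurd (ih1.mp h') (by omega)
            · exact h'
            · exact absurd (ih2.mp h') (by omega)
        rw [hσ j i, hτ j i, ih1, ih3]
  intro j i
  exact key (dep f j + dep f i) j i le_rfl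

/-- if `r` satisfies FRP then parents are strictly smaller -/
lemma FRP_parent_lt {f : Fin n → Fin n} (hac : ∀ j, ∃ m, f (f^[m] j) = f^[m] j)
    {r : Fin n → ℕ} (hr : FRP f r) :
    ∀ i, f i ≠ i → r (f i) < r i := by
  have key : ∀ N : ℕ, ∀ i : Fin n, dep f i ≤ N → f i ≠ i → r (f i) < r i := by
    intro N
    induction N using Nat.strong_induction_on with
    | _ N ih =>
      intro i hN hfi
      rw [hr (f i) i]
      by_cases hffi : f (f i) = f i
      · exact Or.inl ⟨hffi, hfi⟩
      · refine Or.inr (Or.inr ⟨hffi, hfi, Or.inl ?_⟩)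
        have hd1 : dep f (f i) < dep f i := dep_f_lt hac hfi
        obtain ⟨N', rfl⟩ : ∃ N', N = N' + 1 := ⟨N - 1, by have := dep_pos_of_nfix (hac i) hfi; omega⟩
        exact ih N' (by omega) (f i) (by omega) hffi
  intro i hfi
  exact key (dep f i) i le_rfl hfi

end FRP
section Parking
variable {n : ℕ}

/-- the lexicographic key whose rank is `prank` -/
def pkey (u : Fin n → ℕ+) (i : Fin n) : ℕ ×ₗ ℕ := toLex ((u i : ℕ), (i : ℕ))

lemma prank_eq_card_pkey (u : Fin n → ℕ+) (i : Fin n) :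
    prank u i = (Finset.univ.filter (fun k => pkey u k < pkey u i)).card := by
  unfold prank
  congr 1
  apply Finset.filter_congr
  intro k _
  rw [pkey, pkey, Prod.Lex.lt_iff]
  simp only [ofLex_toLex, PNat.coe_lt_coe, ← PNat.coe_inj, Fin.lt_def]

lemma prank_lt_iff (u : Fin n → ℕ+) (j i : Fin n) :
    prank u j < prank u i ↔ ((u j : ℕ) < u i ∨ ((u j : ℕ) = u i ∧ j < i)) := by
  rw [prank_eq_card_pkey, prank_eq_card_pkey, card_key_lt_lt_iff, pkey, pkey,
    Prod.Lex.lt_iff]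
  simp only [ofLex_toLex, Fin.lt_def]

lemma prank_eq_iff (u : Fin n → ℕ+) (j i : Fin n) :
    prank u j = prank u i ↔ ((u j : ℕ) = u i ∧ j = i) := by
  constructor
  · intro h
    have h1 := prank_lt_iff u j i
    have h2 := prank_lt_iff u i j
    rcases lt_trichotomy ((u j : ℕ)) ((u i : ℕ)) with hh | hh | hh
    · exact absurd (h1.mpr (Or.inl hh)) (by omega)
    · refine ⟨hh, ?_⟩
      rcases lt_trichotomy j i with hji | hji | hji
      · exact absurd (h1.mpr (Or.inr ⟨hh, hji⟩)) (by omega)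
      · exact hji
      · exact absurd (h2.mpr (Or.inr ⟨hh.symm, hji⟩)) (by omega)
    · exact absurd (h2.mpr (Or.inl hh)) (by omega)
  · rintro ⟨-, rfl⟩; rfl

lemma prank_injective (u : Fin n → ℕ+) : Function.Injective (prank u) :=
  fun a b hab => ((prank_eq_iff u a b).mp hab).2

lemma prank_lt_n (u : Fin n → ℕ+) (i : Fin n) : prank u i < n := by
  have : (Finset.univ.filter (fun j => u j < u i ∨ (u j = u i ∧ j < i))) ⊆
      Finset.univ.erase i := by
    intro k hk
    simp only [Finset.mem_filter, Finset.mem_univ, true_and] at hk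
    rw [Finset.mem_erase]
    refine ⟨?_, Finset.mem_univ _⟩
    rintro rfl
    rcases hk with h | ⟨-, h⟩
    · exact lt_irrefl _ h
    · exact lt_irrefl _ h
  have := Finset.card_le_card this
  rw [Finset.card_erase_of_mem (Finset.mem_univ i), Finset.card_univ, Fintype.card_fin] at this
  have hn : 0 < n := by have := i.isLt; omega
  unfold prank
  omega

lemma prank_self_card (u : Fin n → ℕ+) (i : Fin n) :
    (Finset.univ.filter (fun j => prank u j < prank u i)).card = prank u i := by
  have : Finset.univ.filter (fun j => prank u j < prank u i) =
      Finset.univ.filter (fun k => pkey u k < pkey u i) := by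
    apply Finset.filter_congr
    intro k _
    rw [prank_eq_card_pkey, prank_eq_card_pkey, card_key_lt_lt_iff]
  rw [this, ← prank_eq_card_pkey]

/-- all values of a parking function are at most `n` -/
lemma parking_le_n {u : Fin n → ℕ+} (hu : IsParkingFn u) (j : Fin n) : (u j : ℕ) ≤ n := by
  rcases Nat.eq_zero_or_pos n with h0 | h1
  · exact absurd j.isLt (by omega)
  have h := hu n h1 le_rfl
  have hall : Finset.univ.filter (fun k : Fin n => (u k : ℕ) ≤ n) = Finset.univ := by
    apply Finset.eq_univ_of_card
    have hle := Finset.card_filter_le (Finset.univ : Finset (Fin n)) (fun k => (u k : ℕ) ≤ n)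
    rw [Finset.card_univ, Fintype.card_fin] at hle
    rw [Fintype.card_fin]
    omega
  have := Finset.eq_univ_iff_forall.mp hall j
  simpa using this

/-- the key inequality `u j ≤ prank u j + 1` for a parking function -/
lemma parking_le_prank {u : Fin n → ℕ+} (hu : IsParkingFn u) (j : Fin n) :
    (u j : ℕ) ≤ prank u j + 1 := by
  have hpos : 0 < (u j : ℕ) := (u j).pos
  by_cases h1 : (u j : ℕ) = 1
  · omega
  have h2 : 2 ≤ (u j : ℕ) := by omega
  have hn : (u j : ℕ) ≤ n := parking_le_n hu j
  have h := hu ((u j : ℕ) - 1) (by omega) (by omega)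
  have hsub : Finset.univ.filter (fun k : Fin n => (u k : ℕ) ≤ (u j : ℕ) - 1) ⊆
      Finset.univ.filter (fun k => u k < u j ∨ (u k = u j ∧ k < j)) := by
    intro k hk
    simp only [Finset.mem_filter, Finset.mem_univ, true_and] at *
    left
    rw [← PNat.coe_lt_coe]
    omega
  have := Finset.card_le_card hsub
  unfold prank
  omega

end Parking
section FoataSide
variable {n : ℕ}

lemma foata_of_one {u : Fin n → ℕ+} {i : Fin n} (hi : (u i : ℕ) = 1) :
    foata u i = i := by
  rw [foata, if_pos hi]

lemma foata_rec {u : Fin n → ℕ+} (hu : IsParkingFn u) {i : Fin n}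
    (hi : (u i : ℕ) ≠ 1) : prank u (foata u i) + 2 = (u i : ℕ) := by
  haveI : Nonempty (Fin n) := ⟨i⟩
  have hpos : 0 < (u i : ℕ) := (u i).pos
  have h2 : 2 ≤ (u i : ℕ) := by omega
  have hn : (u i : ℕ) ≤ n := parking_le_n hu i
  obtain ⟨j, hj⟩ := surj_of_inj (prank u) (prank_injective u) (prank_lt_n u)
    ((u i : ℕ) - 2) (by omega)
  have hex : ∃ k : Fin n, prank u k + 1 = (u i : ℕ) - 1 := ⟨j, by omega⟩
  have heq : prank u (Function.invFun (fun j : Fin n => prank u j + 1) ((u i : ℕ) - 1)) + 1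
      = (u i : ℕ) - 1 := Function.invFun_eq hex
  have hfoata : foata u i = Function.invFun (fun j : Fin n => prank u j + 1) ((u i : ℕ) - 1) := by
    rw [foata, if_neg hi]
  rw [hfoata]
  omega

lemma foata_fix_iff {u : Fin n → ℕ+} (hu : IsParkingFn u) (i : Fin n) :
    foata u i = i ↔ (u i : ℕ) = 1 := by
  constructor
  · intro h
    by_contra hi
    have h1 := foata_rec hu hi
    rw [h] at h1
    have := parking_le_prank hu i
    omega
  · exact foata_of_one

lemma FRP_foata {u : Fin n → ℕ+} (hu : IsParkingFn u) : FRP (foata u) (prank u) := by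
  intro j i
  rw [prank_lt_iff]
  have hpj : 0 < (u j : ℕ) := (u j).pos
  have hpi : 0 < (u i : ℕ) := (u i).pos
  by_cases hj : (u j : ℕ) = 1 <;> by_cases hi : (u i : ℕ) = 1
  · -- both 1
    have hfj : foata u j = j := foata_of_one hj
    have hfi : foata u i = i := foata_of_one hi
    simp only [hfj, hfi, ne_eq, not_true_eq_false, and_false, false_and, and_true, false_or,
      or_false, true_and]
    omega
  · -- j one, i not
    have hfj : foata u j = j := foata_of_one hj
    have hfi : foata u i ≠ i := fun h => hi ((foata_fix_iff hu i).mp h)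
    constructor
    · intro _; exact Or.inl ⟨hfj, hfi⟩
    · intro _; left; omega
  · -- j not, i one
    have hfj : foata u j ≠ j := fun h => hj ((foata_fix_iff hu j).mp h)
    have hfi : foata u i = i := foata_of_one hi
    constructor
    · intro h
      exfalso
      rcases h with h | ⟨h, -⟩ <;> omega
    · rintro (⟨h, -⟩ | ⟨h, -⟩ | ⟨-, h, -⟩)
      · exact absurd h hfj
      · exact absurd h hfj
      · exact absurd hfi h
  · -- both not one
    have hfj : foata u j ≠ j := fun h => hj ((foata_fix_iff hu j).mp h)
    have hfi : foata u i ≠ i := fun h => hi ((foata_fix_iff hu i).mp h)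
    have hrj := foata_rec hu hj
    have hri := foata_rec hu hi
    constructor
    · intro h
      refine Or.inr (Or.inr ⟨hfj, hfi, ?_⟩)
      rcases h with h | ⟨h, hji⟩
      · left; omega
      · right; exact ⟨by omega, hji⟩
    · rintro (⟨h, -⟩ | ⟨h, -⟩ | ⟨-, -, (h | ⟨h, hji⟩)⟩)
      · exact absurd h hfj
      · exact absurd h hfj
      · left; omega
      · right; exact ⟨by omega, hji⟩

lemma foata_acyclic {u : Fin n → ℕ+} (hu : IsParkingFn u) :
    ∀ i, ∃ m, foata u ((foata u)^[m] i) = (foata u)^[m] i := by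
  have key : ∀ v : ℕ, ∀ i : Fin n, (u i : ℕ) ≤ v →
      ∃ m, foata u ((foata u)^[m] i) = (foata u)^[m] i := by
    intro v
    induction v using Nat.strong_induction_on with
    | _ v ih =>
      intro i hv
      by_cases hi : (u i : ℕ) = 1
      · exact ⟨0, by simpa using foata_of_one hi⟩
      · have hrec := foata_rec hu hi
        have hle := parking_le_prank hu (foata u i)
        have hlt : (u (foata u i) : ℕ) < (u i : ℕ) := by omega
        have hpos : 0 < (u i : ℕ) := (u i).pos
        obtain ⟨m, hm⟩ := ih ((u i : ℕ) - 1) (by omega) (foata u i) (by omega)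
        refine ⟨m + 1, ?_⟩
        rw [Function.iterate_succ_apply]
        exact hm
  intro i
  exact key (u i) i le_rfl

end FoataSide
section Main
variable {n : ℕ}

lemma card_key_lt_lt_n {α : Type*} [LinearOrder α] (key : Fin n → α) (i : Fin n) :
    (Finset.univ.filter (fun k => key k < key i)).card < n := by
  have hsub : Finset.univ.filter (fun k => key k < key i) ⊆ Finset.univ.erase i := by
    intro k hk
    simp only [Finset.mem_filter, Finset.mem_univ, true_and] at hk
    rw [Finset.mem_erase]
    refine ⟨?_, Finset.mem_univ _⟩
    rintro rfl
    exact lt_irrefl _ hk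
  have := Finset.card_le_card hsub
  rw [Finset.card_erase_of_mem (Finset.mem_univ i), Finset.card_univ, Fintype.card_fin] at this
  have := i.isLt
  omega

/-- The Foata–Riordan map is a bijection from parking functions of length `n` onto
acyclic functions `[n] → [n]` (functions all of whose iterates reach fixed points). -/
theorem foata_bijOn (n : ℕ) :
    Set.BijOn (fun u : Fin n → ℕ+ => foata u)
      {u | IsParkingFn u}
      {f : Fin n → Fin n | ∀ i, ∃ m, f (f^[m] i) = f^[m] i} := by
  refine ⟨?_, ?_, ?_⟩
  · -- MapsTo
    intro u hu
    exact foata_acyclic hu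
  · -- InjOn
    intro u hu v hv hf
    simp only [Set.mem_setOf_eq] at hu hv
    have hf' : foata u = foata v := hf
    have hac := foata_acyclic hu
    have h1 : FRP (foata u) (prank u) := FRP_foata hu
    have h2 : FRP (foata u) (prank v) := by rw [hf']; exact FRP_foata hv
    have hiff := FRP_unique hac h1 h2
    have hpr : ∀ i, prank u i = prank v i := by
      intro i
      rw [← prank_self_card u i, ← prank_self_card v i]
      congr 1
      apply Finset.filter_congr
      intro k _
      exact hiff k i
    funext i
    by_cases hone : (u i : ℕ) = 1
    · have e1 : foata u i = i := foata_of_one hone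
      have e2 : foata v i = i := by rw [← hf']; exact e1
      have hvone := (foata_fix_iff hv i).mp e2
      exact PNat.coe_injective (by omega)
    · have hvone : (v i : ℕ) ≠ 1 := by
        intro h
        have e2 : foata v i = i := foata_of_one h
        have e1 : foata u i = i := by rw [hf']; exact e2
        exact hone ((foata_fix_iff hu i).mp e1)
      have r1 := foata_rec hu hone
      have r2 := foata_rec hv hvone
      rw [← hf'] at r2
      have := hpr (foata u i)
      exact PNat.coe_injective (by omega)
  · -- SurjOn
    intro f hf
    simp only [Set.mem_setOf_eq] at hf
    classical
    set τ : Fin n → ℕ := fun i => (Finset.univ.filter (fun j => kappa f j < kappa f i)).card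
      with hτ
    have hτlt : ∀ j i, τ j < τ i ↔ kappa f j < kappa f i :=
      fun j i => card_key_lt_lt_iff (kappa f) j i
    have hτeq : ∀ j i, τ j = τ i ↔ kappa f j = kappa f i :=
      fun j i => card_key_lt_eq_iff (kappa f) j i
    have hτinj : Function.Injective τ :=
      fun a b hab => kappa_injective hf ((hτeq a b).mp hab)
    have hτn : ∀ i, τ i < n := fun i => card_key_lt_lt_n (kappa f) i
    have hFRP : FRP f τ := by
      intro j i
      rw [hτlt j i, hτlt (f j) (f i), hτeq (f j) (f i)]
      exact FRP_kappa hf j i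
    have hparent : ∀ i, f i ≠ i → τ (f i) < τ i := FRP_parent_lt hf hFRP
    set u : Fin n → ℕ+ := fun i => if f i = i then (1 : ℕ+) else ⟨τ (f i) + 2, by omega⟩
      with hudef
    have hcoe : ∀ i, (u i : ℕ) = if f i = i then 1 else τ (f i) + 2 := by
      intro i
      by_cases h : f i = i <;> simp [hudef, h]
    have hcond : ∀ j i : Fin n, (u j < u i ∨ (u j = u i ∧ j < i)) ↔ τ j < τ i := by
      intro j i
      rw [hFRP j i, ← PNat.coe_lt_coe, ← PNat.coe_inj, hcoe j, hcoe i]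
      by_cases hj : f j = j <;> by_cases hi : f i = i
      · rw [if_pos hj, if_pos hi]
        constructor
        · rintro (h | ⟨-, h⟩)
          · omega
          · exact Or.inr (Or.inl ⟨hj, hi, h⟩)
        · rintro (⟨-, h⟩ | ⟨-, -, h⟩ | ⟨h, -⟩)
          · exact absurd hi h
          · exact Or.inr ⟨rfl, h⟩
          · exact absurd hj h
      · rw [if_pos hj, if_neg hi]
        constructor
        · intro _
          exact Or.inl ⟨hj, hi⟩
        · intro _
          left
          omega
      · rw [if_neg hj, if_pos hi]
        constructor
        · rintro (h | ⟨h, -⟩) <;> omega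
        · rintro (⟨h, -⟩ | ⟨h, -⟩ | ⟨-, h, -⟩)
          · exact absurd h hj
          · exact absurd h hj
          · exact absurd hi h
      · rw [if_neg hj, if_neg hi]
        constructor
        · rintro (h | ⟨h, hji⟩)
          · exact Or.inr (Or.inr ⟨hj, hi, Or.inl (by omega)⟩)
          · exact Or.inr (Or.inr ⟨hj, hi, Or.inr ⟨by omega, hji⟩⟩)
        · rintro (⟨h, -⟩ | ⟨h, -⟩ | ⟨-, -, (h | ⟨h, hji⟩)⟩)
          · exact absurd h hj
          · exact absurd h hj
          · left; omega
          · right; exact ⟨by omega, hji⟩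
    have hprank : ∀ i, prank u i = τ i := by
      intro i
      have e1 : Finset.univ.filter (fun k => u k < u i ∨ (u k = u i ∧ k < i)) =
          Finset.univ.filter (fun k => kappa f k < kappa f i) := by
        apply Finset.filter_congr
        intro k _
        rw [hcond k i, hτlt k i]
      rw [prank, e1, hτ]
    have hpark : IsParkingFn u := by
      intro i h1 h2
      have hsub : Finset.univ.filter (fun j : Fin n => τ j < i) ⊆
          Finset.univ.filter (fun j => (u j : ℕ) ≤ i) := by
        intro k hk
        simp only [Finset.mem_filter, Finset.mem_univ, true_and] at *
        rw [hcoe k]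
        by_cases h : f k = k
        · rw [if_pos h]; omega
        · rw [if_neg h]
          have := hparent k h
          omega
      have hcount := count_lt_of_inj τ hτinj hτn i h2
      have := Finset.card_le_card hsub
      omega
    refine ⟨u, hpark, ?_⟩
    funext i
    by_cases hfi : f i = i
    · have h1 : (u i : ℕ) = 1 := by rw [hcoe i, if_pos hfi]
      show foata u i = f i
      rw [foata_of_one h1, hfi]
    · have hne : (u i : ℕ) ≠ 1 := by rw [hcoe i, if_neg hfi]; omega
      haveI : Nonempty (Fin n) := ⟨i⟩
      have hg : (fun j : Fin n => prank u j + 1) = (fun j => τ j + 1) :=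
        funext (fun j => by rw [hprank])
      show foata u i = f i
      have hstep : foata u i = Function.invFun (fun j : Fin n => τ j + 1) ((u i : ℕ) - 1) := by
        rw [foata, if_neg hne, hg]
      rw [hstep]
      have hui : (u i : ℕ) - 1 = τ (f i) + 1 := by rw [hcoe i, if_neg hfi]; omega
      rw [hui]
      have hginj : Function.Injective (fun j : Fin n => τ j + 1) :=
        fun a b hab => hτinj (Nat.succ_injective hab)
      exact Function.leftInverse_invFun hginj (f i)

end Main
end

section
/- The map f from words on positive integers to E, and the map g from E to words, are mutually inverse bijections; consequently words of length n on positive integers are in bijection with elements of E whose associated permutation has length n. -/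
/- Words on positive integers are modelled as lists of naturals all of whose
entries are positive; sequences `(a_1, a_2, …)` are modelled as functions
`a : ℕ → ℕ`, the value `a t` being the entry `a_{t+1}`. -/

/-- The rank of position `i` in the standardization of `w`. -/
def stdRankN (w : List ℕ) (i : ℕ) : ℕ :=
  ((List.range w.length).filter (fun j =>
    w.getD j 0 < w.getD i 0 ∨ (w.getD j 0 = w.getD i 0 ∧ j < i))).length

/-- `τ_i` (0-based) where `τ = Std(w)⁻¹`: the position of `w` whose standardized
value is `i + 1`. -/
def tauGet (w : List ℕ) (i : ℕ) : ℕ :=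
  ((List.range w.length).filter (fun p => stdRankN w p = i)).headD 0

/-- The (1-based) position in the sequence `f(w)` at which `τ_{i+1}` is placed:
`w_{τ_i}` plus the number of ascents `τ_j < τ_{j+1}` among the first `i` steps.
This encodes exactly the zero-insertion rule of Definition `f`. -/
def posOf (w : List ℕ) (i : ℕ) : ℕ :=
  w.getD (tauGet w i) 0 +
    ((List.range i).filter (fun j => tauGet w j < tauGet w (j + 1))).length

/-- The map `f` from words to almost-zero sequences: the entry at (1-based)
position `posOf w i` is `τ_{i+1}` (1-based), all other entries are `0`. -/
def fMap (w : List ℕ) : ℕ → ℕ := fun t =>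
  match (List.range w.length).find? (fun i => posOf w i = t + 1) with
  | some i => tauGet w i + 1
  | none => 0

/-- Membership in `E`: an almost-zero sequence of non-negative integers whose
subword of nonzero entries is a permutation of `[k]`. -/
def InE (a : ℕ → ℕ) : Prop :=
  ∃ N, (∀ t, N ≤ t → a t = 0) ∧
    (((List.range N).filter (fun t => a t ≠ 0)).map a).Perm
      (List.range' 1 ((List.range N).filter (fun t => a t ≠ 0)).length)

/-- The (0-based) list `j_1 < j_2 < … < j_k` of indices of the nonzero entries
of an almost-zero sequence. -/
noncomputable def suppList (a : ℕ → ℕ) : List ℕ :=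
  (List.range (sInf {N | ∀ t, N ≤ t → a t = 0} + 1)).filter (fun t => a t ≠ 0)

/-- The letter `w_{a_{j_{i+1}}}` of `g(a)` (0-based `i`), following Definition `g`:
`w_{a_{j_1}} := j_1`, and `w_{a_{j_{i+1}}} := w_{a_{j_i}} + (j_{i+1} − j_i) − 1`
if `a_{j_i} < a_{j_{i+1}}`, else `w_{a_{j_i}} + (j_{i+1} − j_i)`. -/
noncomputable def gVals (a : ℕ → ℕ) : ℕ → ℕ
  | 0 => (suppList a).getD 0 0 + 1
  | i + 1 =>
      gVals a i + ((suppList a).getD (i + 1) 0 - (suppList a).getD i 0) -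
        (if a ((suppList a).getD i 0) < a ((suppList a).getD (i + 1) 0) then 1 else 0)

/-- The map `g` from `E` to words: a word of length `k` whose letter at (1-based)
position `a_{j_{i+1}}` is `gVals a i`. -/
noncomputable def gWord (a : ℕ → ℕ) : List ℕ :=
  (List.range (suppList a).length).map (fun p =>
    match (List.range (suppList a).length).find?
        (fun i => a ((suppList a).getD i 0) = p + 1) with
    | some i => gVals a i
    | none => 0)

section Aux

/-- headD of a nonempty list all of whose elements equal c is c. -/
lemma headD_eq_of_all {l : List ℕ} {c d : ℕ} (h : l ≠ []) (hall : ∀ x ∈ l, x = c) :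
    l.headD d = c := by
  cases l with
  | nil => exact absurd rfl h
  | cons a t => exact hall a (by simp)

/-- find? on range with a unique witness. -/
lemma find?_range_unique {n i : ℕ} {q : ℕ → Bool} (hi : i < n) (hqi : q i)
    (huniq : ∀ j < n, q j → j = i) : (List.range n).find? q = some i := by
  cases hfind : (List.range n).find? q with
  | none =>
    rw [List.find?_eq_none] at hfind
    exact absurd hqi (hfind i (List.mem_range.2 hi))
  | some j =>
    have hj := List.mem_range.1 (List.mem_of_find?_eq_some hfind)
    have := huniq j hj (List.find?_some hfind)
    rw [this]

/-- filter `< i` on range n has length i, for i ≤ n. -/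
lemma length_filter_range_lt {i n : ℕ} (h : i ≤ n) :
    ((List.range n).filter (fun j => j < i)).length = i := by
  obtain ⟨d, rfl⟩ := Nat.exists_eq_add_of_le h
  rw [List.range_add, List.filter_append]
  have h1 : (List.range i).filter (fun j => decide (j < i)) = List.range i :=
    List.filter_eq_self.2 (by intro a ha; simpa using List.mem_range.1 ha)
  have h2 : ((List.range d).map (fun x => i + x)).filter (fun j => decide (j < i)) = [] :=
    List.filter_eq_nil_iff.2 (by intro a ha; simp at ha ⊢; obtain ⟨x, _, rfl⟩ := ha; omega)
  simp [h1, h2]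

/-- A map on range n with values < n and injective is a permutation of range n. -/
lemma perm_map_range {n : ℕ} {σ : ℕ → ℕ} (hlt : ∀ i < n, σ i < n)
    (hinj : ∀ i < n, ∀ j < n, σ i = σ j → i = j) :
    ((List.range n).map σ).Perm (List.range n) := by
  have hnd : ((List.range n).map σ).Nodup := by
    refine List.Nodup.map_on ?_ (List.nodup_range (n := n))
    intro x hx y hy hxy
    exact hinj x (List.mem_range.1 hx) y (List.mem_range.1 hy) hxy
  have hsub : ((List.range n).map σ) ⊆ List.range n := by
    intro x hx
    obtain ⟨i, hi, rfl⟩ := List.mem_map.1 hx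
    exact List.mem_range.2 (hlt i (List.mem_range.1 hi))
  exact (List.subperm_of_subset hnd hsub).perm_of_length_le (by simp)

/-- Counting lemma: if σ is a bijection-like map on range n and q holds exactly
on images σ j for j < i, then the filter has length i. -/
lemma length_filter_eq_of_bij {n : ℕ} {σ : ℕ → ℕ} (hlt : ∀ i < n, σ i < n)
    (hinj : ∀ i < n, ∀ j < n, σ i = σ j → i = j) {q : ℕ → Bool} {i : ℕ} (hi : i ≤ n)
    (hq : ∀ j < n, (q (σ j) = true ↔ j < i)) :
    ((List.range n).filter q).length = i := by
  rw [← List.countP_eq_length_filter]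
  rw [(perm_map_range hlt hinj).countP_eq q |>.symm, List.countP_map]
  have : List.countP (q ∘ σ) (List.range n) = List.countP (fun j => decide (j < i)) (List.range n) := by
    apply List.countP_congr
    intro j hj
    have hj' := List.mem_range.1 hj
    simp only [Function.comp]
    constructor
    · intro h; simpa using (hq j hj').1 h
    · intro h; exact (hq j hj').2 (by simpa using h)
  rw [this, List.countP_eq_length_filter, length_filter_range_lt hi]


/-- The key strict order: position p comes before position q in standardization. -/
def Kord (w : List ℕ) (p q : ℕ) : Prop :=
  w.getD p 0 < w.getD q 0 ∨ (w.getD p 0 = w.getD q 0 ∧ p < q)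

instance (w : List ℕ) (p q : ℕ) : Decidable (Kord w p q) := by
  unfold Kord; infer_instance

lemma Kord_trichot (w : List ℕ) {p q : ℕ} (h : p ≠ q) : Kord w p q ∨ Kord w q p := by
  unfold Kord; rcases Nat.lt_trichotomy p q with h1 | h1 | h1 <;> omega
lemma Kord_asymm (w : List ℕ) {p q : ℕ} (h1 : Kord w p q) (h2 : Kord w q p) : False := by
  unfold Kord at *; omega
lemma Kord_irrefl (w : List ℕ) {p : ℕ} (h : Kord w p p) : False := by unfold Kord at h; omega
lemma Kord_trans (w : List ℕ) {p q r : ℕ} (h1 : Kord w p q) (h2 : Kord w q r) : Kord w p r := by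
  unfold Kord at *; omega

lemma stdRankN_eq_countP (w : List ℕ) (i : ℕ) :
    stdRankN w i = List.countP (fun j => decide (Kord w j i)) (List.range w.length) := by
  rw [List.countP_eq_length_filter]; rfl

lemma stdRankN_lt (w : List ℕ) {p : ℕ} (hp : p < w.length) : stdRankN w p < w.length := by
  unfold stdRankN
  have hsub := List.filter_sublist (p := fun j =>
    decide (w.getD j 0 < w.getD p 0 ∨ (w.getD j 0 = w.getD p 0 ∧ j < p))) (l := List.range w.length)
  rcases Nat.lt_or_ge (((List.range w.length).filter _).length) w.length with h | h
  · simpa using h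
  · exfalso
    have := hsub.length_le
    simp only [List.length_range] at this
    have heq : ((List.range w.length).filter (fun j =>
        decide (w.getD j 0 < w.getD p 0 ∨ (w.getD j 0 = w.getD p 0 ∧ j < p)))) = List.range w.length :=
      hsub.eq_of_length_le (by simpa using h)
    have hpmem : p ∈ (List.range w.length).filter (fun j =>
        decide (w.getD j 0 < w.getD p 0 ∨ (w.getD j 0 = w.getD p 0 ∧ j < p))) := by
      rw [heq]; exact List.mem_range.2 hp
    have := List.of_mem_filter hpmem
    simp at this

lemma stdRankN_lt_of_Kord (w : List ℕ) {p q : ℕ} (hp : p < w.length) (hq : q < w.length)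
    (h : Kord w p q) : stdRankN w p < stdRankN w q := by
  rw [stdRankN_eq_countP, stdRankN_eq_countP]
  have h1 : List.countP (fun j => decide (Kord w j p ∨ j = p)) (List.range w.length)
      ≤ List.countP (fun j => decide (Kord w j q)) (List.range w.length) := by
    apply List.countP_mono_left
    intro x _ hx
    simp only [decide_eq_true_eq] at hx ⊢
    rcases hx with hx | rfl
    · exact Kord_trans w hx h
    · exact h
  have h2 : List.countP (fun j => decide (Kord w j p)) (List.range w.length)
      < List.countP (fun j => decide (Kord w j p ∨ j = p)) (List.range w.length) := by
    rw [List.countP_eq_length_filter, List.countP_eq_length_filter]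
    have hsub : ((List.range w.length).filter (fun j => decide (Kord w j p))).Sublist
        ((List.range w.length).filter (fun j => decide (Kord w j p ∨ j = p))) := by
      apply List.monotone_filter_right
      intro x hx
      simp only [decide_eq_true_eq] at hx ⊢
      exact Or.inl hx
    refine Nat.lt_of_le_of_ne hsub.length_le (fun hlen => ?_)
    have heq := hsub.eq_of_length hlen
    · 
      have hpmem : p ∈ (List.range w.length).filter (fun j => decide (Kord w j p ∨ j = p)) := by
        apply List.mem_filter.2 ⟨List.mem_range.2 hp, by simp⟩
      rw [← heq] at hpmem
      exact Kord_irrefl w (by simpa using List.of_mem_filter hpmem)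
    
  omega

lemma stdRankN_injOn (w : List ℕ) {p q : ℕ} (hp : p < w.length) (hq : q < w.length)
    (h : stdRankN w p = stdRankN w q) : p = q := by
  by_contra hne
  rcases Kord_trichot w hne with hk | hk
  · exact absurd h (Nat.ne_of_lt (stdRankN_lt_of_Kord w hp hq hk))
  · exact absurd h.symm (Nat.ne_of_lt (stdRankN_lt_of_Kord w hq hp hk))

lemma stdRankN_surj (w : List ℕ) {i : ℕ} (hi : i < w.length) :
    ∃ p < w.length, stdRankN w p = i := by
  have himg : (Finset.range w.length).image (stdRankN w) = Finset.range w.length := by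
    apply Finset.eq_of_subset_of_card_le
    · intro x hx
      obtain ⟨p, hp, rfl⟩ := Finset.mem_image.1 hx
      exact Finset.mem_range.2 (stdRankN_lt w (Finset.mem_range.1 hp))
    · rw [Finset.card_range, Finset.card_image_of_injOn ?_]
      · simp
      · intro p hp q hq h
        exact stdRankN_injOn w (Finset.mem_range.1 hp) (Finset.mem_range.1 hq) h
  have : i ∈ (Finset.range w.length).image (stdRankN w) := by
    rw [himg]; exact Finset.mem_range.2 hi
  obtain ⟨p, hp, hpe⟩ := Finset.mem_image.1 this
  exact ⟨p, Finset.mem_range.1 hp, hpe⟩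

lemma tauGet_eq (w : List ℕ) {i p : ℕ} (hp : p < w.length) (hr : stdRankN w p = i) :
    tauGet w i = p := by
  unfold tauGet
  apply headD_eq_of_all
  · intro hnil
    have : p ∈ (List.range w.length).filter (fun p => decide (stdRankN w p = i)) :=
      List.mem_filter.2 ⟨List.mem_range.2 hp, by simp [hr]⟩
    rw [hnil] at this; simp at this
  · intro x hx
    have hx1 := List.mem_range.1 (List.mem_of_mem_filter hx)
    have hx2 : stdRankN w x = i := by simpa using List.of_mem_filter hx
    exact stdRankN_injOn w hx1 hp (hx2.trans hr.symm)

lemma tauGet_lt (w : List ℕ) {i : ℕ} (hi : i < w.length) : tauGet w i < w.length := by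
  obtain ⟨p, hp, hpe⟩ := stdRankN_surj w hi
  rw [tauGet_eq w hp hpe]; exact hp

lemma stdRankN_tauGet (w : List ℕ) {i : ℕ} (hi : i < w.length) :
    stdRankN w (tauGet w i) = i := by
  obtain ⟨p, hp, hpe⟩ := stdRankN_surj w hi
  rw [tauGet_eq w hp hpe]; exact hpe

lemma tauGet_stdRankN (w : List ℕ) {p : ℕ} (hp : p < w.length) :
    tauGet w (stdRankN w p) = p := tauGet_eq w hp rfl

lemma tauGet_inj (w : List ℕ) {i j : ℕ} (hi : i < w.length) (hj : j < w.length)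
    (h : tauGet w i = tauGet w j) : i = j := by
  rw [← stdRankN_tauGet w hi, ← stdRankN_tauGet w hj, h]

lemma Kord_tauGet_of_lt (w : List ℕ) {i j : ℕ} (hij : i < j) (hj : j < w.length) :
    Kord w (tauGet w i) (tauGet w j) := by
  have hi := hij.trans hj
  have hne : tauGet w i ≠ tauGet w j := fun h => absurd (tauGet_inj w hi hj h) (Nat.ne_of_lt hij)
  rcases Kord_trichot w hne with hk | hk
  · exact hk
  · exfalso
    have := stdRankN_lt_of_Kord w (tauGet_lt w hj) (tauGet_lt w hi) hk
    rw [stdRankN_tauGet w hi, stdRankN_tauGet w hj] at this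
    omega

lemma posOf_succ_identity (w : List ℕ) (i : ℕ) :
    posOf w (i + 1) + w.getD (tauGet w i) 0 =
      posOf w i + w.getD (tauGet w (i + 1)) 0 +
        (if tauGet w i < tauGet w (i + 1) then 1 else 0) := by
  unfold posOf
  rw [List.range_succ, List.filter_append]
  by_cases h : tauGet w i < tauGet w (i + 1) <;> simp [h] <;> omega

lemma posOf_succ_lt (w : List ℕ) {i : ℕ} (hi : i + 1 < w.length) :
    posOf w i < posOf w (i + 1) := by
  have hk : Kord w (tauGet w i) (tauGet w (i + 1)) := Kord_tauGet_of_lt w (by omega) hi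
  have hid := posOf_succ_identity w i
  unfold Kord at hk
  by_cases h : tauGet w i < tauGet w (i + 1)
  · rw [if_pos h] at hid; omega
  · rw [if_neg h] at hid; omega

lemma posOf_strictMono (w : List ℕ) {i j : ℕ} (hij : i < j) (hj : j < w.length) :
    posOf w i < posOf w j := by
  induction j with
  | zero => omega
  | succ m ih =>
    rcases Nat.lt_or_ge i m with h | h
    · exact (ih h (by omega)).trans (posOf_succ_lt w hj)
    · have : i = m := by omega
      subst this
      exact posOf_succ_lt w hj

lemma getD_pos (w : List ℕ) (hpos : ∀ x ∈ w, 0 < x) {p : ℕ} (hp : p < w.length) :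
    0 < w.getD p 0 := by
  rw [List.getD_eq_getElem w 0 hp]
  exact hpos _ (List.getElem_mem hp)

lemma posOf_pos (w : List ℕ) (hpos : ∀ x ∈ w, 0 < x) {i : ℕ} (hi : i < w.length) :
    0 < posOf w i := by
  unfold posOf
  have := getD_pos w hpos (tauGet_lt w hi)
  omega

lemma getD_tau_mono (w : List ℕ) {i j : ℕ} (hij : i < j) (hj : j < w.length) :
    w.getD (tauGet w i) 0 ≤ w.getD (tauGet w j) 0 := by
  have := Kord_tauGet_of_lt w hij hj
  unfold Kord at this; omega

lemma posOf_inj (w : List ℕ) {i j : ℕ} (hi : i < w.length) (hj : j < w.length)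
    (h : posOf w i = posOf w j) : i = j := by
  rcases Nat.lt_trichotomy i j with h1 | h1 | h1
  · exact absurd h (Nat.ne_of_lt (posOf_strictMono w h1 hj))
  · exact h1
  · exact absurd h.symm (Nat.ne_of_lt (posOf_strictMono w h1 hi))

lemma fMap_of_posOf (w : List ℕ) {i t : ℕ} (hi : i < w.length) (ht : posOf w i = t + 1) :
    fMap w t = tauGet w i + 1 := by
  unfold fMap
  rw [find?_range_unique hi (by simp [ht]) ?_]
  intro j hj hqj
  exact posOf_inj w hj hi (by simpa [ht] using hqj)

lemma fMap_at (w : List ℕ) (hpos : ∀ x ∈ w, 0 < x) {i : ℕ} (hi : i < w.length) :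
    fMap w (posOf w i - 1) = tauGet w i + 1 := by
  have := posOf_pos w hpos hi
  exact fMap_of_posOf w hi (by omega)

lemma fMap_eq_zero (w : List ℕ) {t : ℕ} (h : ∀ i < w.length, posOf w i ≠ t + 1) :
    fMap w t = 0 := by
  unfold fMap
  rw [List.find?_eq_none.2 ?_]
  intro x hx
  simpa using h x (List.mem_range.1 hx)

lemma fMap_ne_zero (w : List ℕ) {t : ℕ} (h : fMap w t ≠ 0) :
    ∃ i < w.length, posOf w i = t + 1 ∧ fMap w t = tauGet w i + 1 := by
  unfold fMap at h
  cases hfind : (List.range w.length).find? (fun i => posOf w i = t + 1) with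
  | none => rw [hfind] at h; simp at h
  | some i =>
    refine ⟨i, List.mem_range.1 (List.mem_of_find?_eq_some hfind), ?_, ?_⟩
    · simpa using List.find?_some hfind
    · unfold fMap; rw [hfind]

lemma fMap_zero_of_ge (w : List ℕ) (hn : 0 < w.length) {t : ℕ}
    (ht : posOf w (w.length - 1) ≤ t) : fMap w t = 0 := by
  apply fMap_eq_zero
  intro i hi
  have : posOf w i ≤ posOf w (w.length - 1) := by
    rcases Nat.lt_or_ge i (w.length - 1) with h | h
    · exact Nat.le_of_lt (posOf_strictMono w h (by omega))
    · have : i = w.length - 1 := by omega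
      rw [this]
  omega

lemma sInf_fMap (w : List ℕ) (hpos : ∀ x ∈ w, 0 < x) (hn : 0 < w.length) :
    sInf {N | ∀ t, N ≤ t → fMap w t = 0} = posOf w (w.length - 1) := by
  set P := posOf w (w.length - 1) with hP
  have hPmem : P ∈ {N | ∀ t, N ≤ t → fMap w t = 0} := fun t ht => fMap_zero_of_ge w hn ht
  have hPpos : 0 < P := posOf_pos w hpos (by omega)
  have hval : fMap w (P - 1) = tauGet w (w.length - 1) + 1 := fMap_at w hpos (by omega)
  refine le_antisymm (Nat.sInf_le hPmem) ?_
  by_contra hlt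
  push_neg at hlt
  have hmem := Nat.sInf_mem (⟨P, hPmem⟩ : Set.Nonempty {N | ∀ t, N ≤ t → fMap w t = 0})
  have := hmem (P - 1) (by omega)
  omega

lemma suppList_fMap (w : List ℕ) (hpos : ∀ x ∈ w, 0 < x) (hn : 0 < w.length) :
    suppList (fMap w) = (List.range w.length).map (fun i => posOf w i - 1) := by
  unfold suppList
  rw [sInf_fMap w hpos hn]
  haveI : IsAntisymm ℕ (· < ·) := ⟨fun a b h1 h2 => absurd h1 (by omega)⟩
  have sorted2 : List.Pairwise (· < ·) ((List.range w.length).map (fun i => posOf w i - 1)) := by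
    refine List.pairwise_iff_getElem.2 ?_
    intro i j hi hj hij
    simp only [List.getElem_map, List.getElem_range] at *
    simp only [List.length_map, List.length_range] at hi hj
    have h1 := posOf_strictMono w hij hj
    have h2 := posOf_pos w hpos (hij.trans hj)
    omega
  have sorted1 : List.Pairwise (· < ·)
      ((List.range (posOf w (w.length - 1) + 1)).filter (fun t => decide (fMap w t ≠ 0))) :=
    List.Pairwise.sublist List.filter_sublist List.pairwise_lt_range
  refine List.Perm.eq_of_pairwise' sorted1 sorted2 ?_
  refine (List.perm_ext_iff_of_nodup sorted1.nodup sorted2.nodup).2 ?_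
  intro t
  simp only [List.mem_filter, List.mem_range, List.mem_map, decide_eq_true_eq]
  constructor
  · rintro ⟨ht, hne⟩
    obtain ⟨i, hi, hpi, _⟩ := fMap_ne_zero w hne
    exact ⟨i, hi, by omega⟩
  · rintro ⟨i, hi, rfl⟩
    have hpi := posOf_pos w hpos hi
    have hle : posOf w i ≤ posOf w (w.length - 1) := by
      rcases Nat.lt_or_ge i (w.length - 1) with h | h
      · exact Nat.le_of_lt (posOf_strictMono w h (by omega))
      · have : i = w.length - 1 := by omega
        rw [this]
    refine ⟨by omega, ?_⟩
    rw [fMap_at w hpos hi]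
    simp

lemma suppList_fMap_nil : suppList (fMap []) = [] := by
  have hz : ∀ t, fMap [] t = 0 := fun t => fMap_eq_zero [] (by simp)
  unfold suppList
  have : sInf {N | ∀ t, N ≤ t → fMap [] t = 0} = 0 := by
    refine le_antisymm (Nat.sInf_le fun t _ => hz t) (Nat.zero_le _)
  rw [this]
  apply List.filter_eq_nil_iff.2
  intro t _
  simp [hz t]

lemma suppList_fMap_length (w : List ℕ) (hpos : ∀ x ∈ w, 0 < x) :
    (suppList (fMap w)).length = w.length := by
  rcases Nat.eq_zero_or_pos w.length with h | h
  · rw [List.length_eq_zero_iff.1 h]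
    simp [suppList_fMap_nil]
  · rw [suppList_fMap w hpos h]
    simp

lemma suppList_fMap_getD (w : List ℕ) (hpos : ∀ x ∈ w, 0 < x) {i : ℕ} (hi : i < w.length) :
    (suppList (fMap w)).getD i 0 = posOf w i - 1 := by
  rw [suppList_fMap w hpos (by omega)]
  rw [List.getD_eq_getElem _ 0 (by simpa using hi)]
  simp

lemma posOf_zero (w : List ℕ) : posOf w 0 = w.getD (tauGet w 0) 0 := by simp [posOf]

lemma gVals_fMap (w : List ℕ) (hpos : ∀ x ∈ w, 0 < x) :
    ∀ i, i < w.length → gVals (fMap w) i = w.getD (tauGet w i) 0 := by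
  intro i
  induction i with
  | zero =>
    intro hi
    simp only [gVals]
    rw [suppList_fMap_getD w hpos hi]
    have := posOf_pos w hpos hi
    rw [posOf_zero w] at *
    omega
  | succ m ih =>
    intro hi
    have hm : m < w.length := by omega
    simp only [gVals]
    rw [suppList_fMap_getD w hpos hi, suppList_fMap_getD w hpos hm,
      fMap_at w hpos hi, fMap_at w hpos hm, ih hm]
    have hid := posOf_succ_identity w m
    have hK : Kord w (tauGet w m) (tauGet w (m + 1)) := Kord_tauGet_of_lt w (by omega) hi
    have hp1 := posOf_pos w hpos hm
    have hp2 := posOf_strictMono w (Nat.lt_succ_self m) hi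
    unfold Kord at hK
    by_cases h : tauGet w m < tauGet w (m + 1)
    · rw [if_pos h] at hid
      rw [if_pos (by omega : tauGet w m + 1 < tauGet w (m + 1) + 1)]
      omega
    · rw [if_neg h] at hid
      rw [if_neg (by omega : ¬(tauGet w m + 1 < tauGet w (m + 1) + 1))]
      omega

lemma gWord_fMap (w : List ℕ) (hpos : ∀ x ∈ w, 0 < x) : gWord (fMap w) = w := by
  have hlen : (gWord (fMap w)).length = w.length := by
    simp [gWord, suppList_fMap_length w hpos]
  apply List.ext_getElem hlen
  intro p hp1 hp2
  have hfind : (List.range (suppList (fMap w)).length).find?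
      (fun i => fMap w ((suppList (fMap w)).getD i 0) = p + 1) = some (stdRankN w p) := by
    rw [suppList_fMap_length w hpos]
    apply find?_range_unique (stdRankN_lt w hp2)
    · rw [suppList_fMap_getD w hpos (stdRankN_lt w hp2), fMap_at w hpos (stdRankN_lt w hp2),
        tauGet_stdRankN w hp2]
      simp
    · intro j hj hqj
      rw [suppList_fMap_getD w hpos hj, fMap_at w hpos hj] at hqj
      simp only [decide_eq_true_eq] at hqj
      have htj : tauGet w j = p := by omega
      rw [← htj, stdRankN_tauGet w hj]
  simp only [gWord, List.getElem_map, List.getElem_range]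
  rw [hfind]
  simp only
  rw [gVals_fMap w hpos _ (stdRankN_lt w hp2), tauGet_stdRankN w hp2,
    List.getD_eq_getElem w 0 hp2]

lemma InE_fMap (w : List ℕ) (hpos : ∀ x ∈ w, 0 < x) : InE (fMap w) := by
  rcases Nat.eq_zero_or_pos w.length with h | h
  · refine ⟨0, fun t _ => fMap_eq_zero w (by omega), ?_⟩
    simp
  · refine ⟨posOf w (w.length - 1) + 1, fun t ht => fMap_zero_of_ge w h (by omega), ?_⟩
    have hsupp : (List.range (posOf w (w.length - 1) + 1)).filter (fun t => decide (fMap w t ≠ 0))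
        = (List.range w.length).map (fun i => posOf w i - 1) := by
      rw [← suppList_fMap w hpos h]
      unfold suppList
      rw [sInf_fMap w hpos h]
    rw [hsupp]
    have hmapeq : ((List.range w.length).map (fun i => posOf w i - 1)).map (fMap w)
        = (List.range w.length).map (fun i => tauGet w i + 1) := by
      rw [List.map_map]
      apply List.map_congr_left
      intro i hi
      simp only [Function.comp]
      exact fMap_at w hpos (List.mem_range.1 hi)
    rw [hmapeq]
    simp only [List.length_map, List.length_range]
    rw [List.range'_eq_map_range]
    have hperm := perm_map_range (n := w.length) (σ := tauGet w)
      (fun i hi => tauGet_lt w hi) (fun i hi j hj hij => tauGet_inj w hi hj hij)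
    have := hperm.map (fun x => 1 + x)
    rw [List.map_map] at this
    have heq : ((fun x => 1 + x) ∘ tauGet w) = (fun i => tauGet w i + 1) := by
      funext x; simp [Function.comp, Nat.add_comm]
    rw [heq] at this
    exact this

lemma filter_range_stable (a : ℕ → ℕ) {m d : ℕ} (h : ∀ t, m ≤ t → a t = 0) :
    (List.range (m + d)).filter (fun t => decide (a t ≠ 0)) =
      (List.range m).filter (fun t => decide (a t ≠ 0)) := by
  rw [List.range_add, List.filter_append]
  have h2 : ((List.range d).map (fun x => m + x)).filter (fun t => decide (a t ≠ 0)) = [] := by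
    apply List.filter_eq_nil_iff.2
    intro t ht
    obtain ⟨x, _, rfl⟩ := List.mem_map.1 ht
    simp [h (m + x) (by omega)]
  rw [h2, List.append_nil]

lemma azero_of_sInf_le (a : ℕ → ℕ) (ha : InE a) {t : ℕ}
    (ht : sInf {N | ∀ t, N ≤ t → a t = 0} ≤ t) : a t = 0 := by
  obtain ⟨N, hN, _⟩ := ha
  exact Nat.sInf_mem (⟨N, hN⟩ : Set.Nonempty {N | ∀ t, N ≤ t → a t = 0}) t ht

lemma suppList_eq_filter (a : ℕ → ℕ) (ha : InE a) {m : ℕ}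
    (hm : ∀ t, m ≤ t → a t = 0) :
    suppList a = (List.range m).filter (fun t => decide (a t ≠ 0)) := by
  have hs : ∀ t, sInf {N | ∀ t, N ≤ t → a t = 0} ≤ t → a t = 0 := fun t ht =>
    azero_of_sInf_le a ha ht
  set I := sInf {N | ∀ t, N ≤ t → a t = 0} with hI
  have h1 : suppList a = (List.range I).filter (fun t => decide (a t ≠ 0)) := by
    unfold suppList
    rw [← hI]
    exact filter_range_stable a (d := 1) hs
  have hIm : I ≤ m := Nat.sInf_le hm
  obtain ⟨d, rfl⟩ := Nat.exists_eq_add_of_le hIm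
  rw [h1, filter_range_stable a hs]

lemma mem_suppList (a : ℕ → ℕ) (ha : InE a) {t : ℕ} : t ∈ suppList a ↔ a t ≠ 0 := by
  constructor
  · intro h
    simpa using List.of_mem_filter h
  · intro h
    apply List.mem_filter.2 ⟨List.mem_range.2 ?_, by simpa using h⟩
    by_contra hlt
    exact h (azero_of_sInf_le a ha (by omega))

lemma suppList_sorted (a : ℕ → ℕ) : List.Pairwise (· < ·) (suppList a) :=
  List.Pairwise.sublist List.filter_sublist List.pairwise_lt_range

lemma suppList_perm (a : ℕ → ℕ) (ha : InE a) :
    ((suppList a).map a).Perm (List.range' 1 (suppList a).length) := by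
  obtain ⟨N, hN, hperm⟩ := id ha
  rw [suppList_eq_filter a ha hN]
  exact hperm

lemma suppList_strictMono (a : ℕ → ℕ) {i i' : ℕ} (h : i < i') (h' : i' < (suppList a).length) :
    (suppList a).getD i 0 < (suppList a).getD i' 0 := by
  rw [List.getD_eq_getElem _ 0 (by omega), List.getD_eq_getElem _ 0 h']
  exact List.pairwise_iff_getElem.1 (suppList_sorted a) i i' (by omega) h' h

lemma suppList_a_bounds (a : ℕ → ℕ) (ha : InE a) {i : ℕ} (hi : i < (suppList a).length) :
    1 ≤ a ((suppList a).getD i 0) ∧ a ((suppList a).getD i 0) ≤ (suppList a).length := by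
  have hmem : a ((suppList a).getD i 0) ∈ (suppList a).map a := by
    rw [List.getD_eq_getElem _ 0 hi]
    exact List.mem_map_of_mem (f := a) (List.getElem_mem hi)
  have := (suppList_perm a ha).mem_iff.1 hmem
  rw [List.mem_range'_1] at this
  omega

lemma suppList_a_inj (a : ℕ → ℕ) (ha : InE a) {i i' : ℕ} (hi : i < (suppList a).length)
    (hi' : i' < (suppList a).length)
    (h : a ((suppList a).getD i 0) = a ((suppList a).getD i' 0)) : i = i' := by
  have hnd : ((suppList a).map a).Nodup :=
    ((suppList_perm a ha).nodup_iff).2 (List.nodup_range' (s := 1))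
  rw [List.getD_eq_getElem _ 0 hi, List.getD_eq_getElem _ 0 hi'] at h
  have h1 : ((suppList a).map a)[i]'(by simpa using hi) =
      ((suppList a).map a)[i']'(by simpa using hi') := by
    simpa using h
  exact (List.Nodup.getElem_inj_iff hnd).1 h1

/-- `σ i`: the 0-based value of the associated permutation at index `i`. -/
noncomputable def sigE (a : ℕ → ℕ) (i : ℕ) : ℕ := a ((suppList a).getD i 0) - 1

lemma a_j_eq (a : ℕ → ℕ) (ha : InE a) {i : ℕ} (hi : i < (suppList a).length) :
    a ((suppList a).getD i 0) = sigE a i + 1 := by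
  have := suppList_a_bounds a ha hi
  unfold sigE
  omega

lemma sigE_lt (a : ℕ → ℕ) (ha : InE a) {i : ℕ} (hi : i < (suppList a).length) :
    sigE a i < (suppList a).length := by
  have := suppList_a_bounds a ha hi
  unfold sigE
  omega

lemma sigE_inj (a : ℕ → ℕ) (ha : InE a) {i i' : ℕ} (hi : i < (suppList a).length)
    (hi' : i' < (suppList a).length) (h : sigE a i = sigE a i') : i = i' := by
  apply suppList_a_inj a ha hi hi'
  rw [a_j_eq a ha hi, a_j_eq a ha hi', h]

lemma gVals_rec (a : ℕ → ℕ) (ha : InE a) {i : ℕ} (hi : i + 1 < (suppList a).length) :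
    gVals a (i + 1) + (if sigE a i < sigE a (i + 1) then 1 else 0) =
      gVals a i + ((suppList a).getD (i + 1) 0 - (suppList a).getD i 0) := by
  have hj : (suppList a).getD i 0 < (suppList a).getD (i + 1) 0 :=
    suppList_strictMono a (by omega) hi
  simp only [gVals]
  rw [a_j_eq a ha (by omega), a_j_eq a ha hi]
  by_cases h : sigE a i < sigE a (i + 1)
  · rw [if_pos h, if_pos (by omega)]
    omega
  · rw [if_neg h, if_neg (by omega)]
    omega

lemma gVals_pos (a : ℕ → ℕ) (ha : InE a) : ∀ i, i < (suppList a).length → 1 ≤ gVals a i := by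
  intro i
  induction i with
  | zero => intro _; simp [gVals]
  | succ m ih =>
    intro hi
    have h1 := ih (by omega)
    have h2 := gVals_rec a ha hi
    have hj : (suppList a).getD m 0 < (suppList a).getD (m + 1) 0 :=
      suppList_strictMono a (by omega) hi
    by_cases h : sigE a m < sigE a (m + 1)
    · rw [if_pos h] at h2; omega
    · rw [if_neg h] at h2; omega

lemma gVals_key_mono (a : ℕ → ℕ) (ha : InE a) :
    ∀ i', i' < (suppList a).length → ∀ i, i < i' →
      gVals a i < gVals a i' ∨ (gVals a i = gVals a i' ∧ sigE a i < sigE a i') := by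
  intro i'
  induction i' with
  | zero => intro _ i hi; omega
  | succ m ih =>
    intro hm i hi
    have hstep : gVals a m < gVals a (m + 1) ∨
        (gVals a m = gVals a (m + 1) ∧ sigE a m < sigE a (m + 1)) := by
      have h2 := gVals_rec a ha hm
      have hj : (suppList a).getD m 0 < (suppList a).getD (m + 1) 0 :=
        suppList_strictMono a (by omega) hm
      by_cases h : sigE a m < sigE a (m + 1)
      · rw [if_pos h] at h2
        rcases Nat.lt_or_ge (gVals a m) (gVals a (m + 1)) with hc | hc
        · exact Or.inl hc
        · exact Or.inr ⟨by omega, h⟩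
      · rw [if_neg h] at h2
        exact Or.inl (by omega)
    rcases Nat.lt_or_ge i m with him | him
    · rcases ih (by omega) i him with h1 | h1 <;> rcases hstep with h2 | h2
      · exact Or.inl (by omega)
      · exact Or.inl (by omega)
      · exact Or.inl (by omega)
      · exact Or.inr ⟨by omega, by omega⟩
    · have : i = m := by omega
      subst this
      exact hstep

lemma gWord_length (a : ℕ → ℕ) : (gWord a).length = (suppList a).length := by
  simp [gWord]

lemma gWord_find? (a : ℕ → ℕ) (ha : InE a) {i : ℕ} (hi : i < (suppList a).length) :
    (List.range (suppList a).length).find?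
      (fun i' => a ((suppList a).getD i' 0) = sigE a i + 1) = some i := by
  apply find?_range_unique hi
  · simp only [decide_eq_true_eq]
    exact a_j_eq a ha hi
  · intro j hj hqj
    simp only [decide_eq_true_eq] at hqj
    exact suppList_a_inj a ha hj hi (by rw [hqj, a_j_eq a ha hi])

lemma gWord_getD (a : ℕ → ℕ) (ha : InE a) {i : ℕ} (hi : i < (suppList a).length) :
    (gWord a).getD (sigE a i) 0 = gVals a i := by
  have hs := sigE_lt a ha hi
  rw [List.getD_eq_getElem _ 0 (by rw [gWord_length]; exact hs)]
  simp only [gWord, List.getElem_map, List.getElem_range]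
  rw [gWord_find? a ha hi]

lemma sigE_surj (a : ℕ → ℕ) (ha : InE a) {p : ℕ} (hp : p < (suppList a).length) :
    ∃ i < (suppList a).length, sigE a i = p := by
  have hperm := perm_map_range (n := (suppList a).length) (σ := sigE a)
    (fun i hi => sigE_lt a ha hi) (fun i hi j hj hij => sigE_inj a ha hi hj hij)
  have hpm : p ∈ (List.range (suppList a).length).map (sigE a) :=
    hperm.mem_iff.2 (List.mem_range.2 hp)
  obtain ⟨i, hi, hpi⟩ := List.mem_map.1 hpm
  exact ⟨i, List.mem_range.1 hi, hpi⟩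

lemma gWord_pos (a : ℕ → ℕ) (ha : InE a) : ∀ x ∈ gWord a, 0 < x := by
  intro x hx
  obtain ⟨p, hp, hxe⟩ := List.mem_iff_getElem.1 hx
  have hp' : p < (suppList a).length := by
    rw [gWord_length] at hp
    exact hp
  obtain ⟨i, hi, hpi⟩ := sigE_surj a ha hp'
  have : (gWord a).getD p 0 = x := by
    rw [List.getD_eq_getElem _ 0 hp, hxe]
  rw [← hpi] at this
  rw [gWord_getD a ha hi] at this
  have := gVals_pos a ha i hi
  omega

lemma Kord_gWord (a : ℕ → ℕ) (ha : InE a) {i i' : ℕ} (hi' : i' < (suppList a).length)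
    (h : i < i') : Kord (gWord a) (sigE a i) (sigE a i') := by
  have hkey := gVals_key_mono a ha i' hi' i h
  unfold Kord
  rw [gWord_getD a ha (by omega), gWord_getD a ha hi']
  tauto

lemma stdRank_gWord (a : ℕ → ℕ) (ha : InE a) {i : ℕ} (hi : i < (suppList a).length) :
    stdRankN (gWord a) (sigE a i) = i := by
  rw [stdRankN_eq_countP, List.countP_eq_length_filter, gWord_length]
  apply length_filter_eq_of_bij (σ := sigE a) (fun j hj => sigE_lt a ha hj)
    (fun p hp q hq hpq => sigE_inj a ha hp hq hpq) (Nat.le_of_lt hi)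
  intro jj hjj
  simp only [decide_eq_true_eq]
  constructor
  · intro hK
    rcases Nat.lt_trichotomy jj i with hc | hc | hc
    · exact hc
    · exact absurd hK (by rw [hc]; exact fun h => Kord_irrefl _ h)
    · exact absurd hK (fun h => Kord_asymm _ (Kord_gWord a ha hjj hc) h)
  · intro hc
    exact Kord_gWord a ha hi hc

lemma tau_gWord (a : ℕ → ℕ) (ha : InE a) {i : ℕ} (hi : i < (suppList a).length) :
    tauGet (gWord a) i = sigE a i :=
  tauGet_eq (gWord a) (by rw [gWord_length]; exact sigE_lt a ha hi) (stdRank_gWord a ha hi)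

lemma posOf_gWord (a : ℕ → ℕ) (ha : InE a) :
    ∀ i, i < (suppList a).length → posOf (gWord a) i = (suppList a).getD i 0 + 1 := by
  intro i
  induction i with
  | zero =>
    intro hi
    rw [posOf_zero, tau_gWord a ha hi, gWord_getD a ha hi]
    simp [gVals]
  | succ m ih =>
    intro hi
    have hm : m < (suppList a).length := by omega
    have hid := posOf_succ_identity (gWord a) m
    rw [tau_gWord a ha hi, tau_gWord a ha hm, gWord_getD a ha hi, gWord_getD a ha hm] at hid
    have hrec := gVals_rec a ha hi
    have hj : (suppList a).getD m 0 < (suppList a).getD (m + 1) 0 :=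
      suppList_strictMono a (by omega) hi
    have hih := ih hm
    by_cases h : sigE a m < sigE a (m + 1)
    · rw [if_pos h] at hid hrec; omega
    · rw [if_neg h] at hid hrec; omega

lemma fMap_gWord (a : ℕ → ℕ) (ha : InE a) : fMap (gWord a) = a := by
  funext t
  by_cases hz : a t = 0
  · rw [hz]
    apply fMap_eq_zero
    intro i hik
    rw [gWord_length] at hik
    rw [posOf_gWord a ha i hik]
    intro hcontra
    have hji : (suppList a).getD i 0 = t := by omega
    have := a_j_eq a ha hik
    rw [hji, hz] at this
    omega
  · have hmem := (mem_suppList a ha).2 hz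
    obtain ⟨idx, hidx, heq⟩ := List.mem_iff_getElem.1 hmem
    have hgetD : (suppList a).getD idx 0 = t := by
      rw [List.getD_eq_getElem _ 0 hidx, heq]
    have hpos : posOf (gWord a) idx = t + 1 := by
      rw [posOf_gWord a ha idx hidx, hgetD]
    rw [fMap_of_posOf (gWord a) (by rw [gWord_length]; exact hidx) hpos,
      tau_gWord a ha hidx]
    rw [← hgetD, a_j_eq a ha hidx]

end Aux

/-- `f` and `g` are mutually inverse bijections between words on positive integers
and `E`; consequently words of length `n` correspond to elements of `E` whose
associated permutation has length `n`. -/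
theorem f_g_mutually_inverse :
    (∀ w : List ℕ, (∀ x ∈ w, 0 < x) → InE (fMap w) ∧ gWord (fMap w) = w) ∧
    (∀ a : ℕ → ℕ, InE a → (∀ x ∈ gWord a, 0 < x) ∧ fMap (gWord a) = a) ∧
    (∀ w : List ℕ, (∀ x ∈ w, 0 < x) → (suppList (fMap w)).length = w.length) := by
  refine ⟨fun w hw => ⟨InE_fMap w hw, gWord_fMap w hw⟩, ?_, fun w hw => suppList_fMap_length w hw⟩
  intro a ha
  exact ⟨gWord_pos a ha, fMap_gWord a ha⟩
end

section
/- For n ≥ 0, the identity (n+2)^n = Σ_{k=0}^{n} (k+1)! · A^∞_{n+1,k+1} holds, where A^∞_{n,k} = Σ over set partitions {Q_1,...,Q_k} of [n] into k blocks of Π_i (|Q_i|−1)^(|Q_i|−1) (with convention 0^0 = 1). -/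
/-- `A^∞_{n,k}`: the sum over set partitions `{Q_1, …, Q_k}` of `[n]` into `k`
blocks of `Π_i (|Q_i| − 1)^(|Q_i| − 1)` (with the convention `0^0 = 1`). -/
def Ainf (n k : ℕ) : ℕ :=
  ∑ S ∈ (Finset.univ : Finset (Finset (Finset (Fin n)))).filter
      (fun S => S.card = k ∧ (∀ Q ∈ S, Q.Nonempty) ∧
        (∀ Q ∈ S, ∀ R ∈ S, Q ≠ R → Q ∩ R = ∅) ∧ S.sup id = Finset.univ),
    ∏ Q ∈ S, (Q.card - 1) ^ (Q.card - 1)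

open Finset

namespace PPBD

def tZ : ℕ → ℤ → ℤ
  | 0, _ => 1
  | n+1, x => x * (x + n + 1)^n

def conv (f g : ℕ → ℤ) (n : ℕ) : ℤ :=
  ∑ k ∈ range (n+1), (n.choose k : ℤ) * f k * g (n-k)

def VZ (n : ℕ) : ℤ := (n+1)^n

lemma conv_congr {f f' g g' : ℕ → ℤ} {n : ℕ} (hf : ∀ k ≤ n, f k = f' k)
    (hg : ∀ k ≤ n, g k = g' k) : conv f g n = conv f' g' n := by
  unfold conv
  refine sum_congr rfl fun k hk => ?_
  rw [mem_range, Nat.lt_succ_iff] at hk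
  rw [hf k hk, hg _ (Nat.sub_le _ _)]

lemma conv_comm (f g : ℕ → ℤ) (n : ℕ) : conv f g n = conv g f n := by
  unfold conv
  rw [← sum_range_reflect]
  refine sum_congr rfl fun k hk => ?_
  rw [mem_range, Nat.lt_succ_iff] at hk
  have h1 : n + 1 - 1 - k = n - k := by omega
  rw [h1]
  have h2 : n - (n - k) = k := by omega
  rw [h2, Nat.choose_symm hk]
  ring

lemma tri (F : ℕ → ℕ → ℤ) (n : ℕ) :
    ∑ k ∈ range (n+1), ∑ j ∈ range (k+1), F k j
      = ∑ j ∈ range (n+1), ∑ i ∈ range (n-j+1), F (j+i) j := by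
  rw [sum_sigma', sum_sigma']
  refine sum_nbij' (fun p => ⟨p.2, p.1 - p.2⟩) (fun p => ⟨p.1 + p.2, p.1⟩) ?_ ?_ ?_ ?_ ?_
  · rintro ⟨k, j⟩ h
    simp only [mem_sigma, mem_range, Nat.lt_succ_iff] at h ⊢
    omega
  · rintro ⟨j, i⟩ h
    simp only [mem_sigma, mem_range, Nat.lt_succ_iff] at h ⊢
    omega
  · rintro ⟨k, j⟩ h
    simp only [mem_sigma, mem_range, Nat.lt_succ_iff] at h
    simp only [Sigma.mk.inj_iff, heq_eq_eq]
    exact ⟨by omega, trivial⟩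
  · rintro ⟨j, i⟩ h
    simp only [mem_sigma, mem_range, Nat.lt_succ_iff] at h
    simp only [Sigma.mk.inj_iff, heq_eq_eq]
    exact ⟨trivial, by omega⟩
  · rintro ⟨k, j⟩ h
    simp only [mem_sigma, mem_range, Nat.lt_succ_iff] at h
    have : j + (k - j) = k := by omega
    simp only [this]

lemma conv_assoc (f g h : ℕ → ℤ) (n : ℕ) :
    conv (conv f g) h n = conv f (conv g h) n := by
  unfold conv
  simp only [mul_sum, sum_mul]
  rw [tri (fun k j => (n.choose k : ℤ) * ((k.choose j : ℤ) * f j * g (k-j)) * h (n-k)) n]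
  refine sum_congr rfl fun j hj => ?_
  rw [mem_range, Nat.lt_succ_iff] at hj
  refine sum_congr rfl fun i hi => ?_
  rw [mem_range, Nat.lt_succ_iff] at hi
  have h1 : n.choose (j+i) * (j+i).choose j = n.choose j * (n-j).choose i := by
    have := Nat.choose_mul (n := n) (k := j+i) (s := j) (by omega)
    rw [this]
    have h2 : j + i - j = i := by omega
    rw [h2]
  have h2 : j + i - j = i := by omega
  have h3 : n - (j + i) = n - j - i := by omega
  rw [h2, h3]
  have h1' : (n.choose (j+i) : ℤ) * ((j+i).choose j : ℤ) = (n.choose j : ℤ) * ((n-j).choose i : ℤ) := by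
    exact_mod_cast congrArg (Nat.cast (R := ℤ)) h1
  linear_combination h1' * (f j * g i * h (n - j - i))

lemma leibniz (f g : ℕ → ℤ) (n : ℕ) :
    conv f g (n+1) = (∑ k ∈ range (n+1), (n.choose k : ℤ) * f (k+1) * g (n-k))
      + (∑ k ∈ range (n+1), (n.choose k : ℤ) * f k * g (n+1-k)) := by
  unfold conv
  rw [sum_range_succ' (fun k => ((n+1).choose k : ℤ) * f k * g (n+1-k)) (n+1)]
  have e1 : ∀ j ∈ range (n+1), ((n+1).choose (j+1) : ℤ) * f (j+1) * g (n+1-(j+1))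
      = (n.choose j : ℤ) * f (j+1) * g (n-j) + (n.choose (j+1) : ℤ) * f (j+1) * g (n-j) := by
    intro j hj
    rw [Nat.choose_succ_succ]
    push_cast [Nat.succ_sub_succ]
    ring
  rw [sum_congr rfl e1, sum_add_distrib]
  have e2 : ∑ k ∈ range (n+1), (n.choose k : ℤ) * f k * g (n+1-k)
      = (∑ j ∈ range n, (n.choose (j+1) : ℤ) * f (j+1) * g (n+1-(j+1)))
        + ((n.choose 0 : ℤ) * f 0 * g (n+1-0)) := by
    rw [sum_range_succ' (fun k => (n.choose k : ℤ) * f k * g (n+1-k)) n]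
  rw [e2]
  have e3 : ∑ j ∈ range (n+1), (n.choose (j+1) : ℤ) * f (j+1) * g (n-j)
      = ∑ j ∈ range n, (n.choose (j+1) : ℤ) * f (j+1) * g (n+1-(j+1)) := by
    rw [sum_range_succ]
    simp only [Nat.choose_succ_self, Nat.cast_zero, zero_mul, add_zero]
    refine sum_congr rfl fun j hj => ?_
    congr 2
    omega
  rw [e3]
  simp only [Nat.choose_zero_right, Nat.cast_one]
  ring

end PPBD

namespace PPBD2
open PPBD

lemma tZ_succ (n : ℕ) (x : ℤ) : tZ (n+1) x = x * (x + n + 1)^n := rfl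

lemma VZ_eq (k : ℕ) : VZ k = (k+1) * tZ k 1 := by
  cases k with
  | zero => simp [VZ, tZ]
  | succ k =>
    show ((k+1+1 : ℕ) : ℤ)^(k+1) = ((k:ℤ)+1+1) * (1 * (1 + k + 1)^k)
    push_cast
    ring

lemma conv_smul_left (a : ℤ) (f f' g : ℕ → ℤ) (n : ℕ) (h : ∀ k ≤ n, f' k = a * f k) :
    conv f' g n = a * conv f g n := by
  unfold conv
  rw [mul_sum]
  refine sum_congr rfl fun k hk => ?_
  rw [mem_range, Nat.lt_succ_iff] at hk
  rw [h k hk]; ring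

lemma conv_smul_right (a : ℤ) (f g g' : ℕ → ℤ) (n : ℕ) (h : ∀ k ≤ n, g' k = a * g k) :
    conv f g' n = a * conv f g n := by
  rw [conv_comm, conv_smul_left a g g' f n h, conv_comm]

lemma conv_rot (f g h : ℕ → ℤ) (n : ℕ) : conv f (conv g h) n = conv g (conv f h) n := by
  rw [← conv_assoc, ← conv_assoc]
  exact conv_congr (fun k _ => conv_comm f g k) (fun k _ => rfl)

theorem main (n : ℕ) :
    (∀ x y : ℤ, tZ n (x+y) = conv (fun k => tZ k x) (fun k => tZ k y) n) ∧
    (∀ x : ℤ, conv VZ (fun k => tZ k x) n = (x+n+1)^n) := by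
  induction n using Nat.strong_induction_on with
  | _ n IH =>
  match n with
  | 0 =>
    constructor
    · intro x y; simp [tZ, conv]
    · intro x; simp [tZ, conv, VZ]
  | (n+1) =>
    have IHc : ∀ m ≤ n, ∀ x y : ℤ, tZ m (x+y) = conv (fun k => tZ k x) (fun k => tZ k y) m :=
      fun m hm => (IH m (by omega)).1
    have IHq : ∀ m ≤ n, ∀ x : ℤ, conv VZ (fun k => tZ k x) m = (x+m+1)^m :=
      fun m hm => (IH m (by omega)).2
    have C1 : ∀ x y : ℤ, tZ (n+1) (x+y) = conv (fun k => tZ k x) (fun k => tZ k y) (n+1) := by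
      intro x y
      rw [leibniz]
      have hA : ∑ k ∈ range (n+1), (n.choose k : ℤ) * tZ (k+1) x * tZ (n-k) y
          = x * conv VZ (conv (fun k => tZ k x) (fun k => tZ k y)) n := by
        have r0 : ∑ k ∈ range (n+1), (n.choose k : ℤ) * tZ (k+1) x * tZ (n-k) y
            = conv (fun k => tZ (k+1) x) (fun k => tZ k y) n := rfl
        rw [r0, conv_smul_left x (conv VZ (fun k => tZ k x)) _ _ n
          (fun k hk => by rw [tZ_succ, ← IHq k hk x]), ← conv_assoc]
      have hB : ∑ k ∈ range (n+1), (n.choose k : ℤ) * tZ k x * tZ (n+1-k) y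
          = y * conv VZ (conv (fun k => tZ k x) (fun k => tZ k y)) n := by
        have r0 : ∑ k ∈ range (n+1), (n.choose k : ℤ) * tZ k x * tZ (n+1-k) y
            = conv (fun k => tZ k x) (fun k => tZ (k+1) y) n := by
          refine sum_congr rfl fun k hk => ?_
          rw [mem_range, Nat.lt_succ_iff] at hk
          have h1 : n + 1 - k = (n - k) + 1 := by omega
          rw [h1]
        rw [r0, conv_smul_right y _ (conv VZ (fun k => tZ k y)) _ n
          (fun k hk => by rw [tZ_succ, ← IHq k hk y])]
        congr 1
        exact conv_rot _ _ _ (n := n)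
      rw [hA, hB, tZ_succ]
      have hL : ((x+y) + n + 1 : ℤ)^n = conv VZ (conv (fun k => tZ k x) (fun k => tZ k y)) n := by
        rw [← IHq n le_rfl (x+y)]
        exact conv_congr (fun k _ => rfl) (fun k hk => IHc k hk x y)
      rw [hL]
      ring
    refine ⟨C1, ?_⟩
    intro x
    have e1 : conv VZ (fun k => tZ k x) (n+1)
        = conv (fun k => ((k:ℤ)+1) * tZ k 1) (fun k => tZ k x) (n+1) :=
      conv_congr (fun k _ => by rw [VZ_eq k]) (fun k _ => rfl)
    have ext : ∑ k ∈ range (n+2), (n.choose k : ℤ) * tZ k 1 * tZ (n+1-k) x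
        = ∑ k ∈ range (n+1), (n.choose k : ℤ) * tZ k 1 * tZ (n+1-k) x := by
      rw [sum_range_succ]
      simp [Nat.choose_succ_self]
    have e2 : conv (fun k => ((k:ℤ)+1) * tZ k 1) (fun k => tZ k x) (n+1)
        = ((n:ℤ)+2) * conv (fun k => tZ k 1) (fun k => tZ k x) (n+1)
          - ((n:ℤ)+1) * ∑ k ∈ range (n+1), (n.choose k : ℤ) * tZ k 1 * tZ (n+1-k) x := by
      rw [← ext]
      unfold conv
      rw [mul_sum, mul_sum, ← sum_sub_distrib]
      refine sum_congr rfl fun k hk => ?_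
      rw [mem_range, Nat.lt_succ_iff] at hk
      have hc : ((n+1:ℕ).choose k : ℤ) * ((k:ℤ)+1)
          = ((n:ℤ)+2) * ((n+1:ℕ).choose k : ℤ) - ((n:ℤ)+1) * (n.choose k : ℤ) := by
        have h0 := Nat.choose_mul_succ_eq n k
        have h0' : ((n.choose k * (n+1) : ℕ) : ℤ) = (((n+1).choose k * (n+1-k) : ℕ) : ℤ) := by
          exact_mod_cast congrArg (Nat.cast (R := ℤ)) h0
        have hcast : ((n+1-k : ℕ) : ℤ) = (n:ℤ) + 1 - k := by omega
        push_cast at h0'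
        rw [hcast] at h0'
        linarith
      linear_combination (tZ k 1 * tZ (n+1-k) x) * hc
    have e3 : conv (fun k => tZ k 1) (fun k => tZ k x) (n+1) = (1+x) * ((1+x) + n + 1)^n := by
      rw [← C1 1 x, tZ_succ]
    have e4 : ∑ k ∈ range (n+1), (n.choose k : ℤ) * tZ k 1 * tZ (n+1-k) x
        = x * ((1+x) + n + 1)^n := by
      have r0 : ∑ k ∈ range (n+1), (n.choose k : ℤ) * tZ k 1 * tZ (n+1-k) x
          = conv (fun k => tZ k 1) (fun k => tZ (k+1) x) n := by
        refine sum_congr rfl fun k hk => ?_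
        rw [mem_range, Nat.lt_succ_iff] at hk
        have h1 : n + 1 - k = (n - k) + 1 := by omega
        rw [h1]
      rw [r0, conv_smul_right x _ (conv VZ (fun k => tZ k x)) _ n
        (fun k hk => by rw [tZ_succ, ← IHq k hk x])]
      congr 1
      rw [conv_rot]
      rw [conv_congr (f' := VZ) (g' := fun k => tZ k (1+x)) (fun k _ => rfl)
        (fun k hk => (IHc k hk 1 x).symm)]
      exact IHq n le_rfl (1+x)
    rw [e1, e2, e3, e4]
    push_cast
    ring

end PPBD2

namespace PPBD

def cNat (r : ℕ) : ℕ := (r+1)^(r-1)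

lemma tZ_one (r : ℕ) : tZ r 1 = (cNat r : ℤ) := by
  cases r with
  | zero => simp [tZ, cNat]
  | succ j =>
    have hc : cNat (j+1) = (j+2)^j := by simp [cNat]
    rw [hc]
    show (1 : ℤ) * (1 + j + 1)^j = (((j+2)^j : ℕ) : ℤ)
    push_cast
    ring_nf

lemma tZ_neg_one (j : ℕ) : tZ (j+1) (-1) = -((j:ℤ))^j := by
  show (-1 : ℤ) * (-1 + j + 1)^j = -((j:ℤ))^j
  ring_nf

lemma keyN (m : ℕ) :
    (m+2)^m = ∑ j ∈ Finset.range (m+1), (m+1).choose (j+1) * j^j * cNat (m-j) := by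
  have h := (PPBD2.main (m+1)).1 (-1) 1
  have h0 : tZ (m+1) ((-1)+1) = 0 := by
    show ((-1 : ℤ)+1) * _ = 0
    norm_num
  rw [h0] at h
  unfold conv at h
  rw [sum_range_succ' (fun k => (((m+1).choose k : ℕ) : ℤ) * tZ k (-1) * tZ (m+1-k) 1) (m+1)] at h
  have hterm : ∀ j ∈ range (m+1), (((m+1).choose (j+1) : ℕ) : ℤ) * tZ (j+1) (-1) * tZ (m+1-(j+1)) 1
      = -((((m+1).choose (j+1) * j^j * cNat (m-j) : ℕ)) : ℤ) := by
    intro j hj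
    rw [mem_range] at hj
    have h1 : m + 1 - (j+1) = m - j := by omega
    rw [h1, tZ_neg_one, tZ_one]
    push_cast
    ring
  rw [sum_congr rfl hterm] at h
  have h2 : tZ (m+1-0) 1 = ((cNat (m+1) : ℕ) : ℤ) := tZ_one _
  rw [h2] at h
  simp only [Nat.choose_zero_right, Nat.cast_one, tZ] at h
  have h3 : ((cNat (m+1) : ℕ) : ℤ) = ∑ j ∈ range (m+1), (((m+1).choose (j+1) * j^j * cNat (m-j) : ℕ) : ℤ) := by
    rw [sum_neg_distrib] at h
    linarith [h]
  have h4 : (cNat (m+1) : ℤ) = ((∑ j ∈ range (m+1), (m+1).choose (j+1) * j^j * cNat (m-j) : ℕ) : ℤ) := by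
    rw [h3]; push_cast; rfl
  have h5 : cNat (m+1) = ∑ j ∈ range (m+1), (m+1).choose (j+1) * j^j * cNat (m-j) := by
    exact_mod_cast h4
  calc (m+2)^m = cNat (m+1) := by simp [cNat]
  _ = _ := h5

end PPBD

namespace PPBD

variable {α : Type*} [Fintype α] [DecidableEq α]

def wgt (Q : Finset α) : ℕ := (Q.card - 1)^(Q.card - 1)

def PartSet (U : Finset α) (k : ℕ) : Finset (Finset (Finset α)) :=
  (Finset.univ : Finset (Finset (Finset α))).filter
    (fun S => S.card = k ∧ (∀ Q ∈ S, Q.Nonempty) ∧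
      (∀ Q ∈ S, ∀ R ∈ S, Q ≠ R → Q ∩ R = ∅) ∧ S.sup id = U)

def Asub (U : Finset α) (k : ℕ) : ℕ := ∑ S ∈ PartSet U k, ∏ Q ∈ S, wgt Q

lemma Ainf_eq (n k : ℕ) : Ainf n k = Asub (Finset.univ : Finset (Fin n)) k := rfl

lemma mem_PartSet {U : Finset α} {k : ℕ} {S : Finset (Finset α)} :
    S ∈ PartSet U k ↔ S.card = k ∧ (∀ Q ∈ S, Q.Nonempty) ∧
      (∀ Q ∈ S, ∀ R ∈ S, Q ≠ R → Q ∩ R = ∅) ∧ S.sup id = U := by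
  simp [PartSet]

lemma block_subset {U : Finset α} {k : ℕ} {S : Finset (Finset α)} (hS : S ∈ PartSet U k)
    {Q : Finset α} (hQ : Q ∈ S) : Q ⊆ U := by
  have h := (mem_PartSet.1 hS).2.2.2
  have : id Q ≤ S.sup id := le_sup hQ
  rw [h] at this
  exact this

lemma card_le_card_sup {S : Finset (Finset α)} (hne : ∀ Q ∈ S, Q.Nonempty)
    (hdis : ∀ Q ∈ S, ∀ R ∈ S, Q ≠ R → Q ∩ R = ∅) : S.card ≤ (S.sup id).card := by
  induction S using Finset.induction_on with
  | empty => simp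
  | @insert Q S hQS IH =>
    have hQne : Q.Nonempty := hne Q (mem_insert_self _ _)
    have hd : Disjoint Q (S.sup id) := by
      rw [disjoint_left]
      intro x hxQ hxS
      rw [mem_sup] at hxS
      obtain ⟨R, hR, hxR⟩ := hxS
      have hne' : Q ≠ R := fun h => hQS (h ▸ hR)
      have := hdis Q (mem_insert_self _ _) R (mem_insert_of_mem hR) hne'
      have : x ∈ Q ∩ R := mem_inter.2 ⟨hxQ, hxR⟩
      simp_all
    rw [sup_insert, card_insert_of_notMem hQS]
    have hid : id Q = Q := rfl
    rw [hid, sup_eq_union, card_union_of_disjoint hd]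
    have h1 : 1 ≤ Q.card := card_pos.2 hQne
    have h2 : S.card ≤ (S.sup id).card :=
      IH (fun R hR => hne R (mem_insert_of_mem hR))
        (fun R hR R' hR' h => hdis R (mem_insert_of_mem hR) R' (mem_insert_of_mem hR') h)
    omega

lemma Asub_eq_zero {U : Finset α} {k : ℕ} (h : U.card < k) : Asub U k = 0 := by
  unfold Asub
  have : PartSet U k = ∅ := by
    rw [eq_empty_iff_forall_notMem]
    intro S hS
    obtain ⟨hc, hne, hdis, hsup⟩ := mem_PartSet.1 hS
    have := card_le_card_sup hne hdis
    rw [hsup, hc] at this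
    omega
  rw [this, sum_empty]

lemma Asub_zero {U : Finset α} (h : U.Nonempty) : Asub U 0 = 0 := by
  unfold Asub
  have : PartSet U 0 = ∅ := by
    rw [eq_empty_iff_forall_notMem]
    intro S hS
    obtain ⟨hc, hne, hdis, hsup⟩ := mem_PartSet.1 hS
    rw [card_eq_zero] at hc
    subst hc
    simp only [sup_empty] at hsup
    rw [← hsup] at h
    simp at h
  rw [this, sum_empty]

lemma Asub_empty : Asub (∅ : Finset α) 0 = 1 := by
  unfold Asub
  have : PartSet (∅ : Finset α) 0 = {∅} := by
    ext S
    rw [mem_PartSet, mem_singleton]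
    constructor
    · rintro ⟨hc, -, -, -⟩
      exact card_eq_zero.1 hc
    · rintro rfl
      refine ⟨card_empty, by simp, by simp, by simp⟩
  rw [this, sum_singleton, prod_empty]

lemma key_rec (U : Finset α) (k : ℕ) :
    (k+1) * Asub U (k+1)
      = ∑ Q ∈ U.powerset.filter (fun Q => Q.Nonempty), wgt Q * Asub (U \ Q) k := by
  unfold Asub
  rw [mul_sum]
  have lhs1 : ∑ S ∈ PartSet U (k+1), (k+1) * ∏ Q ∈ S, wgt Q
      = ∑ S ∈ PartSet U (k+1), ∑ Q ∈ S, ∏ R ∈ S, wgt R := by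
    refine sum_congr rfl fun S hS => ?_
    rw [sum_const, (mem_PartSet.1 hS).1, smul_eq_mul]
  rw [lhs1]
  have rhs1 : ∑ Q ∈ U.powerset.filter (fun Q => Q.Nonempty),
        wgt Q * ∑ S ∈ PartSet (U \ Q) k, ∏ R ∈ S, wgt R
      = ∑ Q ∈ U.powerset.filter (fun Q => Q.Nonempty),
        ∑ S ∈ PartSet (U \ Q) k, wgt Q * ∏ R ∈ S, wgt R := by
    refine sum_congr rfl fun Q hQ => ?_
    rw [mul_sum]
  rw [rhs1]
  rw [sum_sigma', sum_sigma']
  refine sum_nbij' (fun p => ⟨p.2, p.1.erase p.2⟩) (fun p => ⟨insert p.1 p.2, p.1⟩)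
    ?_ ?_ ?_ ?_ ?_
  · -- forward membership
    rintro ⟨S, Q⟩ hp
    rw [mem_sigma] at hp
    obtain ⟨hS, hQ⟩ := hp
    obtain ⟨hc, hne, hdis, hsup⟩ := mem_PartSet.1 hS
    rw [mem_sigma]
    constructor
    · rw [mem_filter, mem_powerset]
      exact ⟨block_subset hS hQ, hne Q hQ⟩
    · rw [mem_PartSet]
      refine ⟨?_, ?_, ?_, ?_⟩
      · rw [card_erase_of_mem hQ, hc]
        omega
      · exact fun R hR => hne R (mem_of_mem_erase hR)
      · exact fun R hR R' hR' h =>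
          hdis R (mem_of_mem_erase hR) R' (mem_of_mem_erase hR') h
      · apply subset_antisymm
        · intro x hx
          rw [mem_sup] at hx
          obtain ⟨R, hR, hxR⟩ := hx
          have hRS : R ∈ S := mem_of_mem_erase hR
          have hRQ : R ≠ Q := ne_of_mem_erase hR
          have hd : R ∩ Q = ∅ := hdis R hRS Q hQ hRQ
          rw [mem_sdiff]
          refine ⟨block_subset hS hRS hxR, fun hxQ => ?_⟩
          have : x ∈ R ∩ Q := mem_inter.2 ⟨hxR, hxQ⟩
          simp_all
        · intro x hx
          rw [mem_sdiff] at hx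
          obtain ⟨hxU, hxQ⟩ := hx
          rw [← hsup, mem_sup] at hxU
          obtain ⟨R, hR, hxR⟩ := hxU
          have hRQ : R ≠ Q := fun h => hxQ (h ▸ hxR)
          have : id R ≤ (S.erase Q).sup id := le_sup (mem_erase.2 ⟨hRQ, hR⟩)
          exact this hxR
  · -- backward membership
    rintro ⟨Q, S⟩ hp
    rw [mem_sigma] at hp
    obtain ⟨hQ, hS⟩ := hp
    rw [mem_filter, mem_powerset] at hQ
    obtain ⟨hQU, hQne⟩ := hQ
    obtain ⟨hc, hne, hdis, hsup⟩ := mem_PartSet.1 hS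
    have hQnotin : Q ∉ S := by
      intro hmem
      have hsub : Q ⊆ U \ Q := by
        have : id Q ≤ S.sup id := le_sup hmem
        rw [hsup] at this
        exact this
      obtain ⟨x, hx⟩ := hQne
      have := hsub hx
      rw [mem_sdiff] at this
      exact this.2 hx
    rw [mem_sigma]
    constructor
    · rw [mem_PartSet]
      refine ⟨?_, ?_, ?_, ?_⟩
      · rw [card_insert_of_notMem hQnotin, hc]
      · intro R hR
        rcases mem_insert.1 hR with rfl | hR'
        · exact hQne
        · exact hne R hR'
      · intro R hR R' hR' hne'
        have hblock : ∀ T ∈ S, Q ∩ T = ∅ := by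
          intro T hT
          have hsub : T ⊆ U \ Q := by
            have : id T ≤ S.sup id := le_sup hT
            rw [hsup] at this
            exact this
          rw [eq_empty_iff_forall_notMem]
          intro x hx
          rw [mem_inter] at hx
          have := hsub hx.2
          rw [mem_sdiff] at this
          exact this.2 hx.1
        rcases mem_insert.1 hR with rfl | hR1 <;> rcases mem_insert.1 hR' with rfl | hR2
        · exact absurd rfl hne'
        · exact hblock R' hR2
        · rw [inter_comm]; exact hblock R hR1
        · exact hdis R hR1 R' hR2 hne'
      · rw [sup_insert, hsup]
        show Q ∪ (U \ Q) = U
        exact union_sdiff_of_subset hQU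
    · exact mem_insert_self _ _
  · -- left inverse
    rintro ⟨S, Q⟩ hp
    rw [mem_sigma] at hp
    simp only [Sigma.mk.inj_iff, heq_eq_eq]
    exact ⟨insert_erase hp.2, trivial⟩
  · -- right inverse
    rintro ⟨Q, S⟩ hp
    rw [mem_sigma] at hp
    obtain ⟨hQ, hS⟩ := hp
    rw [mem_filter, mem_powerset] at hQ
    obtain ⟨hc, hne, hdis, hsup⟩ := mem_PartSet.1 hS
    have hQnotin : Q ∉ S := by
      intro hmem
      have hsub : Q ⊆ U \ Q := by
        have : id Q ≤ S.sup id := le_sup hmem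
        rw [hsup] at this
        exact this
      obtain ⟨x, hx⟩ := hQ.2
      have := hsub hx
      rw [mem_sdiff] at this
      exact this.2 hx
    simp only [Sigma.mk.inj_iff, heq_eq_eq]
    exact ⟨trivial, erase_insert hQnotin⟩
  · -- weights
    rintro ⟨S, Q⟩ hp
    rw [mem_sigma] at hp
    exact (mul_prod_erase S wgt hp.2).symm

end PPBD

namespace PPBD

variable {α : Type*} [Fintype α] [DecidableEq α]

def BSub (U : Finset α) : ℕ := ∑ k ∈ range (U.card + 1), k.factorial * Asub U k

lemma BSub_stable (U : Finset α) {r : ℕ} (h : U.card ≤ r) :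
    ∑ k ∈ range (r + 1), k.factorial * Asub U k = BSub U := by
  unfold BSub
  refine (sum_subset (by rw [range_subset_range]; omega) fun k hk hk' => ?_).symm
  rw [mem_range] at hk hk'
  rw [Asub_eq_zero (by omega), mul_zero]

lemma BSub_eq (U : Finset α) : BSub U = cNat U.card := by
  induction U using Finset.strongInduction with
  | _ U IH =>
  rcases U.eq_empty_or_nonempty with rfl | hU
  · simp [BSub, Asub_empty, cNat]
  · obtain ⟨m, hm⟩ : ∃ m, U.card = m + 1 :=
      Nat.exists_eq_succ_of_ne_zero (Nat.pos_iff_ne_zero.1 (card_pos.2 hU))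
    unfold BSub
    rw [hm]
    rw [sum_range_succ' (fun k => k.factorial * Asub U k) (m+1)]
    have h0 : Nat.factorial 0 * Asub U 0 = 0 := by rw [Asub_zero hU, mul_zero]
    rw [h0, add_zero]
    have step1 : ∀ k, (k+1).factorial * Asub U (k+1)
        = k.factorial * ((k+1) * Asub U (k+1)) := by
      intro k
      rw [Nat.factorial_succ]
      ring
    have step2 : ∑ k ∈ range (m+1), (k+1).factorial * Asub U (k+1)
        = ∑ Q ∈ U.powerset.filter (fun Q => Q.Nonempty), wgt Q * cNat (m + 1 - Q.card) := by
      have e1 : ∑ k ∈ range (m+1), (k+1).factorial * Asub U (k+1)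
          = ∑ k ∈ range (m+1), ∑ Q ∈ U.powerset.filter (fun Q => Q.Nonempty),
              k.factorial * (wgt Q * Asub (U \ Q) k) := by
        refine sum_congr rfl fun k hk => ?_
        rw [step1 k, key_rec U k, mul_sum]
      rw [e1, sum_comm]
      refine sum_congr rfl fun Q hQ => ?_
      rw [mem_filter, mem_powerset] at hQ
      obtain ⟨hQU, hQne⟩ := hQ
      have hcard : (U \ Q).card = m + 1 - Q.card := by
        rw [card_sdiff_of_subset hQU, hm]
      have hle : (U \ Q).card ≤ m := by
        have : 1 ≤ Q.card := card_pos.2 hQne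
        omega
      have e2 : ∑ k ∈ range (m+1), k.factorial * (wgt Q * Asub (U \ Q) k)
          = wgt Q * ∑ k ∈ range (m+1), k.factorial * Asub (U \ Q) k := by
        rw [mul_sum]
        refine sum_congr rfl fun k hk => ?_
        ring
      rw [e2]
      rw [BSub_stable (U \ Q) hle]
      rw [IH (U \ Q) (Finset.sdiff_ssubset hQU hQne)]
      rw [hcard]
    rw [step2]
    -- now group by cardinality
    have split : ∑ Q ∈ U.powerset, wgt Q * cNat (m + 1 - Q.card)
        = (∑ Q ∈ U.powerset.filter (fun Q => Q.Nonempty), wgt Q * cNat (m + 1 - Q.card))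
          + cNat (m+1) := by
      rw [← sum_filter_add_sum_filter_not U.powerset (fun Q => Q.Nonempty)]
      congr 1
      have : U.powerset.filter (fun Q => ¬ Q.Nonempty) = {∅} := by
        ext Q
        simp only [mem_filter, mem_powerset, mem_singleton, not_nonempty_iff_eq_empty]
        exact ⟨fun h => h.2, fun h => ⟨h ▸ empty_subset U, h⟩⟩
      rw [this, sum_singleton]
      simp [wgt]
    have pow_sum : ∑ Q ∈ U.powerset, wgt Q * cNat (m + 1 - Q.card)
        = ∑ s ∈ range (m+1+1), (m+1).choose s * ((s-1)^(s-1) * cNat (m+1-s)) := by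
      have h := sum_powerset_apply_card (fun s => (s-1)^(s-1) * cNat (m+1-s)) (x := U)
      rw [hm] at h
      simp only [smul_eq_mul] at h
      rw [← h]
      refine sum_congr rfl fun Q _ => ?_
      rw [wgt]
    have expand : ∑ s ∈ range (m+1+1), (m+1).choose s * ((s-1)^(s-1) * cNat (m+1-s))
        = (∑ j ∈ range (m+1), (m+1).choose (j+1) * (j^j * cNat (m-j))) + cNat (m+1) := by
      rw [sum_range_succ' (fun s => (m+1).choose s * ((s-1)^(s-1) * cNat (m+1-s))) (m+1)]
      congr 1
      · refine sum_congr rfl fun j _ => ?_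
        have h1 : j + 1 - 1 = j := by omega
        have h2 : m + 1 - (j+1) = m - j := by omega
        rw [h1, h2]
      · simp
    have keyuse : (∑ j ∈ range (m+1), (m+1).choose (j+1) * (j^j * cNat (m-j))) = (m+2)^m := by
      rw [keyN m]
      refine sum_congr rfl fun j _ => ?_
      ring
    have final : ∑ Q ∈ U.powerset.filter (fun Q => Q.Nonempty), wgt Q * cNat (m + 1 - Q.card)
        = (m+2)^m := by
      have := split
      rw [pow_sum, expand, keyuse] at this
      omega
    rw [final]
    unfold cNat
    congr 1 <;> omega

end PPBD

/-- For `n ≥ 0`, `(n+2)^n = Σ_{k=0}^{n} (k+1)! · A^∞_{n+1,k+1}`. -/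
theorem parking_prime_block_decomposition (n : ℕ) :
    (n + 2) ^ n = ∑ k ∈ Finset.range (n + 1), (k + 1).factorial * Ainf (n + 1) (k + 1) := by
  classical
  have hB := PPBD.BSub_eq (Finset.univ : Finset (Fin (n+1)))
  have hcard : (Finset.univ : Finset (Fin (n+1))).card = n + 1 := by simp
  rw [hcard] at hB
  unfold PPBD.BSub at hB
  rw [hcard] at hB
  rw [sum_range_succ' (fun k => k.factorial * PPBD.Asub (Finset.univ : Finset (Fin (n+1))) k)
    (n+1)] at hB
  have h0 : Nat.factorial 0 * PPBD.Asub (Finset.univ : Finset (Fin (n+1))) 0 = 0 := by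
    rw [PPBD.Asub_zero Finset.univ_nonempty, mul_zero]
  rw [h0, add_zero] at hB
  have hc : PPBD.cNat (n+1) = (n+2)^n := by
    unfold PPBD.cNat
    congr 1 <;> omega
  rw [hc] at hB
  rw [← hB]
  refine sum_congr rfl fun k _ => ?_
  rw [PPBD.Ainf_eq]
end
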